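/- arXiv:2605.22482 — 6 statements merged into one kernel-verified Lean document; each statement's English description precedes it below -/
import Mathlib

section
/- Let X be a topological vector space whose continuous dual X* separates points of X, let K ⊆ X be compact, and let Ψ : ℝ → ℝ be a continuous squashing function. Then the set Σ_X(Ψ) of all finite sums x ↦ Σ_{j=1}^N ω_j Ψ(f_j(x) + b_j), with N ∈ ℕ, ω_j, b_j ∈ ℝ, f_j ∈ X*, is dense in C(K) with respect to the uniform norm. -/
open MeasureTheory Filter Topology

section Aux
open Finset

set_option maxHeartbeats 2000000 in
lemma onedim (Ψ : ℝ → ℝ) (hΨ0 : ∀ t, Ψ t ∈ Set.Icc (0:ℝ) 1)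
    (hΨmono : Monotone Ψ) (hΨtop : Tendsto Ψ atTop (nhds 1))
    (hΨbot : Tendsto Ψ atBot (nhds 0))
    (h : ℝ → ℝ) (hh : Continuous h) (M : ℝ) (hM : 0 < M)
    (ε : ℝ) (hε : 0 < ε) :
    ∃ (N : ℕ) (ω a c : Fin N → ℝ), ∀ t ∈ Set.Icc (-M) M,
      |h t - ∑ j, ω j * Ψ (a j * t + c j)| ≤ ε := by
  set ε' := ε / 4 with hε'def
  have hε' : 0 < ε' := by positivity
  -- uniform continuity on the compact interval
  have hUC : UniformContinuousOn h (Set.Icc (-M) M) :=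
    (isCompact_Icc).uniformContinuousOn_of_continuous hh.continuousOn
  obtain ⟨δ, hδ, hδ'⟩ := Metric.uniformContinuousOn_iff.mp hUC ε' hε'
  -- the grid
  set n : ℕ := ⌈2 * M / δ⌉₊ + 1 with hndef
  have hn : (0:ℕ) < n := Nat.succ_pos _
  have hnR : (0:ℝ) < n := by exact_mod_cast hn
  set mesh : ℝ := 2 * M / n with hmeshdef
  have hmesh : 0 < mesh := by positivity
  have hmeshδ : mesh < δ := by
    rw [hmeshdef, div_lt_iff₀ hnR]
    have h1 : 2 * M / δ < (n : ℝ) := by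
      calc 2 * M / δ ≤ (⌈2 * M / δ⌉₊ : ℝ) := Nat.le_ceil _
        _ < (n : ℝ) := by exact_mod_cast Nat.lt_succ_self _
    calc 2 * M = (2 * M / δ) * δ := by field_simp
      _ < (n:ℝ) * δ := by exact mul_lt_mul_of_pos_right h1 hδ
      _ = δ * n := mul_comm _ _
  have hmeshsum : (n : ℝ) * mesh = 2 * M := by
    rw [hmeshdef]; field_simp
  -- the small tolerance
  set η : ℝ := min (ε' / (|h (-M)| + 1)) (1 / n) with hηdef
  have hη : 0 < η := by
    apply lt_min
    · positivity
    · positivity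
  -- choose B with |Ψ B - 1| < η
  obtain ⟨B, hB⟩ : ∃ B : ℝ, |Ψ B - 1| < η := by
    obtain ⟨B, hB⟩ := (Metric.tendsto_nhds.mp hΨtop η hη).exists
    exact ⟨B, by rwa [Real.dist_eq] at hB⟩
  -- choose the slope L
  set r : ℝ := mesh / 4 with hrdef
  have hr : 0 < r := by positivity
  obtain ⟨S₁, hS₁⟩ : ∃ S₁ : ℝ, ∀ x ≥ S₁, 1 - η < Ψ x := by
    obtain ⟨S₁, hS₁⟩ := eventually_atTop.mp (Metric.tendsto_nhds.mp hΨtop η hη)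
    refine ⟨S₁, fun x hx => ?_⟩
    have := hS₁ x hx
    rw [Real.dist_eq, abs_lt] at this
    linarith [this.1]
  obtain ⟨S₂, hS₂⟩ : ∃ S₂ : ℝ, ∀ x ≤ S₂, Ψ x < η := by
    obtain ⟨S₂, hS₂⟩ := eventually_atBot.mp (Metric.tendsto_nhds.mp hΨbot η hη)
    refine ⟨S₂, fun x hx => ?_⟩
    have := hS₂ x hx
    rw [Real.dist_eq, abs_lt] at this
    linarith [this.2]
  set L : ℝ := max (max S₁ (-S₂)) 0 / r with hLdef
  have hL0 : 0 ≤ L := div_nonneg (le_max_right _ _) hr.le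
  have hLr : S₁ ≤ L * r := by
    rw [hLdef, div_mul_cancel₀ _ hr.ne']
    exact le_trans (le_max_left _ _) (le_max_left _ _)
  have hLr' : -(L * r) ≤ S₂ := by
    rw [hLdef, div_mul_cancel₀ _ hr.ne']
    have : -S₂ ≤ max (max S₁ (-S₂)) 0 :=
      le_trans (le_max_right _ _) (le_max_left _ _)
    linarith
  have hL1 : ∀ x : ℝ, r ≤ x → 1 - η < Ψ (L * x) :=
    fun x hx => hS₁ _ (le_trans hLr (mul_le_mul_of_nonneg_left hx hL0))
  have hL2 : ∀ x : ℝ, x ≤ -r → Ψ (L * x) < η := by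
    intro x hx
    apply hS₂
    have : L * x ≤ L * (-r) := mul_le_mul_of_nonneg_left hx hL0
    linarith
  -- grid points
  set tp : ℕ → ℝ := fun i => -M + i * mesh with htpdef
  set sp : ℕ → ℝ := fun i => -M + ((i : ℝ) + 1/2) * mesh with hspdef
  set cf : ℕ → ℝ := fun i => h (tp (i+1)) - h (tp i) with hcfdef
  have htp0 : tp 0 = -M := by simp [htpdef]
  have htpIcc : ∀ i : ℕ, i ≤ n → tp i ∈ Set.Icc (-M) M := by
    intro i hi
    constructor
    · simp only [htpdef]; nlinarith [Nat.cast_nonneg (α := ℝ) i]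
    · simp only [htpdef]
      have : (i:ℝ) * mesh ≤ (n:ℝ) * mesh := by
        apply mul_le_mul_of_nonneg_right _ hmesh.le
        exact_mod_cast hi
      rw [hmeshsum] at this; linarith
  have hcf : ∀ i : ℕ, i < n → |cf i| ≤ ε' := by
    intro i hi
    have h1 := htpIcc i hi.le
    have h2 := htpIcc (i+1) hi
    have hd : dist (tp (i+1)) (tp i) < δ := by
      rw [Real.dist_eq]
      have : tp (i+1) - tp i = mesh := by
        simp only [htpdef]; push_cast; ring
      rw [this, abs_of_pos hmesh]; exact hmeshδ
    have := hδ' _ h2 _ h1 hd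
    rw [Real.dist_eq] at this
    exact this.le
  -- the network
  refine ⟨n + 1, Fin.cons (h (-M)) (fun i : Fin n => cf i),
    Fin.cons 0 (fun _ => L), Fin.cons B (fun i : Fin n => -(L * sp i)), ?_⟩
  intro t ht
  rw [Fin.sum_univ_succ]
  simp only [Fin.cons_zero, Fin.cons_succ]
  have hsum : ∑ i : Fin n, cf i * Ψ (L * t + -(L * sp i)) =
      ∑ i ∈ range n, cf i * Ψ (L * (t - sp i)) := by
    rw [Fin.sum_univ_eq_sum_range (fun i => cf i * Ψ (L * t + -(L * sp i))) n]
    refine Finset.sum_congr rfl (fun i _ => ?_)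
    have : L * t + -(L * sp i) = L * (t - sp i) := by ring
    rw [this]
  rw [hsum]
  -- set u and k
  set u : ℝ := (t + M) / mesh with hudef
  have hu0 : 0 ≤ u := div_nonneg (by linarith [ht.1]) hmesh.le
  have hun : u ≤ n := by
    rw [hudef, div_le_iff₀ hmesh]
    have := ht.2
    nlinarith [hmeshsum]
  have hut : t = -M + u * mesh := by
    rw [hudef]; field_simp; ring
  set k : ℕ := ⌊u + 1/2⌋₊ with hkdef
  have hk_le_r : (k : ℝ) ≤ u + 1/2 := Nat.floor_le (by linarith)
  have hk_gt : u + 1/2 < k + 1 := Nat.lt_floor_add_one _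
  have hkn : k ≤ n := by
    have h1 : (k:ℝ) < (n:ℝ) + 1 := by linarith
    have : k < n + 1 := by exact_mod_cast h1
    omega
  -- filter equality
  have hfilter : (range n).filter (fun i => sp i ≤ t) = range k := by
    ext i
    simp only [mem_filter, mem_range]
    constructor
    · rintro ⟨hin, hsp⟩
      have hsp' : ((i:ℝ) + 1/2) * mesh ≤ u * mesh := by
        simp only [hspdef] at hsp
        rw [hut] at hsp; linarith
      have hiu : (i:ℝ) + 1/2 ≤ u := le_of_mul_le_mul_right hsp' hmesh
      have : i + 1 ≤ k := Nat.le_floor (by push_cast; linarith)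
      omega
    · intro hik
      have hin : i < n := lt_of_lt_of_le hik hkn
      refine ⟨hin, ?_⟩
      have h1 : ((i:ℕ)+1 : ℝ) ≤ (k:ℝ) := by exact_mod_cast hik
      have hiu : (i:ℝ) + 1/2 ≤ u := by push_cast at h1; linarith [hk_le_r]
      simp only [hspdef]
      rw [hut]
      nlinarith
  -- telescoping
  have htel : ∑ i ∈ range k, cf i = h (tp k) - h (-M) := by
    rw [hcfdef, ← htp0]
    exact Finset.sum_range_sub (fun i => h (tp i)) k
  -- step approximation
  have hstep : |h t - h (tp k)| ≤ ε' := by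
    have htpk : tp k ∈ Set.Icc (-M) M := htpIcc k hkn
    have hd : dist t (tp k) < δ := by
      rw [Real.dist_eq]
      have heq : t - tp k = (u - k) * mesh := by
        rw [hut]; simp only [htpdef]; ring
      rw [heq, abs_mul, abs_of_pos hmesh]
      have h1 : |u - (k:ℝ)| ≤ 1/2 := by
        rw [abs_le]; constructor <;> linarith
      calc |u - (k:ℝ)| * mesh ≤ (1/2) * mesh :=
            mul_le_mul_of_nonneg_right h1 hmesh.le
        _ < δ := by linarith
    have := hδ' t ht _ htpk hd
    rw [Real.dist_eq] at this
    exact this.le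
  -- error of the indicator approximation
  set e : ℕ → ℝ := fun i => |(if sp i ≤ t then (1:ℝ) else 0) - Ψ (L * (t - sp i))|
    with hedef
  have he1 : ∀ i, e i ≤ 1 := by
    intro i
    simp only [hedef]
    have h1 := (hΨ0 (L * (t - sp i))).1
    have h2 := (hΨ0 (L * (t - sp i))).2
    split <;> (rw [abs_le]; constructor <;> linarith)
  have heη : ∀ i, ¬ (|t - sp i| < r) → e i ≤ η := by
    intro i hi
    rw [not_lt, le_abs] at hi
    simp only [hedef]
    rcases hi with hi | hi
    · have hΨ1 := hL1 _ hi
      have h2 := (hΨ0 (L * (t - sp i))).2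
      rw [if_pos (by linarith), abs_le]
      constructor <;> linarith
    · have hΨ2 := hL2 (t - sp i) (by linarith)
      have h1 := (hΨ0 (L * (t - sp i))).1
      rw [if_neg (by push_neg; linarith), abs_le]
      constructor <;> linarith
  -- at most one bad index
  have hbad : ((range n).filter (fun i => |t - sp i| < r)).card ≤ 1 := by
    rw [Finset.card_le_one]
    intro i hi j hj
    simp only [mem_filter] at hi hj
    have h1 := abs_lt.mp hi.2
    have h2 := abs_lt.mp hj.2
    have hij : |(i:ℝ) - j| < 1/2 := by
      have hd : sp i - sp j = ((i:ℝ) - j) * mesh := by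
        simp only [hspdef]; ring
      have habs : |sp i - sp j| < 2 * r := by
        rw [abs_lt]; constructor <;> linarith
      rw [hd, abs_mul, abs_of_pos hmesh] at habs
      have hrm : 2 * r = mesh / 2 := by rw [hrdef]; ring
      rw [hrm] at habs
      by_contra hc
      push_neg at hc
      nlinarith
    have h3 := abs_lt.mp hij
    have h4 : (i:ℝ) < (j:ℝ) + 1 := by linarith
    have h5 : (j:ℝ) < (i:ℝ) + 1 := by linarith
    have h4' : i < j + 1 := by exact_mod_cast h4
    have h5' : j < i + 1 := by exact_mod_cast h5
    omega
  -- total indicator error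
  have hsum_e : ∑ i ∈ range n, e i ≤ (n:ℝ) * η + 1 := by
    rw [← Finset.sum_filter_add_sum_filter_not (range n) (fun i => |t - sp i| < r) e]
    have h1 : ∑ i ∈ (range n).filter (fun i => |t - sp i| < r), e i ≤ 1 := by
      calc ∑ i ∈ (range n).filter (fun i => |t - sp i| < r), e i
          ≤ ∑ _i ∈ (range n).filter (fun i => |t - sp i| < r), (1:ℝ) :=
            Finset.sum_le_sum (fun i _ => he1 i)
        _ = ((range n).filter (fun i => |t - sp i| < r)).card := by
            rw [Finset.sum_const]; simp
        _ ≤ 1 := by exact_mod_cast hbad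
    have h2 : ∑ i ∈ (range n).filter (fun i => ¬ |t - sp i| < r), e i ≤ (n:ℝ) * η := by
      calc ∑ i ∈ (range n).filter (fun i => ¬ |t - sp i| < r), e i
          ≤ ∑ i ∈ (range n).filter (fun i => ¬ |t - sp i| < r), η :=
            Finset.sum_le_sum (fun i hi => heη i (Finset.mem_filter.mp hi).2)
        _ = ((range n).filter (fun i => ¬ |t - sp i| < r)).card * η := by
            rw [Finset.sum_const]; simp [nsmul_eq_mul]
        _ ≤ (n:ℝ) * η := by
            apply mul_le_mul_of_nonneg_right _ hη.le
            have := Finset.card_filter_le (range n) (fun i => ¬ |t - sp i| < r)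
            rw [Finset.card_range] at this
            exact_mod_cast this
    linarith
  have hηn : (n:ℝ) * η ≤ 1 := by
    have h1 : η ≤ 1 / n := min_le_right _ _
    rw [le_div_iff₀ hnR] at h1
    linarith [h1, mul_comm η (n:ℝ)]
  have hηh : |h (-M)| * η ≤ ε' := by
    have h1 : η ≤ ε' / (|h (-M)| + 1) := min_le_left _ _
    have hD : (0:ℝ) < |h (-M)| + 1 := by positivity
    have h2 : |h (-M)| * η ≤ |h (-M)| * (ε' / (|h (-M)| + 1)) :=
      mul_le_mul_of_nonneg_left h1 (abs_nonneg _)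
    have h3 : |h (-M)| * (ε' / (|h (-M)| + 1)) ≤ ε' := by
      rw [mul_div_assoc', div_le_iff₀ hD]
      nlinarith [abs_nonneg (h (-M))]
    linarith
  -- key algebraic identity
  have hind : ∑ i ∈ range n, cf i * (if sp i ≤ t then (1:ℝ) else 0)
      = ∑ i ∈ range k, cf i := by
    rw [← hfilter, Finset.sum_filter]
    refine Finset.sum_congr rfl (fun i _ => ?_)
    rw [mul_ite, mul_one, mul_zero]
  have key : h t - (h (-M) * Ψ (0 * t + B) + ∑ i ∈ range n, cf i * Ψ (L * (t - sp i)))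
      = (h t - h (tp k)) + h (-M) * (1 - Ψ (0 * t + B))
        + ∑ i ∈ range n,
            cf i * ((if sp i ≤ t then (1:ℝ) else 0) - Ψ (L * (t - sp i))) := by
    have hsplit : ∑ i ∈ range n,
        cf i * ((if sp i ≤ t then (1:ℝ) else 0) - Ψ (L * (t - sp i)))
        = (∑ i ∈ range n, cf i * (if sp i ≤ t then (1:ℝ) else 0))
          - ∑ i ∈ range n, cf i * Ψ (L * (t - sp i)) := by
      rw [← Finset.sum_sub_distrib]
      exact Finset.sum_congr rfl (fun i _ => by ring)
    rw [hsplit, hind, htel]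
    ring
  -- final estimate
  have hterm2 : |h (-M) * (1 - Ψ (0 * t + B))| ≤ ε' := by
    rw [abs_mul]
    have : |1 - Ψ (0 * t + B)| < η := by
      rw [zero_mul, zero_add, abs_sub_comm]
      exact hB
    calc |h (-M)| * |1 - Ψ (0 * t + B)| ≤ |h (-M)| * η :=
          mul_le_mul_of_nonneg_left this.le (abs_nonneg _)
      _ ≤ ε' := hηh
  have hterm3 : |∑ i ∈ range n,
      cf i * ((if sp i ≤ t then (1:ℝ) else 0) - Ψ (L * (t - sp i)))| ≤ 2 * ε' := by
    calc |∑ i ∈ range n,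
        cf i * ((if sp i ≤ t then (1:ℝ) else 0) - Ψ (L * (t - sp i)))|
        ≤ ∑ i ∈ range n,
          |cf i * ((if sp i ≤ t then (1:ℝ) else 0) - Ψ (L * (t - sp i)))| :=
          Finset.abs_sum_le_sum_abs _ _
      _ ≤ ∑ i ∈ range n, ε' * e i := by
          refine Finset.sum_le_sum (fun i hi => ?_)
          rw [abs_mul]
          exact mul_le_mul (hcf i (Finset.mem_range.mp hi)) le_rfl (abs_nonneg _) hε'.le
      _ = ε' * ∑ i ∈ range n, e i := by rw [Finset.mul_sum]
      _ ≤ ε' * ((n:ℝ) * η + 1) :=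
          mul_le_mul_of_nonneg_left hsum_e hε'.le
      _ ≤ 2 * ε' := by nlinarith
  calc |h t - (h (-M) * Ψ (0 * t + B) + ∑ i ∈ range n, cf i * Ψ (L * (t - sp i)))|
      = |(h t - h (tp k)) + h (-M) * (1 - Ψ (0 * t + B))
        + ∑ i ∈ range n,
            cf i * ((if sp i ≤ t then (1:ℝ) else 0) - Ψ (L * (t - sp i)))| := by rw [key]
    _ ≤ |(h t - h (tp k)) + h (-M) * (1 - Ψ (0 * t + B))|
        + |∑ i ∈ range n,
            cf i * ((if sp i ≤ t then (1:ℝ) else 0) - Ψ (L * (t - sp i)))| := abs_add_le _ _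
    _ ≤ (|h t - h (tp k)| + |h (-M) * (1 - Ψ (0 * t + B))|)
        + |∑ i ∈ range n,
            cf i * ((if sp i ≤ t then (1:ℝ) else 0) - Ψ (L * (t - sp i)))| := by
          linarith [abs_add_le (h t - h (tp k)) (h (-M) * (1 - Ψ (0 * t + B)))]
    _ ≤ ε' + ε' + 2 * ε' := by linarith [hstep, hterm2, hterm3]
    _ = ε := by rw [hε'def]; ring

end Aux

set_option maxHeartbeats 1000000 in
/-- the neural-network class Σ_X(Ψ) is uniformly dense in C(K) for
compact K ⊆ X when the continuous dual of X separates points and Ψ is a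
continuous squashing function. -/
theorem network_class_dense_in_CK
    {X : Type*} [AddCommGroup X] [Module ℝ X] [TopologicalSpace X]
    [IsTopologicalAddGroup X] [ContinuousSMul ℝ X]
    (hsep : ∀ x y : X, x ≠ y → ∃ f : X →L[ℝ] ℝ, f x ≠ f y)
    (K : Set X) (hK : IsCompact K)
    (Ψ : ℝ → ℝ) (hΨc : Continuous Ψ) (hΨ0 : ∀ t, Ψ t ∈ Set.Icc (0 : ℝ) 1)
    (hΨmono : Monotone Ψ) (hΨtop : Tendsto Ψ atTop (nhds 1))
    (hΨbot : Tendsto Ψ atBot (nhds 0)) :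
    closure {g : C(K, ℝ) | ∃ (N : ℕ) (ω b : Fin N → ℝ) (f : Fin N → (X →L[ℝ] ℝ)),
        ∀ x : K, g x = ∑ j, ω j * Ψ (f j (x : X) + b j)} = Set.univ := by
  haveI : CompactSpace K := isCompact_iff_compactSpace.mp hK
  set S : Set C(K, ℝ) := {g : C(K, ℝ) |
    ∃ (N : ℕ) (ω b : Fin N → ℝ) (f : Fin N → (X →L[ℝ] ℝ)),
      ∀ x : K, g x = ∑ j, ω j * Ψ (f j (x : X) + b j)} with hSdef
  -- S is a submodule
  let S' : Submodule ℝ C(K, ℝ) :=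
  { carrier := S
    zero_mem' := ⟨0, ![], ![], ![], fun x => by simp⟩
    add_mem' := by
      rintro g₁ g₂ ⟨N₁, ω₁, b₁, f₁, h₁⟩ ⟨N₂, ω₂, b₂, f₂, h₂⟩
      refine ⟨N₁ + N₂, Fin.append ω₁ ω₂, Fin.append b₁ b₂, Fin.append f₁ f₂, fun x => ?_⟩
      rw [ContinuousMap.add_apply, h₁ x, h₂ x, Fin.sum_univ_add]
      simp [Fin.append_left, Fin.append_right]
    smul_mem' := by
      rintro c g ⟨N, ω, b, f, hrep⟩
      refine ⟨N, fun j => c * ω j, b, f, fun x => ?_⟩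
      rw [ContinuousMap.smul_apply, hrep x, smul_eq_mul, Finset.mul_sum]
      exact Finset.sum_congr rfl (fun j _ => by ring) }
  -- the cosine continuous maps
  have hcont : ∀ (f : X →L[ℝ] ℝ) (b : ℝ),
      Continuous (fun x : K => Real.cos (f (x : X) + b)) := fun f b =>
    Real.continuous_cos.comp ((f.continuous.comp continuous_subtype_val).add continuous_const)
  set cosmap : (X →L[ℝ] ℝ) → ℝ → C(K, ℝ) :=
    fun f b => ⟨fun x => Real.cos (f (x : X) + b), hcont f b⟩ with hcosdef
  -- each cosine map is in the closure of S
  have hGclos : ∀ (f : X →L[ℝ] ℝ) (b : ℝ), cosmap f b ∈ closure S := by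
    intro f b
    rw [Metric.mem_closure_iff]
    intro ε hε
    -- a bound on f over K
    obtain ⟨C, hC⟩ := hK.exists_bound_of_continuousOn f.continuous.continuousOn
    set M : ℝ := max C 0 + 1 with hMdef
    have hM : 0 < M := by positivity
    have hfK : ∀ x : K, f (x : X) ∈ Set.Icc (-M) M := by
      intro x
      have := hC (x : X) x.2
      rw [Real.norm_eq_abs, abs_le] at this
      have h2 : C ≤ max C 0 := le_max_left _ _
      constructor
      · linarith [this.1]
      · linarith [this.2]
    obtain ⟨N, ω, a, c, hone⟩ := onedim Ψ hΨ0 hΨmono hΨtop hΨbot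
      (fun t => Real.cos (t + b)) (Real.continuous_cos.comp (continuous_id.add continuous_const))
      M hM (ε/2) (by positivity)
    -- the network element
    have hcontg : Continuous (fun x : K => ∑ j, ω j * Ψ ((a j • f) (x : X) + c j)) := by
      apply continuous_finset_sum
      intro j _
      exact continuous_const.mul (hΨc.comp
        (((a j • f).continuous.comp continuous_subtype_val).add continuous_const))
    refine ⟨⟨fun x => ∑ j, ω j * Ψ ((a j • f) (x : X) + c j), hcontg⟩,
      ⟨N, ω, c, fun j => a j • f, fun x => rfl⟩, ?_⟩
    have hdist : dist (cosmap f b) (⟨fun x => ∑ j, ω j * Ψ ((a j • f) (x : X) + c j), hcontg⟩ : C(K,ℝ)) ≤ ε/2 := by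
      rw [ContinuousMap.dist_le (by positivity)]
      intro x
      rw [Real.dist_eq]
      have := hone (f (x : X)) (hfK x)
      simp only [ContinuousMap.coe_mk, hcosdef]
      have harg : ∀ j : Fin N, (a j • f) ((x : K) : X) + c j = a j * f (x : X) + c j := by
        intro j
        simp [ContinuousLinearMap.smul_apply, smul_eq_mul]
      calc |Real.cos (f (x:X) + b) - ∑ j, ω j * Ψ ((a j • f) ((x:K):X) + c j)|
          = |Real.cos (f (x:X) + b) - ∑ j, ω j * Ψ (a j * f (x:X) + c j)| := by
            have hs : (∑ j, ω j * Ψ ((a j • f) ((x:K):X) + c j))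
                = ∑ j, ω j * Ψ (a j * f (x:X) + c j) :=
              Finset.sum_congr rfl (fun j _ => by rw [harg j])
            rw [hs]
        _ ≤ ε/2 := this
    linarith [hdist]
  -- the span of cosine maps
  set G : Set C(K, ℝ) := {g | ∃ f b, g = cosmap f b} with hGdef
  set P : Submodule ℝ C(K, ℝ) := Submodule.span ℝ G with hPdef
  have hone_mem : (1 : C(K, ℝ)) ∈ P := by
    apply Submodule.subset_span
    refine ⟨0, 0, ?_⟩
    ext x
    simp [hcosdef]
  have hmul_mem : ∀ x y : C(K, ℝ), x ∈ P → y ∈ P → x * y ∈ P := by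
    have hPP : P * P ≤ P := by
      rw [hPdef, Submodule.span_mul_span]
      apply Submodule.span_le.mpr
      rintro z hz
      obtain ⟨g₁, hg₁, g₂, hg₂, rfl⟩ := Set.mem_mul.mp hz
      obtain ⟨f₁, b₁, rfl⟩ := hg₁
      obtain ⟨f₂, b₂, rfl⟩ := hg₂
      have key : cosmap f₁ b₁ * cosmap f₂ b₂ =
          (1/2 : ℝ) • cosmap (f₁ - f₂) (b₁ - b₂) + (1/2 : ℝ) • cosmap (f₁ + f₂) (b₁ + b₂) := by
        ext x
        simp only [hcosdef, ContinuousMap.mul_apply, ContinuousMap.add_apply,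
          ContinuousMap.smul_apply, ContinuousMap.coe_mk, smul_eq_mul,
          ContinuousLinearMap.sub_apply, ContinuousLinearMap.add_apply]
        simp only [Real.cos_add, Real.cos_sub, Real.sin_add, Real.sin_sub]
        ring
      rw [key]
      exact Submodule.add_mem _
        (Submodule.smul_mem _ _ (Submodule.subset_span ⟨_, _, rfl⟩))
        (Submodule.smul_mem _ _ (Submodule.subset_span ⟨_, _, rfl⟩))
    intro x y hx hy
    exact hPP (Submodule.mul_mem_mul hx hy)
  set A : Subalgebra ℝ C(K, ℝ) := P.toSubalgebra hone_mem hmul_mem with hAdef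
  -- A separates points
  have hsepA : A.SeparatesPoints := by
    intro x y hxy
    have hxy' : (x : X) ≠ (y : X) := fun hc => hxy (Subtype.ext hc)
    obtain ⟨f, hf⟩ := hsep _ _ hxy'
    set m : ℝ := max |f (x : X)| |f (y : X)| with hmdef
    have hm : 0 ≤ m := le_trans (abs_nonneg _) (le_max_left _ _)
    set cc : ℝ := 1 / (m + 1) with hccdef
    have hcc : 0 < cc := by positivity
    refine ⟨(cosmap (cc • f) (Real.pi / 2) : C(K,ℝ)), ⟨cosmap (cc • f) (Real.pi / 2),
      Submodule.subset_span ⟨_, _, rfl⟩, rfl⟩, ?_⟩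
    simp only [hcosdef, ContinuousMap.coe_mk]
    intro hc
    have hin : ∀ z : K, cc * f (z : X) + Real.pi / 2 ∈ Set.Icc 0 Real.pi → True := fun _ _ => trivial
    have hbound : ∀ u : ℝ, |u| ≤ m → cc * u + Real.pi / 2 ∈ Set.Icc 0 Real.pi := by
      intro u hu
      have h1 : |cc * u| ≤ cc * m := by
        rw [abs_mul, abs_of_pos hcc]
        exact mul_le_mul_of_nonneg_left hu hcc.le
      have h2 : cc * m < 1 := by
        rw [hccdef, div_mul_eq_mul_div, div_lt_one (by positivity)]
        linarith
      have h3 := abs_le.mp h1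
      have hpi := Real.pi_gt_three
      constructor <;> [linarith [h3.1]; linarith [h3.2]]
    have hxI := hbound (f (x : X)) (le_max_left _ _)
    have hyI := hbound (f (y : X)) (le_max_right _ _)
    have heq : cc * f (x : X) + Real.pi / 2 = cc * f (y : X) + Real.pi / 2 := by
      apply Real.injOn_cos hxI hyI
      simpa [ContinuousLinearMap.smul_apply, smul_eq_mul] using hc
    exact hf (mul_left_cancel₀ hcc.ne' (by linarith))
  -- Stone-Weierstrass
  have hSW := ContinuousMap.subalgebra_topologicalClosure_eq_top_of_separatesPoints A hsepA
  -- glue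
  have hPle : (P : Set C(K, ℝ)) ⊆ closure S := by
    have h1 : G ⊆ closure S := by
      rintro g ⟨f, b, rfl⟩
      exact hGclos f b
    have hcoe : (S'.topologicalClosure : Set C(K, ℝ)) = closure S := by
      rw [Submodule.topologicalClosure_coe]
      rfl
    rw [← hcoe] at h1 ⊢
    exact Submodule.span_le.mpr h1
  have hAS : (A : Set C(K, ℝ)) ⊆ closure S := hPle
  apply Set.eq_univ_of_univ_subset
  have h3 : (Set.univ : Set C(K, ℝ)) ⊆ closure (A : Set C(K, ℝ)) := by
    intro g _
    have : g ∈ A.topologicalClosure := by rw [hSW]; trivial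
    exact this
  calc (Set.univ : Set C(K, ℝ)) ⊆ closure (A : Set C(K, ℝ)) := h3
    _ ⊆ closure (closure S) := closure_mono hAS
    _ = closure S := closure_closure
end

section
/- Let X be a real Banach space, K ⊆ X compact, and Ψ : ℝ → ℝ a continuous squashing function. Then the class Σ_X(Ψ) of functions x ↦ Σ_{j=1}^N ω_j Ψ(f_j(x) + b_j), with ω_j, b_j ∈ ℝ and f_j continuous linear functionals on X, is dense in C(K) in the uniform norm. -/
open MeasureTheory Filter Topology Finset

lemma oneD (Ψ : ℝ → ℝ) (hΨ0 : ∀ t, Ψ t ∈ Set.Icc (0:ℝ) 1)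
    (hΨmono : Monotone Ψ) (hΨtop : Tendsto Ψ atTop (nhds 1)) (hΨbot : Tendsto Ψ atBot (nhds 0))
    (φ : ℝ → ℝ) (hφ : Continuous φ) (M ε : ℝ) (hM : 0 ≤ M) (hε : 0 < ε) :
    ∃ (N : ℕ) (ω a b : Fin N → ℝ), ∀ t ∈ Set.Icc (-M) M,
      |φ t - ∑ j, ω j * Ψ (a j * t + b j)| ≤ ε := by
  -- uniform continuity on J
  set J : Set ℝ := Set.Icc (-(M+1)) (M+2) with hJ
  have hJc : IsCompact J := isCompact_Icc
  have hUC := hJc.uniformContinuousOn_of_continuous hφ.continuousOn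
  rw [Metric.uniformContinuousOn_iff] at hUC
  obtain ⟨δ, hδ0, hδ⟩ := hUC (ε/4) (by positivity)
  -- mesh
  set h : ℝ := min (δ/2) 1 with hh
  have hh0 : 0 < h := lt_min (by positivity) one_pos
  have hh1 : h ≤ 1 := min_le_right _ _
  have hhδ : h < δ := lt_of_le_of_lt (min_le_left _ _) (by linarith)
  set N : ℕ := ⌈2*M/h⌉₊ + 1 with hN
  have hNh : 2*M ≤ N * h := by
    have h1 : 2*M/h ≤ (⌈2*M/h⌉₊ : ℝ) := Nat.le_ceil _
    have : 2*M/h * h ≤ (⌈2*M/h⌉₊:ℝ) * h := by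
      exact mul_le_mul_of_nonneg_right h1 hh0.le
    rw [div_mul_cancel₀ _ hh0.ne'] at this
    have : (⌈2*M/h⌉₊:ℝ) * h ≤ N*h := by
      apply mul_le_mul_of_nonneg_right _ hh0.le
      push_cast [hN]; linarith
    linarith [mul_le_mul_of_nonneg_right h1 hh0.le,
      div_mul_cancel₀ (2*M) hh0.ne']
  have hNh2 : (N:ℝ)*h ≤ 2*M + 2 := by
    have h1 : (⌈2*M/h⌉₊:ℝ) < 2*M/h + 1 := Nat.ceil_lt_add_one (by positivity)
    have h2 : (N:ℝ) = (⌈2*M/h⌉₊:ℝ) + 1 := by push_cast [hN]; ring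
    have h3 : (N:ℝ)*h < (2*M/h + 2)*h := by
      rw [h2]; apply mul_lt_mul_of_pos_right _ hh0; linarith
    rw [add_mul, div_mul_cancel₀ _ hh0.ne'] at h3
    nlinarith
  -- grid points
  set T : ℕ → ℝ := fun i => -M + i*h with hT
  have hTJ : ∀ i ≤ N, T i ∈ J := by
    intro i hi
    constructor
    · simp only [hT]; have : (0:ℝ) ≤ i*h := by positivity
      linarith
    · simp only [hT]
      have : (i:ℝ)*h ≤ N*h := by
        apply mul_le_mul_of_nonneg_right _ hh0.le; exact_mod_cast hi
      linarith
  have hΔ : ∀ i < N, |φ (T (i+1)) - φ (T i)| ≤ ε/4 := by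
    intro i hi
    have h1 := hδ (T (i+1)) (hTJ _ hi) (T i) (hTJ i (le_of_lt hi))
    have : dist (T (i+1)) (T i) < δ := by
      rw [Real.dist_eq]
      have : T (i+1) - T i = h := by simp only [hT]; push_cast; ring
      rw [this, abs_of_pos hh0]; exact hhδ
    have := h1 this
    rw [Real.dist_eq] at this; linarith
  -- total variation bound
  set B : ℝ := ∑ i ∈ range N, |φ (T (i+1)) - φ (T i)| with hB
  have hB0 : 0 ≤ B := Finset.sum_nonneg fun i _ => abs_nonneg _
  set c : ℝ := ε/(4*(B+1)) with hc
  have hc0 : 0 < c := by positivity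
  have hBc : (B+1) * c = ε/4 := by
    have hB1 : B + 1 ≠ 0 := by positivity
    rw [hc]; field_simp
  clear_value B c
  -- thresholds
  obtain ⟨s₀, hs₀⟩ := eventually_atTop.mp (hΨtop.eventually (Metric.ball_mem_nhds 1 hc0))
  obtain ⟨s₁, hs₁⟩ := eventually_atBot.mp (hΨbot.eventually (Metric.ball_mem_nhds 0 hc0))
  set lam : ℝ := (max |s₀| |s₁|)/h + 1 with hlam
  have hlam0 : 0 < lam := by positivity
  have hlamh1 : s₀ ≤ lam * h := by
    have h1 : (max |s₀| |s₁|)/h * h = max |s₀| |s₁| := div_mul_cancel₀ _ hh0.ne'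
    have : lam * h = max |s₀| |s₁| + h := by rw [hlam, add_mul, one_mul, h1]
    rw [this]
    have := le_max_left |s₀| |s₁|
    have := le_abs_self s₀
    linarith
  have hlamh2 : -(lam * h) ≤ s₁ := by
    have h1 : (max |s₀| |s₁|)/h * h = max |s₀| |s₁| := div_mul_cancel₀ _ hh0.ne'
    have : lam * h = max |s₀| |s₁| + h := by rw [hlam, add_mul, one_mul, h1]
    rw [this]
    have := le_max_right |s₀| |s₁|
    have := neg_abs_le s₁
    linarith
  have hup : ∀ s, lam*h ≤ s → 1 - Ψ s ≤ c := by
    intro s hs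
    have := hs₀ s (le_trans hlamh1 hs)
    rw [Real.dist_eq] at this
    have := abs_lt.mp this
    linarith [this.1]
  have hdown : ∀ s, s ≤ -(lam*h) → Ψ s ≤ c := by
    intro s hs
    have := hs₁ s (le_trans hs hlamh2)
    rw [Real.dist_eq, sub_zero] at this
    have := abs_lt.mp this
    linarith [this.2]
  -- constant neuron
  obtain ⟨b₀', hb₀'⟩ := eventually_atTop.mp (hΨtop.eventually (Metric.ball_mem_nhds 1 (by norm_num : (0:ℝ) < 1/2)))
  have hb₀ : (1:ℝ)/2 < Ψ b₀' := by
    have := hb₀' b₀' le_rfl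
    rw [Real.dist_eq] at this
    have := abs_lt.mp this
    linarith [this.1]
  have hΨb₀ : Ψ b₀' ≠ 0 := by linarith
  -- assemble network
  refine ⟨N+1, Fin.cons (φ (T 0) / Ψ b₀') (fun i : Fin N => φ (T (i+1)) - φ (T i)),
    Fin.cons 0 (fun _ => lam), Fin.cons b₀' (fun i : Fin N => -(lam * T ((i:ℕ)+1))), ?_⟩
  intro t ht
  obtain ⟨htl, htr⟩ := ht
  -- the network value
  rw [Fin.sum_univ_succ]
  simp only [Fin.cons_zero, Fin.cons_succ]
  rw [zero_mul, zero_add, div_mul_cancel₀ _ hΨb₀]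
  rw [Fin.sum_univ_eq_sum_range (fun i => (φ (T (i+1)) - φ (T i)) * Ψ (lam * t + -(lam * T (i+1))))]
  -- index k
  set k : ℕ := ⌊(t+M)/h⌋₊ with hk
  have htM : 0 ≤ t + M := by linarith
  have hkl : (k:ℝ)*h ≤ t + M := by
    have := Nat.floor_le (a := (t+M)/h) (by positivity)
    calc (k:ℝ)*h ≤ (t+M)/h * h := mul_le_mul_of_nonneg_right this hh0.le
    _ = t + M := div_mul_cancel₀ _ hh0.ne'
  have hkr : t + M < ((k:ℝ)+1)*h := by
    have := Nat.lt_floor_add_one ((t+M)/h)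
    have h2 : (t+M)/h * h < ((k:ℝ)+1) * h := mul_lt_mul_of_pos_right this hh0
    rwa [div_mul_cancel₀ _ hh0.ne'] at h2
  have hkN : k ≤ N := by
    have h1 : (t+M)/h ≤ (N:ℝ) := by
      rw [div_le_iff₀ hh0]; linarith
    calc k = ⌊(t+M)/h⌋₊ := rfl
    _ ≤ ⌊(N:ℝ)⌋₊ := Nat.floor_mono h1
    _ = N := Nat.floor_natCast N
  -- staircase identity
  have hstair : φ (T 0) + ∑ i ∈ range N, (φ (T (i+1)) - φ (T i)) * (if i+1 ≤ k then (1:ℝ) else 0)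
      = φ (T k) := by
    have h1 : ∀ i ∈ range N, (φ (T (i+1)) - φ (T i)) * (if i+1 ≤ k then (1:ℝ) else 0)
        = if i ∈ range k then (φ (T (i+1)) - φ (T i)) else 0 := by
      intro i _
      by_cases hik : i + 1 ≤ k
      · rw [if_pos hik, if_pos (Finset.mem_range.mpr hik), mul_one]
      · rw [if_neg hik, if_neg (fun hm => hik (Finset.mem_range.mp hm)), mul_zero]
    rw [Finset.sum_congr rfl h1, Finset.sum_ite_mem, Finset.inter_eq_right.mpr
      (Finset.range_subset_range.mpr hkN), Finset.sum_range_sub (fun i => φ (T i))]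
    ring
  -- closeness of φ t to φ (T k)
  have hTkt : T k ≤ t ∧ t - T k < h := by
    constructor
    · simp only [hT]; linarith
    · simp only [hT]; push_cast at hkr ⊢; linarith
  have hclose : |φ t - φ (T k)| ≤ ε/4 := by
    have h1 := hδ t (Set.mem_Icc.mpr ⟨by linarith, by linarith⟩) (T k)
      (hTJ k hkN)
    have h2 : dist t (T k) < δ := by
      rw [Real.dist_eq, abs_of_nonneg (by linarith [hTkt.1])]
      linarith [hTkt.2]
    have := h1 h2
    rw [Real.dist_eq] at this; linarith
  -- per-term bound
  have hterm : ∀ i ∈ range N,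
      |(φ (T (i+1)) - φ (T i)) * ((if i+1 ≤ k then (1:ℝ) else 0) - Ψ (lam * t + -(lam * T (i+1))))|
      ≤ (if i+1 = k then ε/4 else 0) + (if i = k then ε/4 else 0)
        + |φ (T (i+1)) - φ (T i)| * c := by
    intro i hi
    have hiN := Finset.mem_range.mp hi
    have hΨi := hΨ0 (lam * t + -(lam * T (i+1)))
    set χ : ℝ := if i+1 ≤ k then (1:ℝ) else 0 with hχ
    have hχ01 : 0 ≤ χ ∧ χ ≤ 1 := by
      constructor <;> (rw [hχ]; split <;> norm_num)
    have habs1 : |χ - Ψ (lam * t + -(lam * T (i+1)))| ≤ 1 := by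
      rw [abs_le]; constructor <;> [linarith [hΨi.2, hχ01.1]; linarith [hΨi.1, hχ01.2]]
    by_cases hc1 : i + 1 = k
    · rw [if_pos hc1, abs_mul]
      have := hΔ i hiN
      have h2 : |φ (T (i+1)) - φ (T i)| * |χ - Ψ (lam * t + -(lam * T (i+1)))| ≤ ε/4 * 1 := by
        apply mul_le_mul this habs1 (abs_nonneg _) (by positivity)
      have h3 : (0:ℝ) ≤ (if i = k then ε/4 else 0) := by split <;> positivity
      have h4 : (0:ℝ) ≤ |φ (T (i+1)) - φ (T i)| * c := by positivity
      linarith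
    · by_cases hc2 : i = k
      · rw [if_neg hc1, if_pos hc2, abs_mul]
        have := hΔ i hiN
        have h2 : |φ (T (i+1)) - φ (T i)| * |χ - Ψ (lam * t + -(lam * T (i+1)))| ≤ ε/4 * 1 := by
          apply mul_le_mul this habs1 (abs_nonneg _) (by positivity)
        have h4 : (0:ℝ) ≤ |φ (T (i+1)) - φ (T i)| * c := by positivity
        linarith
      · rw [if_neg hc1, if_neg hc2, zero_add, zero_add, abs_mul]
        apply mul_le_mul_of_nonneg_left _ (abs_nonneg _)
        -- good index: |χ - Ψ| ≤ c
        by_cases hχ1 : i + 1 ≤ k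
        · -- χ = 1, i+1 < k so i+2 ≤ k
          have hik2 : i + 2 ≤ k := by omega
          have harg : lam * h ≤ lam * t + -(lam * T (i+1)) := by
            have h1 : T (i+1) + h ≤ t := by
              simp only [hT]
              have : ((i:ℝ)+2)*h ≤ (k:ℝ)*h := by
                apply mul_le_mul_of_nonneg_right _ hh0.le; exact_mod_cast hik2
              push_cast at this ⊢
              linarith
            have : lam * (t - T (i+1)) ≥ lam * h := by
              apply mul_le_mul_of_nonneg_left _ hlam0.le; linarith
            linarith [this]
          have h1 : 1 - Ψ (lam * t + -(lam * T (i+1))) ≤ c :=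
            le_trans (by linarith [hΨmono harg]) (hup _ le_rfl)
          rw [hχ, if_pos hχ1, abs_of_nonneg (by linarith [hΨi.2])]
          exact h1
        · -- χ = 0, k < i+1, k ≠ i so k+1 ≤ i
          have hik2 : k + 1 ≤ i := by omega
          have harg : lam * t + -(lam * T (i+1)) ≤ -(lam * h) := by
            have h1 : t + h ≤ T (i+1) := by
              have hki : ((k:ℝ)+1) ≤ (i:ℝ) := by exact_mod_cast hik2
              have h2 : ((k:ℝ)+1)*h ≤ (i:ℝ)*h := mul_le_mul_of_nonneg_right hki hh0.le
              simp only [hT]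
              push_cast
              linarith [hkr]
            have : lam * (t - T (i+1)) ≤ lam * (-h) := by
              apply mul_le_mul_of_nonneg_left _ hlam0.le; linarith
            linarith [this]
          have h1 : Ψ (lam * t + -(lam * T (i+1))) ≤ c :=
            le_trans (hΨmono harg) (hdown _ le_rfl)
          rw [hχ, if_neg hχ1, zero_sub, abs_neg, abs_of_nonneg hΨi.1]
          exact h1
  -- combine
  have hsum : |φ (T k) - (φ (T 0) + ∑ i ∈ range N,
      (φ (T (i+1)) - φ (T i)) * Ψ (lam * t + -(lam * T (i+1))))| ≤ 3*(ε/4) := by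
    have heq : φ (T k) - (φ (T 0) + ∑ i ∈ range N,
        (φ (T (i+1)) - φ (T i)) * Ψ (lam * t + -(lam * T (i+1))))
        = ∑ i ∈ range N, (φ (T (i+1)) - φ (T i)) *
          ((if i+1 ≤ k then (1:ℝ) else 0) - Ψ (lam * t + -(lam * T (i+1)))) := by
      rw [← hstair]
      rw [Finset.sum_congr rfl (fun i _ => mul_sub (φ (T (i+1)) - φ (T i)) _ _),
        Finset.sum_sub_distrib]
      ring
    rw [heq]
    calc |∑ i ∈ range N, (φ (T (i+1)) - φ (T i)) *
          ((if i+1 ≤ k then (1:ℝ) else 0) - Ψ (lam * t + -(lam * T (i+1))))|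
        ≤ ∑ i ∈ range N, |(φ (T (i+1)) - φ (T i)) *
          ((if i+1 ≤ k then (1:ℝ) else 0) - Ψ (lam * t + -(lam * T (i+1))))| :=
          Finset.abs_sum_le_sum_abs _ _
      _ ≤ ∑ i ∈ range N, ((if i+1 = k then ε/4 else 0) + (if i = k then ε/4 else 0)
          + |φ (T (i+1)) - φ (T i)| * c) := Finset.sum_le_sum hterm
      _ ≤ 3*(ε/4) := by
          rw [Finset.sum_add_distrib, Finset.sum_add_distrib, ← Finset.sum_mul]
          have h1 : ∑ i ∈ range N, (if i+1 = k then ε/4 else 0) ≤ ε/4 := by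
            have : ∀ i ∈ range N, (if i+1 = k then ε/4 else 0) ≤ (if i = k-1 then ε/4 else 0) := by
              intro i _
              split
              · next hik => rw [if_pos (by omega)]
              · split <;> positivity
            calc ∑ i ∈ range N, (if i+1 = k then ε/4 else 0)
                ≤ ∑ i ∈ range N, (if i = k-1 then ε/4 else 0) := Finset.sum_le_sum this
              _ ≤ ε/4 := by
                  rw [Finset.sum_ite_eq' (range N) (k-1) (fun _ => ε/4)]
                  split
                  · exact le_rfl
                  · positivity
          have h2 : ∑ i ∈ range N, (if i = k then ε/4 else 0) ≤ ε/4 := by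
            rw [Finset.sum_ite_eq' (range N) k (fun _ => ε/4)]
            split
            · exact le_rfl
            · positivity
          have h3 : B * c ≤ ε/4 := by
            have h5 : B * c ≤ (B+1) * c :=
              mul_le_mul_of_nonneg_right (by linarith) hc0.le
            linarith
          rw [← hB]
          linarith
  calc |φ t - (φ (T 0) + ∑ i ∈ range N,
        (φ (T (i+1)) - φ (T i)) * Ψ (lam * t + -(lam * T (i+1))))|
      ≤ |φ t - φ (T k)| + |φ (T k) - (φ (T 0) + ∑ i ∈ range N,
        (φ (T (i+1)) - φ (T i)) * Ψ (lam * t + -(lam * T (i+1))))| := abs_sub_le _ _ _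
    _ ≤ ε/4 + 3*(ε/4) := add_le_add hclose hsum
    _ = ε := by ring

/-- Ridge functions `x ↦ φ (f x)` lie in the closure of the network class. -/
lemma ridge_mem_closure
    {X : Type*} [NormedAddCommGroup X] [NormedSpace ℝ X]
    (K : Set X) (hK : IsCompact K)
    (Ψ : ℝ → ℝ) (hΨc : Continuous Ψ) (hΨ0 : ∀ t, Ψ t ∈ Set.Icc (0 : ℝ) 1)
    (hΨmono : Monotone Ψ) (hΨtop : Tendsto Ψ atTop (nhds 1))
    (hΨbot : Tendsto Ψ atBot (nhds 0))
    (φ : ℝ → ℝ) (hφ : Continuous φ) (f : X →L[ℝ] ℝ) :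
    (⟨fun x : K => φ (f x), hφ.comp (f.continuous.comp continuous_subtype_val)⟩ : C(K, ℝ)) ∈
      closure {g : C(K, ℝ) | ∃ (N : ℕ) (ω b : Fin N → ℝ) (fs : Fin N → (X →L[ℝ] ℝ)),
        ∀ x : K, g x = ∑ j, ω j * Ψ (fs j (x : X) + b j)} := by
  haveI : CompactSpace K := isCompact_iff_compactSpace.mp hK
  rw [Metric.mem_closure_iff]
  intro ε hε
  obtain ⟨C, hC⟩ := hK.exists_bound_of_continuousOn f.continuous.continuousOn
  set M : ℝ := max C 0 with hM
  have hM0 : 0 ≤ M := le_max_right _ _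
  obtain ⟨N, ω, a, b, hnet⟩ := oneD Ψ hΨ0 hΨmono hΨtop hΨbot φ hφ M (ε/2) hM0 (by positivity)
  have hcont : Continuous fun x : K => ∑ j : Fin N, ω j * Ψ (a j * f (x : X) + b j) := by
    apply continuous_finset_sum
    intro j _
    exact continuous_const.mul (hΨc.comp
      (((continuous_const.mul (f.continuous.comp continuous_subtype_val)).add continuous_const)))
  refine ⟨⟨fun x : K => ∑ j : Fin N, ω j * Ψ (a j * f (x : X) + b j), hcont⟩, ?_, ?_⟩
  · refine ⟨N, ω, b, fun j => a j • f, fun x => ?_⟩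
    simp only [ContinuousMap.coe_mk, ContinuousLinearMap.smul_apply, smul_eq_mul]
  · have hdist : dist (⟨fun x : K => φ (f x), hφ.comp (f.continuous.comp continuous_subtype_val)⟩ : C(K, ℝ))
        (⟨fun x : K => ∑ j : Fin N, ω j * Ψ (a j * f (x : X) + b j), hcont⟩ : C(K, ℝ)) ≤ ε/2 := by
      rw [ContinuousMap.dist_le (by positivity)]
      intro x
      rw [ContinuousMap.coe_mk, ContinuousMap.coe_mk, Real.dist_eq]
      apply hnet
      have := hC (x : X) x.2
      rw [Real.norm_eq_abs, abs_le] at this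
      constructor
      · have := this.1; simp only [hM]; have h2 := le_max_left C (0:ℝ); linarith
      · have := this.2; simp only [hM]; have h2 := le_max_left C (0:ℝ); linarith
    linarith

/-- The exponential ridge function as a continuous map on `K`. -/
noncomputable def expRidge {X : Type*} [NormedAddCommGroup X] [NormedSpace ℝ X]
    (K : Set X) (f : X →L[ℝ] ℝ) : C(K, ℝ) :=
  ⟨fun x => Real.exp (f x), Real.continuous_exp.comp (f.continuous.comp continuous_subtype_val)⟩

/-- Banach-space case of the uniform density of the
neural-network class Σ_X(Ψ) in C(K). -/
theorem network_class_dense_in_CK_banach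
    {X : Type*} [NormedAddCommGroup X] [NormedSpace ℝ X] [CompleteSpace X]
    (K : Set X) (hK : IsCompact K)
    (Ψ : ℝ → ℝ) (hΨc : Continuous Ψ) (hΨ0 : ∀ t, Ψ t ∈ Set.Icc (0 : ℝ) 1)
    (hΨmono : Monotone Ψ) (hΨtop : Tendsto Ψ atTop (nhds 1))
    (hΨbot : Tendsto Ψ atBot (nhds 0)) :
    closure {g : C(K, ℝ) | ∃ (N : ℕ) (ω b : Fin N → ℝ) (f : Fin N → (X →L[ℝ] ℝ)),
        ∀ x : K, g x = ∑ j, ω j * Ψ (f j (x : X) + b j)} = Set.univ := by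
  haveI : CompactSpace K := isCompact_iff_compactSpace.mp hK
  set S : Set C(K, ℝ) := {g : C(K, ℝ) | ∃ (N : ℕ) (ω b : Fin N → ℝ) (f : Fin N → (X →L[ℝ] ℝ)),
        ∀ x : K, g x = ∑ j, ω j * Ψ (f j (x : X) + b j)} with hS
  -- S is a submodule
  let Smod : Submodule ℝ C(K, ℝ) :=
    { carrier := S
      zero_mem' := ⟨0, Fin.elim0, Fin.elim0, Fin.elim0, fun x => by simp⟩
      add_mem' := by
        rintro g₁ g₂ ⟨N₁, ω₁, b₁, f₁, h₁⟩ ⟨N₂, ω₂, b₂, f₂, h₂⟩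
        refine ⟨N₁ + N₂, Fin.append ω₁ ω₂, Fin.append b₁ b₂, Fin.append f₁ f₂, fun x => ?_⟩
        rw [ContinuousMap.add_apply, h₁ x, h₂ x, Fin.sum_univ_add]
        congr 1
        · exact Finset.sum_congr rfl fun i _ => by
            rw [Fin.append_left, Fin.append_left, Fin.append_left]
        · exact Finset.sum_congr rfl fun i _ => by
            rw [Fin.append_right, Fin.append_right, Fin.append_right]
      smul_mem' := by
        rintro c g ⟨N, ω, b, f, h⟩
        refine ⟨N, fun j => c * ω j, b, f, fun x => ?_⟩
        rw [ContinuousMap.smul_apply, h x, smul_eq_mul, Finset.mul_sum]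
        exact Finset.sum_congr rfl fun j _ => by ring }
  -- the exp-algebra
  set G : Set C(K, ℝ) := Set.range (expRidge K) with hG
  -- G is a submonoid
  have hone : (1 : C(K, ℝ)) ∈ G := by
    refine ⟨0, ?_⟩
    ext x
    simp [expRidge]
  have hmul : ∀ g₁ ∈ G, ∀ g₂ ∈ G, g₁ * g₂ ∈ G := by
    rintro _ ⟨f₁, rfl⟩ _ ⟨f₂, rfl⟩
    refine ⟨f₁ + f₂, ?_⟩
    ext x
    simp [expRidge, Real.exp_add]
  let Gmon : Submonoid C(K, ℝ) :=
    { carrier := G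
      one_mem' := hone
      mul_mem' := fun ha hb => hmul _ ha _ hb }
  -- G separates points
  let A : Subalgebra ℝ C(K, ℝ) := Algebra.adjoin ℝ G
  have hsep : A.SeparatesPoints := by
    intro x y hxy
    have hv : (x : X) - (y : X) ≠ 0 := sub_ne_zero.mpr (Subtype.coe_injective.ne hxy)
    obtain ⟨f, hf1, hf2⟩ := exists_dual_vector ℝ ((x : X) - (y : X)) (norm_ne_zero_iff.mpr hv)
    have hmem : expRidge K f ∈ G := ⟨f, rfl⟩
    refine ⟨⇑(expRidge K f), ⟨Set.mem_image_of_mem _ (Algebra.subset_adjoin hmem), ?_⟩⟩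
    simp only [expRidge, ContinuousMap.coe_mk]
    intro heq
    have := Real.exp_injective heq
    have hfxy : f ((x : X) - (y : X)) = 0 := by
      rw [map_sub, this, sub_self]
    rw [hf2] at hfxy
    have : ‖(x : X) - (y : X)‖ = 0 := by exact_mod_cast hfxy
    exact hv (norm_eq_zero.mp this)
  have hA : A.topologicalClosure = ⊤ :=
    ContinuousMap.subalgebra_topologicalClosure_eq_top_of_separatesPoints A hsep
  -- G ⊆ closure S
  have hGS : G ⊆ closure S := by
    rintro _ ⟨f, rfl⟩
    exact ridge_mem_closure K hK Ψ hΨc hΨ0 hΨmono hΨtop hΨbot Real.exp Real.continuous_exp f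
  -- A ⊆ closure S
  have hAS : (A : Set C(K, ℝ)) ⊆ closure S := by
    have h1 : Subalgebra.toSubmodule A = Submodule.span ℝ (Submonoid.closure G : Set C(K, ℝ)) :=
      Algebra.adjoin_eq_span ℝ G
    have h2' : Submonoid.closure G ≤ Gmon := Submonoid.closure_le.mpr subset_rfl
    have h2 : (Submonoid.closure G : Set C(K, ℝ)) ⊆ G := h2'
    have hcoe : (Smod.topologicalClosure : Set C(↑K, ℝ)) = closure S :=
      Submodule.topologicalClosure_coe Smod
    have h3 : Submodule.span ℝ (Submonoid.closure G : Set C(↑K, ℝ)) ≤ Smod.topologicalClosure := by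
      apply Submodule.span_le.mpr
      refine h2.trans ?_
      intro g hg
      have hgc : g ∈ closure S := hGS hg
      rw [← hcoe] at hgc
      exact hgc
    intro g hg
    have hg' : g ∈ Subalgebra.toSubmodule A := hg
    rw [h1] at hg'
    have h5 : g ∈ (Smod.topologicalClosure : Set C(↑K, ℝ)) := h3 hg'
    rw [hcoe] at h5
    exact h5
  -- conclude
  apply Set.eq_univ_of_forall
  intro g
  have hg : g ∈ A.topologicalClosure := by rw [hA]; trivial
  have hg2 : g ∈ closure (A : Set C(K, ℝ)) := hg
  have := closure_mono hAS hg2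
  rwa [closure_closure] at this
end

section
/- Let X be a topological vector space whose continuous dual separates points, μ a Radon probability measure with compact support K ⊆ X, 1 ≤ p < ∞, and Ψ : ℝ → ℝ a continuous squashing function. Then the class Σ_X(Ψ) of functions x ↦ Σ_{j=1}^N ω_j Ψ(f_j(x) + b_j), with ω_j, b_j ∈ ℝ and f_j ∈ X*, is dense in L^p(K, μ). -/
open MeasureTheory Filter Topology
open scoped ENNReal NNReal
set_option linter.unusedSectionVars false

section NetAux

variable {X : Type*} [AddCommGroup X] [Module ℝ X] [TopologicalSpace X]
    [IsTopologicalAddGroup X] [ContinuousSMul ℝ X] [MeasurableSpace X] [BorelSpace X]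

/-- A one-hidden-layer network with activation Ψ. -/
def IsNet (Ψ : ℝ → ℝ) (T : X → ℝ) : Prop :=
  ∃ (N : ℕ) (ω b : Fin N → ℝ) (f : Fin N → (X →L[ℝ] ℝ)),
    T = fun x => ∑ j, ω j * Ψ (f j x + b j)

/-- `G` can be approximated arbitrarily well in `L^p(μ)` by networks. -/
def NetApprox (μ : Measure X) (p : ℝ≥0∞) (Ψ : ℝ → ℝ) (G : X → ℝ) : Prop :=
  ∀ ε : ℝ, 0 < ε → ∃ T : X → ℝ, IsNet Ψ T ∧
    eLpNorm (fun x => G x - T x) p μ < ENNReal.ofReal ε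

variable {μ : Measure X} {p : ℝ≥0∞} {Ψ : ℝ → ℝ}

theorem IsNet.continuous (hΨc : Continuous Ψ) {T : X → ℝ} (hT : IsNet Ψ T) :
    Continuous T := by
  obtain ⟨N, ω, b, f, rfl⟩ := hT
  exact continuous_finset_sum _ fun j _ =>
    continuous_const.mul (hΨc.comp ((f j).continuous.add continuous_const))

theorem IsNet.add {T₁ T₂ : X → ℝ} (h₁ : IsNet Ψ T₁) (h₂ : IsNet Ψ T₂) :
    IsNet Ψ (fun x => T₁ x + T₂ x) := by
  obtain ⟨N₁, ω₁, b₁, f₁, rfl⟩ := h₁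
  obtain ⟨N₂, ω₂, b₂, f₂, rfl⟩ := h₂
  refine ⟨N₁ + N₂, Fin.append ω₁ ω₂, Fin.append b₁ b₂, Fin.append f₁ f₂, ?_⟩
  funext x
  simp [Fin.sum_univ_add, Fin.append_left, Fin.append_right]

theorem IsNet.smul (c : ℝ) {T : X → ℝ} (hT : IsNet Ψ T) :
    IsNet Ψ (fun x => c * T x) := by
  obtain ⟨N, ω, b, f, rfl⟩ := hT
  exact ⟨N, fun j => c * ω j, b, f, by funext x; simp [Finset.mul_sum, mul_assoc]⟩

theorem isNet_zero : IsNet Ψ (fun _ : X => (0 : ℝ)) :=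
  ⟨0, ![], ![], ![], by funext x; simp⟩

theorem NetApprox.of_isNet {T : X → ℝ} (hT : IsNet Ψ T) : NetApprox μ p Ψ T := by
  intro ε hε
  refine ⟨T, hT, ?_⟩
  simpa using ENNReal.ofReal_pos.mpr hε

theorem NetApprox.add (hp : 1 ≤ p) (hΨc : Continuous Ψ) {G H : X → ℝ}
    (hGm : AEStronglyMeasurable G μ) (hHm : AEStronglyMeasurable H μ)
    (hG : NetApprox μ p Ψ G) (hH : NetApprox μ p Ψ H) :
    NetApprox μ p Ψ (fun x => G x + H x) := by
  intro ε hε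
  obtain ⟨T₁, hT₁, he₁⟩ := hG (ε / 2) (by positivity)
  obtain ⟨T₂, hT₂, he₂⟩ := hH (ε / 2) (by positivity)
  refine ⟨fun x => T₁ x + T₂ x, hT₁.add hT₂, ?_⟩
  have hkey : (fun x => (G x + H x) - (T₁ x + T₂ x))
      = (fun x => G x - T₁ x) + fun x => H x - T₂ x := by
    funext x; simp [Pi.add_apply]; ring
  calc eLpNorm (fun x => (G x + H x) - (T₁ x + T₂ x)) p μ
      ≤ eLpNorm (fun x => G x - T₁ x) p μ + eLpNorm (fun x => H x - T₂ x) p μ := by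
        rw [hkey]
        exact eLpNorm_add_le (hGm.sub (hT₁.continuous hΨc).aestronglyMeasurable)
          (hHm.sub (hT₂.continuous hΨc).aestronglyMeasurable) hp
    _ < ENNReal.ofReal (ε / 2) + ENNReal.ofReal (ε / 2) :=
        ENNReal.add_lt_add_of_le_of_lt (ne_top_of_le_ne_top ENNReal.ofReal_ne_top he₁.le)
          he₁.le he₂
    _ ≤ ENNReal.ofReal ε := by
        rw [← ENNReal.ofReal_add (by positivity) (by positivity)]
        simp [add_halves]

theorem NetApprox.smul (c : ℝ) {G : X → ℝ} (hG : NetApprox μ p Ψ G) :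
    NetApprox μ p Ψ (fun x => c * G x) := by
  rcases eq_or_ne c 0 with rfl | hc
  · intro ε hε
    refine ⟨fun _ => 0, isNet_zero, ?_⟩
    simpa using ENNReal.ofReal_pos.mpr hε
  · intro ε hε
    obtain ⟨T, hT, he⟩ := hG (ε / |c|) (by positivity)
    refine ⟨fun x => c * T x, hT.smul c, ?_⟩
    have : (fun x => c * G x - c * T x) = c • fun x => G x - T x := by
      funext x; simp [mul_sub]
    rw [this, eLpNorm_const_smul]
    calc (‖c‖₊ : ℝ≥0∞) * eLpNorm (fun x => G x - T x) p μ
        < (‖c‖₊ : ℝ≥0∞) * ENNReal.ofReal (ε / |c|) := by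
          refine ENNReal.mul_lt_mul_right ?_ ?_ he
          · simpa using hc
          · exact ENNReal.coe_ne_top
      _ = ENNReal.ofReal ε := by
          rw [← enorm_eq_nnnorm, Real.enorm_eq_ofReal_abs, ← ENNReal.ofReal_mul (abs_nonneg c)]
          rw [mul_div_cancel₀ _ (by simpa using hc)]

theorem NetApprox.sum (hp : 1 ≤ p) (hΨc : Continuous Ψ) {ι : Type*} (s : Finset ι)
    (G : ι → X → ℝ) (hGm : ∀ i ∈ s, AEStronglyMeasurable (G i) μ)
    (hG : ∀ i ∈ s, NetApprox μ p Ψ (G i)) :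
    NetApprox μ p Ψ (fun x => ∑ i ∈ s, G i x) := by
  classical
  induction s using Finset.induction_on with
  | empty => simpa using NetApprox.of_isNet isNet_zero
  | insert a s hni ih =>
    simp only [Finset.sum_insert hni]
    exact NetApprox.add hp hΨc (hGm a (Finset.mem_insert_self a s))
      (Finset.aestronglyMeasurable_fun_sum s fun i hi => hGm i (Finset.mem_insert_of_mem hi))
      (hG a (Finset.mem_insert_self a s))
      (ih (fun i hi => hGm i (Finset.mem_insert_of_mem hi))
        (fun i hi => hG i (Finset.mem_insert_of_mem hi)))

end NetAux
section NetAux2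
set_option linter.unusedSectionVars false

open MeasureTheory Filter Topology
open scoped ENNReal NNReal

variable {X : Type*} [AddCommGroup X] [Module ℝ X] [TopologicalSpace X]
    [IsTopologicalAddGroup X] [ContinuousSMul ℝ X] [MeasurableSpace X] [BorelSpace X]
    {μ : Measure X} {p : ℝ≥0∞} {Ψ : ℝ → ℝ}

theorem NetApprox.const [IsProbabilityMeasure μ] (hp0 : p ≠ 0)
    (hΨtop : Tendsto Ψ atTop (nhds 1)) (c : ℝ) :
    NetApprox μ p Ψ (fun _ => c) := by
  have h1 : NetApprox μ p Ψ (fun _ => (1 : ℝ)) := by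
    intro ε hε
    obtain ⟨b, hb⟩ := (hΨtop.eventually (Metric.ball_mem_nhds (1 : ℝ) hε)).exists
    refine ⟨fun x => ∑ j : Fin 1, 1 * Ψ ((0 : X →L[ℝ] ℝ) x + b),
      ⟨1, fun _ => 1, fun _ => b, fun _ => 0, rfl⟩, ?_⟩
    have : (fun x : X => (1 : ℝ) - ∑ j : Fin 1, 1 * Ψ ((0 : X →L[ℝ] ℝ) x + b))
        = fun _ => 1 - Ψ b := by
      funext x; simp
    rw [this, eLpNorm_const _ hp0 (IsProbabilityMeasure.ne_zero μ)]
    simp only [measure_univ, ENNReal.one_rpow, mul_one]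
    rw [Real.enorm_eq_ofReal_abs]
    refine ENNReal.ofReal_lt_ofReal_iff hε |>.mpr ?_
    rw [abs_sub_comm, ← Real.dist_eq]; exact hb
  have h2 := h1.smul (μ := μ) (p := p) c
  simpa using h2

theorem NetApprox.of_close (hp : 1 ≤ p) (hΨc : Continuous Ψ) {H : X → ℝ}
    (hHm : AEStronglyMeasurable H μ)
    (hcl : ∀ ε : ℝ, 0 < ε → ∃ G : X → ℝ, AEStronglyMeasurable G μ ∧ NetApprox μ p Ψ G ∧
      eLpNorm (fun x => H x - G x) p μ ≤ ENNReal.ofReal ε) :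
    NetApprox μ p Ψ H := by
  intro ε hε
  obtain ⟨G, hGm, hGa, hGe⟩ := hcl (ε / 3) (by positivity)
  obtain ⟨T, hT, hTe⟩ := hGa (ε / 3) (by positivity)
  refine ⟨T, hT, ?_⟩
  have hkey : (fun x => H x - T x) = (fun x => H x - G x) + fun x => G x - T x := by
    funext x; simp only [Pi.add_apply]; ring
  calc eLpNorm (fun x => H x - T x) p μ
      ≤ eLpNorm (fun x => H x - G x) p μ + eLpNorm (fun x => G x - T x) p μ := by
        rw [hkey]
        exact eLpNorm_add_le (hHm.sub hGm) (hGm.sub (hT.continuous hΨc).aestronglyMeasurable) hp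
    _ < ENNReal.ofReal (ε / 3) + ENNReal.ofReal (ε / 3) :=
        ENNReal.add_lt_add_of_le_of_lt (ne_top_of_le_ne_top ENNReal.ofReal_ne_top hGe) hGe hTe
    _ ≤ ENNReal.ofReal ε := by
        rw [← ENNReal.ofReal_add (by positivity) (by positivity)]
        exact ENNReal.ofReal_le_ofReal (by linarith)

end NetAux2
section NetAux3
set_option linter.unusedSectionVars false
set_option maxHeartbeats 1000000

open MeasureTheory Filter Topology
open scoped ENNReal NNReal

variable {X : Type*} [AddCommGroup X] [Module ℝ X] [TopologicalSpace X]
    [IsTopologicalAddGroup X] [ContinuousSMul ℝ X] [MeasurableSpace X] [BorelSpace X]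
    {μ : Measure X} {p : ℝ≥0∞} {Ψ : ℝ → ℝ}

theorem exists_net_unif_close
    (hΨc : Continuous Ψ) (hΨ0 : ∀ t, Ψ t ∈ Set.Icc (0 : ℝ) 1) (hΨmono : Monotone Ψ)
    (hΨtop : Tendsto Ψ atTop (nhds 1)) (hΨbot : Tendsto Ψ atBot (nhds 0))
    {K : Set X} (hK : IsCompact K) (f : X →L[ℝ] ℝ) {g : ℝ → ℝ} (hg : Continuous g)
    {ε : ℝ} (hε : 0 < ε) :
    ∃ (c : ℝ) (T : X → ℝ), IsNet Ψ T ∧ ∀ x ∈ K, |g (f x) - (c + T x)| ≤ ε := by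
  obtain ⟨C0, hC0⟩ := hK.exists_bound_of_continuousOn f.continuous.continuousOn
  set C : ℝ := max C0 0 with hCdef
  have hC0le : C0 ≤ C := le_max_left _ _
  have hC : 0 ≤ C := le_max_right _ _
  set R : ℝ := C + 1 with hRdef
  have hR1 : (1 : ℝ) ≤ R := by simp [hRdef]; linarith
  have hR0 : (0 : ℝ) < R := by linarith
  have hCR : C < R := by simp [hRdef]
  set ε' : ℝ := ε / 5 with hε'def
  have hε' : 0 < ε' := by positivity
  -- uniform continuity of g on [-R, R]
  have hucg := (isCompact_Icc (a := -R) (b := R)).uniformContinuousOn_of_continuous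
    hg.continuousOn
  obtain ⟨δ, hδ0, hδ⟩ := Metric.uniformContinuousOn_iff.mp hucg ε' hε'
  -- mesh size
  obtain ⟨n0, hn0⟩ := exists_nat_gt (2 * R / δ)
  set n : ℕ := n0 + 1 with hndef
  have hn : 2 * R / δ < (n : ℝ) := lt_of_lt_of_le hn0 (by exact_mod_cast Nat.le_succ n0)
  have hn1 : (1 : ℝ) ≤ (n : ℝ) := by exact_mod_cast Nat.one_le_iff_ne_zero.mpr (by simp [hndef])
  have hnpos : (0 : ℝ) < n := by linarith
  set η : ℝ := 2 * R / n with hηdef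
  have hη0 : 0 < η := by positivity
  have hηδ : η < δ := by
    rw [hηdef, div_lt_iff₀ hnpos]
    calc 2 * R = (2 * R / δ) * δ := by field_simp
      _ < n * δ := by exact mul_lt_mul_of_pos_right hn hδ0
      _ = δ * n := mul_comm _ _
  -- knots
  set s : ℕ → ℝ := fun i => -R + i * η with hsdef
  have hsn : s n = R := by
    rw [hsdef]; simp only []; rw [hηdef]; field_simp; ring
  have hsIcc : ∀ i ≤ n, s i ∈ Set.Icc (-R) R := by
    intro i hi
    constructor
    · rw [hsdef]; simp only []
      nlinarith [mul_nonneg (Nat.cast_nonneg (α := ℝ) i) hη0.le]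
    · have : s i ≤ s n := by
        rw [hsdef]; simp only []
        have : (i : ℝ) ≤ n := by exact_mod_cast hi
        nlinarith
      rw [hsn] at this; exact this
  -- choice of the slope k
  obtain ⟨M, hM⟩ := eventually_atTop.mp
    (hΨtop.eventually (eventually_gt_nhds (show 1 - 1/(n:ℝ) < 1 by
      have : 0 < 1/(n:ℝ) := by positivity
      linarith)))
  obtain ⟨M', hM'⟩ := eventually_atBot.mp
    (hΨbot.eventually (eventually_lt_nhds (show (0:ℝ) < 1/(n:ℝ) by positivity)))
  set A : ℝ := max M (-M') with hAdef
  set k : ℝ := (|A| + 1) / η with hkdef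
  have hk0 : 0 < k := by positivity
  have hkη : k * η = |A| + 1 := div_mul_cancel₀ _ hη0.ne'
  have hk1 : ∀ u : ℝ, η ≤ u → 1 - Ψ (k * u) ≤ 1 / n := by
    intro u hu
    have h1 : M ≤ k * u := by
      have h2 : k * η ≤ k * u := mul_le_mul_of_nonneg_left hu hk0.le
      rw [hkη] at h2
      have h3 : M ≤ A := le_max_left _ _
      have h4 : A ≤ |A| := le_abs_self _
      linarith
    have := hM (k * u) h1
    linarith
  have hk2 : ∀ u : ℝ, u ≤ -η → Ψ (k * u) ≤ 1 / n := by
    intro u hu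
    have h1 : k * u ≤ M' := by
      have h2 : k * u ≤ k * (-η) := mul_le_mul_of_nonneg_left hu hk0.le
      have h3 : -M' ≤ A := le_max_right _ _
      have h4 : A ≤ |A| := le_abs_self _
      have : k * (-η) = -(|A| + 1) := by rw [mul_neg, hkη]
      linarith
    exact (hM' (k * u) h1).le
  -- increments
  set m : ℕ := n - 1 with hmdef
  have hmn : m + 1 = n := by omega
  set Δ : ℕ → ℝ := fun i => g (s (i + 1)) - g (s i) with hΔdef
  have hΔle : ∀ i, i < n → |Δ i| ≤ ε' := by
    intro i hi
    have h1 : s i ∈ Set.Icc (-R) R := hsIcc i hi.le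
    have h2 : s (i+1) ∈ Set.Icc (-R) R := hsIcc (i+1) hi
    have hd : dist (s (i+1)) (s i) < δ := by
      rw [Real.dist_eq, hsdef]
      simp only []
      push_cast
      have : -R + ((i:ℝ) + 1) * η - (-R + (i:ℝ) * η) = η := by ring
      rw [this]
      rw [abs_of_pos hη0]; exact hηδ
    have := hδ (s (i+1)) h2 (s i) h1 hd
    rw [Real.dist_eq] at this
    exact this.le
  -- the network
  refine ⟨g (s 1), fun x => ∑ j ∈ Finset.range m, Δ (j+1) * Ψ (k * (f x - s (j+1))), ?_, ?_⟩
  · refine ⟨m, fun j => Δ ((j : ℕ) + 1), fun j => -(k * s ((j : ℕ) + 1)),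
      fun _ => k • f, ?_⟩
    funext x
    rw [← Fin.sum_univ_eq_sum_range (fun j => Δ (j+1) * Ψ (k * (f x - s (j+1)))) m]
    refine Finset.sum_congr rfl fun j _ => ?_
    congr 1
    congr 1
    simp only [ContinuousLinearMap.smul_apply, smul_eq_mul]
    ring
  -- the approximation bound
  intro x hx
  set t : ℝ := f x with htdef
  have htC : |t| ≤ C := by
    have := hC0 x hx
    rw [Real.norm_eq_abs] at this
    exact this.trans hC0le
  have htR : -R < t ∧ t < R := by
    rw [abs_le] at htC
    constructor <;> linarith [htC.1, htC.2]
  have htR0 : 0 < t + R := by linarith [htR.1]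
  obtain ⟨q, hq_le, hq_lt⟩ : ∃ q : ℕ, (q : ℝ) * η ≤ t + R ∧ t + R < ((q : ℝ) + 1) * η := by
    refine ⟨⌊(t + R) / η⌋₊, ?_, ?_⟩
    · have h1 : (⌊(t + R) / η⌋₊ : ℝ) ≤ (t + R) / η := Nat.floor_le (by positivity)
      calc (⌊(t + R) / η⌋₊ : ℝ) * η ≤ ((t + R) / η) * η := mul_le_mul_of_nonneg_right h1 hη0.le
        _ = t + R := by field_simp
    · have h1 : (t + R) / η < (⌊(t + R) / η⌋₊ : ℝ) + 1 := Nat.lt_floor_add_one _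
      calc t + R = ((t + R) / η) * η := by field_simp
        _ < ((⌊(t + R) / η⌋₊ : ℝ) + 1) * η := mul_lt_mul_of_pos_right h1 hη0
  have hsq : s q ≤ t := by simp only [hsdef]; linarith
  have hsq1 : t < s (q + 1) := by
    simp only [hsdef]; push_cast; linarith
  have hqn : q < n := by
    have h2 : (q : ℝ) * η < (n : ℝ) * η := by
      have hh : t + R < 2 * R := by linarith [htR.2]
      have hnη : (n : ℝ) * η = 2 * R := by rw [hηdef]; field_simp
      linarith
    have := lt_of_mul_lt_mul_right h2 hη0.le
    exact_mod_cast this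
  have hqm : q ≤ m := by omega
  set Ψt : ℕ → ℝ := fun j => Ψ (k * (t - s (j + 1))) with hΨtdef
  have hΨt01 : ∀ j, 0 ≤ Ψt j ∧ Ψt j ≤ 1 := fun j => ⟨(hΨ0 _).1, (hΨ0 _).2⟩
  -- telescoping
  have htel : g (s 1) + ∑ j ∈ Finset.range q, Δ (j + 1) = g (s (q + 1)) := by
    have h2 : ∑ j ∈ Finset.range q, Δ (j + 1) = g (s (q + 1)) - g (s (0 + 1)) :=
      Finset.sum_range_sub (fun j => g (s (j + 1))) q
    rw [h2]; norm_num
  have hsplit : ∑ j ∈ Finset.range m, Δ (j + 1) * Ψt j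
      = ∑ j ∈ Finset.range q, Δ (j + 1) * Ψt j + ∑ j ∈ Finset.Ico q m, Δ (j + 1) * Ψt j :=
    (Finset.sum_range_add_sum_Ico _ hqm).symm
  -- partial-sum bounds
  have hS1 : ∑ j ∈ Finset.range q, (1 - Ψt j) ≤ 2 := by
    rcases Nat.eq_zero_or_pos q with hq0 | hqpos
    · simp [hq0]
    · obtain ⟨q', rfl⟩ : ∃ q', q = q' + 1 := ⟨q - 1, by omega⟩
      rw [Finset.sum_range_succ]
      have hbound : ∀ j ∈ Finset.range q', 1 - Ψt j ≤ 1 / n := by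
        intro j hj
        rw [Finset.mem_range] at hj
        simp only [hΨtdef]
        apply hk1
        have hjq : (j : ℝ) + 1 ≤ (q' : ℝ) := by exact_mod_cast hj
        have hq't : -R + ((q' : ℝ) + 1) * η ≤ t := by
          have h5 := hsq
          simp only [hsdef] at h5; push_cast at h5; linarith
        simp only [hsdef]; push_cast
        nlinarith [mul_nonneg (show (0:ℝ) ≤ (q' : ℝ) - (j : ℝ) - 1 by linarith) hη0.le]
      have hq'n : (q' : ℝ) ≤ (n : ℝ) := by
        have : q' ≤ n := by omega
        exact_mod_cast this
      calc ∑ j ∈ Finset.range q', (1 - Ψt j) + (1 - Ψt q')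
          ≤ ∑ _j ∈ Finset.range q', (1 / (n : ℝ)) + 1 := by
            refine add_le_add (Finset.sum_le_sum hbound) ?_
            linarith [(hΨt01 q').1]
        _ = q' * (1 / (n : ℝ)) + 1 := by
            rw [Finset.sum_const, Finset.card_range]; simp [nsmul_eq_mul]
        _ ≤ 1 + 1 := by
            have h6 : (q' : ℝ) * (1 / (n : ℝ)) ≤ (n : ℝ) * (1 / (n : ℝ)) := by
              apply mul_le_mul_of_nonneg_right hq'n
              positivity
            have h7 : (n : ℝ) * (1 / (n : ℝ)) = 1 := by field_simp
            linarith
        _ = 2 := by norm_num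
  have hS2 : ∑ j ∈ Finset.Ico q m, Ψt j ≤ 2 := by
    rcases lt_or_ge q m with hqm' | hqm'
    · rw [Finset.sum_eq_sum_Ico_succ_bot hqm']
      have hbound : ∀ j ∈ Finset.Ico (q + 1) m, Ψt j ≤ 1 / n := by
        intro j hj
        rw [Finset.mem_Ico] at hj
        simp only [hΨtdef]
        apply hk2
        have hj1 : (q : ℝ) + 1 ≤ (j : ℝ) := by exact_mod_cast hj.1
        have h5 := hsq1
        simp only [hsdef] at h5 ⊢; push_cast at h5 ⊢
        nlinarith [mul_nonneg (show (0:ℝ) ≤ (j : ℝ) - (q : ℝ) - 1 by linarith) hη0.le]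
      have hcard : ((m - (q + 1) : ℕ) : ℝ) ≤ (n : ℝ) := by
        have : m - (q + 1) ≤ n := by omega
        exact_mod_cast this
      calc Ψt q + ∑ j ∈ Finset.Ico (q + 1) m, Ψt j
          ≤ 1 + ∑ _j ∈ Finset.Ico (q + 1) m, (1 / (n : ℝ)) :=
            add_le_add (hΨt01 q).2 (Finset.sum_le_sum hbound)
        _ = 1 + ((m - (q + 1) : ℕ) : ℝ) * (1 / (n : ℝ)) := by
            rw [Finset.sum_const, Nat.card_Ico]; simp [nsmul_eq_mul]
        _ ≤ 1 + 1 := by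
            have h6 : ((m - (q + 1) : ℕ) : ℝ) * (1 / (n : ℝ)) ≤ (n : ℝ) * (1 / (n : ℝ)) := by
              apply mul_le_mul_of_nonneg_right hcard
              positivity
            have h7 : (n : ℝ) * (1 / (n : ℝ)) = 1 := by field_simp
            linarith
        _ = 2 := by norm_num
    · have hempty : Finset.Ico q m = ∅ := Finset.Ico_eq_empty (by omega)
      simp [hempty]
  -- increments are small
  have hΔ' : ∀ j, j < m → |Δ (j + 1)| ≤ ε' := fun j hj => hΔle (j + 1) (by omega)
  -- mesh bound
  have hmesh : |g t - g (s (q + 1))| ≤ ε' := by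
    have h1 : t ∈ Set.Icc (-R) R := ⟨htR.1.le, htR.2.le⟩
    have h2 : s (q + 1) ∈ Set.Icc (-R) R := hsIcc (q + 1) hqn
    have hd : dist t (s (q + 1)) < δ := by
      rw [Real.dist_eq, abs_of_nonpos (by linarith [hsq1])]
      have h5 : s (q + 1) - t ≤ η := by
        simp only [hsdef]; push_cast; linarith
      linarith
    exact (hδ t h1 _ h2 hd).le
  -- assembling
  have key : g t - (g (s 1) + ∑ j ∈ Finset.range m, Δ (j + 1) * Ψt j)
      = (g t - g (s (q + 1))) + (∑ j ∈ Finset.range q, Δ (j + 1) * (1 - Ψt j)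
        - ∑ j ∈ Finset.Ico q m, Δ (j + 1) * Ψt j) := by
    have e1 : ∑ j ∈ Finset.range q, Δ (j + 1) * (1 - Ψt j)
        = ∑ j ∈ Finset.range q, Δ (j + 1) - ∑ j ∈ Finset.range q, Δ (j + 1) * Ψt j := by
      rw [← Finset.sum_sub_distrib]
      exact Finset.sum_congr rfl fun j _ => by ring
    rw [hsplit, e1]
    linarith [htel]
  have hb1 : |∑ j ∈ Finset.range q, Δ (j + 1) * (1 - Ψt j)| ≤ 2 * ε' := by
    calc |∑ j ∈ Finset.range q, Δ (j + 1) * (1 - Ψt j)|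
        ≤ ∑ j ∈ Finset.range q, |Δ (j + 1) * (1 - Ψt j)| := Finset.abs_sum_le_sum_abs _ _
      _ ≤ ∑ j ∈ Finset.range q, ε' * (1 - Ψt j) := by
          refine Finset.sum_le_sum fun j hj => ?_
          rw [Finset.mem_range] at hj
          rw [abs_mul, abs_of_nonneg (show (0:ℝ) ≤ 1 - Ψt j by linarith [(hΨt01 j).2])]
          exact mul_le_mul_of_nonneg_right (hΔ' j (lt_of_lt_of_le hj hqm))
            (by linarith [(hΨt01 j).2])
      _ = ε' * ∑ j ∈ Finset.range q, (1 - Ψt j) := by rw [Finset.mul_sum]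
      _ ≤ ε' * 2 := mul_le_mul_of_nonneg_left hS1 hε'.le
      _ = 2 * ε' := by ring
  have hb2 : |∑ j ∈ Finset.Ico q m, Δ (j + 1) * Ψt j| ≤ 2 * ε' := by
    calc |∑ j ∈ Finset.Ico q m, Δ (j + 1) * Ψt j|
        ≤ ∑ j ∈ Finset.Ico q m, |Δ (j + 1) * Ψt j| := Finset.abs_sum_le_sum_abs _ _
      _ ≤ ∑ j ∈ Finset.Ico q m, ε' * Ψt j := by
          refine Finset.sum_le_sum fun j hj => ?_
          rw [Finset.mem_Ico] at hj
          rw [abs_mul, abs_of_nonneg (hΨt01 j).1]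
          exact mul_le_mul_of_nonneg_right (hΔ' j hj.2) (hΨt01 j).1
      _ = ε' * ∑ j ∈ Finset.Ico q m, Ψt j := by rw [Finset.mul_sum]
      _ ≤ ε' * 2 := mul_le_mul_of_nonneg_left hS2 hε'.le
      _ = 2 * ε' := by ring
  calc |g t - (g (s 1) + ∑ j ∈ Finset.range m, Δ (j + 1) * Ψt j)|
      = |(g t - g (s (q + 1))) + (∑ j ∈ Finset.range q, Δ (j + 1) * (1 - Ψt j)
        - ∑ j ∈ Finset.Ico q m, Δ (j + 1) * Ψt j)| := by rw [key]
    _ ≤ |g t - g (s (q + 1))| + |∑ j ∈ Finset.range q, Δ (j + 1) * (1 - Ψt j)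
        - ∑ j ∈ Finset.Ico q m, Δ (j + 1) * Ψt j| := abs_add_le _ _
    _ ≤ |g t - g (s (q + 1))| + (|∑ j ∈ Finset.range q, Δ (j + 1) * (1 - Ψt j)|
        + |∑ j ∈ Finset.Ico q m, Δ (j + 1) * Ψt j|) := by
          exact add_le_add le_rfl (abs_sub _ _)
    _ ≤ ε' + (2 * ε' + 2 * ε') := add_le_add hmesh (add_le_add hb1 hb2)
    _ = ε := by rw [hε'def]; ring

end NetAux3
section NetAux4
set_option linter.unusedSectionVars false
set_option maxHeartbeats 1000000

open MeasureTheory Filter Topology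
open scoped ENNReal NNReal

variable {X : Type*} [AddCommGroup X] [Module ℝ X] [TopologicalSpace X]
    [IsTopologicalAddGroup X] [ContinuousSMul ℝ X] [MeasurableSpace X] [BorelSpace X]
    {μ : Measure X} {p : ℝ≥0∞} {Ψ : ℝ → ℝ}

theorem NetApprox.comp [IsProbabilityMeasure μ] (hp : 1 ≤ p)
    (hΨc : Continuous Ψ) (hΨ0 : ∀ t, Ψ t ∈ Set.Icc (0 : ℝ) 1) (hΨmono : Monotone Ψ)
    (hΨtop : Tendsto Ψ atTop (nhds 1)) (hΨbot : Tendsto Ψ atBot (nhds 0))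
    {K : Set X} (hK : IsCompact K) (hsupp : μ Kᶜ = 0)
    (f : X →L[ℝ] ℝ) {g : ℝ → ℝ} (hg : Continuous g) :
    NetApprox μ p Ψ (fun x => g (f x)) := by
  have hp0 : p ≠ 0 := (zero_lt_one.trans_le hp).ne'
  apply NetApprox.of_close hp hΨc (hg.comp f.continuous).aestronglyMeasurable
  intro ε hε
  obtain ⟨c, T, hT, hclose⟩ := exists_net_unif_close hΨc hΨ0 hΨmono hΨtop hΨbot hK f hg hε
  refine ⟨fun x => c + T x,
    (continuous_const.add (hT.continuous hΨc)).aestronglyMeasurable,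
    NetApprox.add hp hΨc continuous_const.aestronglyMeasurable
      (hT.continuous hΨc).aestronglyMeasurable
      (NetApprox.const hp0 hΨtop c) (NetApprox.of_isNet hT), ?_⟩
  have hae : ∀ᵐ x ∂μ, ‖g (f x) - (c + T x)‖ ≤ ε := by
    have hK' : ∀ᵐ x ∂μ, x ∈ K := by
      rw [ae_iff]
      exact hsupp
    filter_upwards [hK'] with x hx
    rw [Real.norm_eq_abs]
    exact hclose x hx
  calc eLpNorm (fun x => g (f x) - (c + T x)) p μ
      ≤ μ Set.univ ^ p.toReal⁻¹ * ENNReal.ofReal ε := eLpNorm_le_of_ae_bound hae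
    _ = ENNReal.ofReal ε := by simp [measure_univ]

/-- Finite linear combinations of exponentials of continuous linear functionals. -/
def IsExpSum (G : X → ℝ) : Prop :=
  ∃ (n : ℕ) (c : Fin n → ℝ) (f : Fin n → (X →L[ℝ] ℝ)),
    G = fun x => ∑ i, c i * Real.exp (f i x)

theorem IsExpSum.continuous {G : X → ℝ} (hG : IsExpSum G) : Continuous G := by
  obtain ⟨n, c, f, rfl⟩ := hG
  exact continuous_finset_sum _ fun i _ =>
    continuous_const.mul (Real.continuous_exp.comp (f i).continuous)

theorem IsExpSum.add {G H : X → ℝ} (hG : IsExpSum G) (hH : IsExpSum H) :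
    IsExpSum (fun x => G x + H x) := by
  obtain ⟨n₁, c₁, f₁, rfl⟩ := hG
  obtain ⟨n₂, c₂, f₂, rfl⟩ := hH
  refine ⟨n₁ + n₂, Fin.append c₁ c₂, Fin.append f₁ f₂, ?_⟩
  funext x
  simp [Fin.sum_univ_add, Fin.append_left, Fin.append_right]

theorem isExpSum_const (r : ℝ) : IsExpSum (fun _ : X => r) := by
  refine ⟨1, fun _ => r, fun _ => 0, ?_⟩
  funext x
  simp

theorem isExpSum_exp (f : X →L[ℝ] ℝ) : IsExpSum (fun x => Real.exp (f x)) := by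
  refine ⟨1, fun _ => 1, fun _ => f, ?_⟩
  funext x
  simp

theorem IsExpSum.mul {G H : X → ℝ} (hG : IsExpSum G) (hH : IsExpSum H) :
    IsExpSum (fun x => G x * H x) := by
  obtain ⟨n₁, c₁, f₁, rfl⟩ := hG
  obtain ⟨n₂, c₂, f₂, rfl⟩ := hH
  refine ⟨n₁ * n₂,
    fun k => c₁ (finProdFinEquiv.symm k).1 * c₂ (finProdFinEquiv.symm k).2,
    fun k => f₁ (finProdFinEquiv.symm k).1 + f₂ (finProdFinEquiv.symm k).2, ?_⟩
  funext x
  beta_reduce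
  rw [Equiv.sum_comp finProdFinEquiv.symm
    (fun pr : Fin n₁ × Fin n₂ =>
      (c₁ pr.1 * c₂ pr.2) * Real.exp ((f₁ pr.1 + f₂ pr.2) x))]
  rw [Fintype.sum_prod_type, Finset.sum_mul_sum]
  refine Finset.sum_congr rfl fun i _ => Finset.sum_congr rfl fun j _ => ?_
  simp only [ContinuousLinearMap.add_apply, Real.exp_add]
  ring

theorem IsExpSum.netApprox [IsProbabilityMeasure μ] (hp : 1 ≤ p)
    (hΨc : Continuous Ψ) (hΨ0 : ∀ t, Ψ t ∈ Set.Icc (0 : ℝ) 1) (hΨmono : Monotone Ψ)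
    (hΨtop : Tendsto Ψ atTop (nhds 1)) (hΨbot : Tendsto Ψ atBot (nhds 0))
    {K : Set X} (hK : IsCompact K) (hsupp : μ Kᶜ = 0)
    {G : X → ℝ} (hG : IsExpSum G) : NetApprox μ p Ψ G := by
  obtain ⟨n, c, f, rfl⟩ := hG
  refine NetApprox.sum hp hΨc Finset.univ (fun i x => c i * Real.exp (f i x))
    (fun i _ => (continuous_const.mul
      (Real.continuous_exp.comp (f i).continuous)).aestronglyMeasurable)
    (fun i _ => ?_)
  exact NetApprox.smul (c i)
    (NetApprox.comp hp hΨc hΨ0 hΨmono hΨtop hΨbot hK hsupp (f i) Real.continuous_exp)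

end NetAux4
open MeasureTheory Filter Topology
open scoped ENNReal NNReal

set_option maxHeartbeats 1000000 in
/-- for a Radon probability measure with compact support K in a
TVS with separating dual, the neural-network class Σ_X(Ψ) is dense in L^p(K, μ). -/
theorem network_class_dense_in_Lp
    {X : Type*} [AddCommGroup X] [Module ℝ X] [TopologicalSpace X]
    [IsTopologicalAddGroup X] [ContinuousSMul ℝ X] [MeasurableSpace X] [BorelSpace X]
    (hsep : ∀ x y : X, x ≠ y → ∃ f : X →L[ℝ] ℝ, f x ≠ f y)
    (μ : Measure X) [IsProbabilityMeasure μ] (hreg : μ.InnerRegular)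
    (K : Set X) (hK : IsCompact K) (hsupp : μ Kᶜ = 0)
    (p : ℝ≥0∞) (hp : 1 ≤ p) (hp' : p ≠ ∞)
    (Ψ : ℝ → ℝ) (hΨc : Continuous Ψ) (hΨ0 : ∀ t, Ψ t ∈ Set.Icc (0 : ℝ) 1)
    (hΨmono : Monotone Ψ) (hΨtop : Tendsto Ψ atTop (nhds 1))
    (hΨbot : Tendsto Ψ atBot (nhds 0))
    (h : X → ℝ) (hh : MemLp h p μ) :
    ∀ ε : ℝ, 0 < ε → ∃ (N : ℕ) (ω b : Fin N → ℝ) (f : Fin N → (X →L[ℝ] ℝ)),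
      eLpNorm (fun x => h x - ∑ j, ω j * Ψ (f j x + b j)) p μ
        < ENNReal.ofReal ε := by
  intro ε hε
  classical
  haveI : T2Space X :=
    ⟨fun x y hxy => by
      obtain ⟨f, hf⟩ := hsep x y hxy
      exact separated_by_continuous f.continuous hf⟩
  have hKc : IsClosed K := hK.isClosed
  have hKm : MeasurableSet K := hKc.measurableSet
  have hemb : MeasurableEmbedding (Subtype.val : K → X) :=
    MeasurableEmbedding.subtype_coe hKm
  set μK : Measure K := μ.comap Subtype.val with hμKdef
  have hμKapp : ∀ s : Set K, μK s = μ (Subtype.val '' s) := fun s => hemb.comap_apply μ s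
  have haeK : ∀ᵐ x ∂μ, x ∈ K := by rw [ae_iff]; exact hsupp
  have hmap : Measure.map Subtype.val μK = μ := by
    rw [hμKdef, hemb.map_comap, Subtype.range_coe]
    exact Measure.restrict_eq_self_of_ae_mem haeK
  haveI : CompactSpace K := isCompact_iff_compactSpace.mp hK
  haveI : BorelSpace K := Subtype.borelSpace K
  haveI : IsProbabilityMeasure μK := by
    constructor
    rw [hμKapp, Set.image_univ, Subtype.range_coe]
    refine le_antisymm (measure_univ (μ := μ) ▸ measure_mono (Set.subset_univ K)) ?_
    calc (1 : ℝ≥0∞) = μ Set.univ := measure_univ.symm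
      _ ≤ μ K + μ Kᶜ := by
          rw [← Set.union_compl_self K]
          exact measure_union_le _ _
      _ = μ K := by rw [hsupp, add_zero]
  haveI : μK.InnerRegular := by
    constructor
    intro s hs r hr
    rw [hμKapp] at hr
    have hsm : MeasurableSet (Subtype.val '' s) := hemb.measurableSet_image.mpr hs
    obtain ⟨C, hCs, hCc, hCr⟩ := hreg.innerRegular hsm r hr
    have hCK : C ⊆ Set.range (Subtype.val : K → X) := by
      rw [Subtype.range_coe]
      exact hCs.trans (by rintro _ ⟨k, _, rfl⟩; exact k.2)
    refine ⟨Subtype.val ⁻¹' C, ?_, ?_, ?_⟩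
    · intro k hk
      obtain ⟨k', hk's, hk'⟩ := hCs hk
      exact Subtype.val_injective hk' ▸ hk's
    · exact hKc.isClosedEmbedding_subtypeVal.isCompact_preimage hCc
    · rw [hμKapp, Set.image_preimage_eq_inter_range,
        Set.inter_eq_self_of_subset_left hCK]
      exact hCr
  have hp0 : p ≠ 0 := (zero_lt_one.trans_le hp).ne'
  have hhK : MemLp (h ∘ Subtype.val) p μK := by
    rw [← hemb.memLp_map_measure_iff, hmap]; exact hh
  obtain ⟨g, hg_close, hgmem⟩ := hhK.exists_boundedContinuous_eLpNorm_sub_le hp'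
    (ε := ENNReal.ofReal (ε / 4)) (ENNReal.ofReal_pos.mpr (by positivity)).ne'
  -- Stone–Weierstrass for the algebra generated by exponentials of functionals
  set expCM : (X →L[ℝ] ℝ) → C(K, ℝ) := fun f =>
    ⟨fun k => Real.exp (f k),
      Real.continuous_exp.comp (f.continuous.comp continuous_subtype_val)⟩ with hexpCM
  set A : Subalgebra ℝ C(K, ℝ) := Algebra.adjoin ℝ (Set.range expCM) with hAdef
  have hA_sep : A.SeparatesPoints := by
    intro x y hxy
    obtain ⟨f, hf⟩ := hsep x.val y.val (fun hc => hxy (Subtype.ext hc))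
    refine ⟨⇑(expCM f), ⟨expCM f, Algebra.subset_adjoin ⟨f, rfl⟩, rfl⟩, ?_⟩
    exact fun hc => hf (Real.exp_injective hc)
  have hA_top : A.topologicalClosure = ⊤ :=
    ContinuousMap.subalgebra_topologicalClosure_eq_top_of_separatesPoints A hA_sep
  have hφmem : (g.toContinuousMap : C(K, ℝ)) ∈ closure (A : Set C(K, ℝ)) := by
    rw [← Subalgebra.topologicalClosure_coe, hA_top]
    simp
  obtain ⟨ψ, hψA, hψd⟩ := Metric.mem_closure_iff.mp hφmem (ε / 4) (by positivity)
  -- every element of the algebra extends to an exponential sum on X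
  have hext : ∀ ψ' ∈ A, ∃ G : X → ℝ, IsExpSum G ∧ ∀ k : K, ψ' k = G k := by
    intro ψ' hψ'
    refine Algebra.adjoin_induction ?_ ?_ ?_ ?_ hψ'
    · rintro φ ⟨f, rfl⟩
      exact ⟨fun x => Real.exp (f x), isExpSum_exp f, fun k => rfl⟩
    · intro r
      exact ⟨fun _ => r, isExpSum_const r, fun k => rfl⟩
    · rintro φ₁ φ₂ hφ₁ hφ₂ ⟨G₁, hG₁, he₁⟩ ⟨G₂, hG₂, he₂⟩
      exact ⟨fun x => G₁ x + G₂ x, hG₁.add hG₂, fun k => by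
        simp [ContinuousMap.add_apply, he₁ k, he₂ k]⟩
    · rintro φ₁ φ₂ hφ₁ hφ₂ ⟨G₁, hG₁, he₁⟩ ⟨G₂, hG₂, he₂⟩
      exact ⟨fun x => G₁ x * G₂ x, hG₁.mul hG₂, fun k => by
        simp [ContinuousMap.mul_apply, he₁ k, he₂ k]⟩
  obtain ⟨G, hGexp, hGeq⟩ := hext ψ hψA
  have hGm : AEStronglyMeasurable G μ := hGexp.continuous.aestronglyMeasurable
  -- network approximating G
  obtain ⟨T, hT, hTe⟩ :=
    (hGexp.netApprox hp hΨc hΨ0 hΨmono hΨtop hΨbot hK hsupp) (ε / 4) (by positivity)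
  have hTcont : Continuous T := hT.continuous hΨc
  -- transfer : ‖h - G‖_p over μ ≤ ε/4 + ε/4
  have htrans : eLpNorm (fun x => h x - G x) p μ
      = eLpNorm ((fun x => h x - G x) ∘ Subtype.val) p μK := by
    rw [← hmap]
    exact eLpNorm_map_measure (by rw [hmap]; exact hh.1.sub hGm)
      measurable_subtype_coe.aemeasurable
  have hmid : eLpNorm (fun k : K => g k - G ↑k) p μK ≤ ENNReal.ofReal (ε / 4) := by
    have hbd : ∀ᵐ k ∂μK, ‖g k - G ↑k‖ ≤ ε / 4 := by
      refine Filter.Eventually.of_forall fun k => ?_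
      have hd := ContinuousMap.dist_apply_le_dist (f := g.toContinuousMap) (g := ψ) k
      rw [Real.dist_eq] at hd
      have heq : g k - G ↑k = g k - ψ k := by rw [hGeq k]
      rw [heq, Real.norm_eq_abs]
      exact hd.trans hψd.le
    calc eLpNorm (fun k : K => g k - G ↑k) p μK
        ≤ μK Set.univ ^ p.toReal⁻¹ * ENNReal.ofReal (ε / 4) := eLpNorm_le_of_ae_bound hbd
      _ = ENNReal.ofReal (ε / 4) := by simp [measure_univ]
  have h1 : eLpNorm (fun x => h x - G x) p μ
      ≤ ENNReal.ofReal (ε / 4) + ENNReal.ofReal (ε / 4) := by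
    rw [htrans]
    have hsplit : ((fun x => h x - G x) ∘ Subtype.val)
        = ((h ∘ Subtype.val) - ⇑g) + fun k : K => g k - G ↑k := by
      funext k
      simp only [Function.comp, Pi.add_apply, Pi.sub_apply]
      ring
    rw [hsplit]
    refine le_trans (eLpNorm_add_le ?_ ?_ hp) (add_le_add hg_close hmid)
    · exact hhK.1.sub g.continuous.aestronglyMeasurable
    · exact (g.continuous.sub (hGexp.continuous.comp continuous_subtype_val)).aestronglyMeasurable
  have hfinal : eLpNorm (fun x => h x - T x) p μ < ENNReal.ofReal ε := by
    have hsplit2 : (fun x => h x - T x)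
        = (fun x => h x - G x) + fun x => G x - T x := by
      funext x; simp only [Pi.add_apply]; ring
    calc eLpNorm (fun x => h x - T x) p μ
        ≤ eLpNorm (fun x => h x - G x) p μ + eLpNorm (fun x => G x - T x) p μ := by
          rw [hsplit2]
          exact eLpNorm_add_le (hh.1.sub hGm) (hGm.sub hTcont.aestronglyMeasurable) hp
      _ < (ENNReal.ofReal (ε / 4) + ENNReal.ofReal (ε / 4)) + ENNReal.ofReal (ε / 4) :=
          ENNReal.add_lt_add_of_le_of_lt
            (ne_top_of_le_ne_top (by simp) h1) h1 hTe
      _ ≤ ENNReal.ofReal ε := by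
          rw [← ENNReal.ofReal_add (by positivity) (by positivity),
            ← ENNReal.ofReal_add (by positivity) (by positivity)]
          exact ENNReal.ofReal_le_ofReal (by linarith)
  obtain ⟨N, ω, b, fs, hTdef⟩ := hT
  refine ⟨N, ω, b, fs, ?_⟩
  rw [hTdef] at hfinal
  exact hfinal
end

section
/- Let X be a real Banach space, μ a Radon probability measure with compact support K ⊆ X, 1 ≤ p < ∞, and Ψ : ℝ → ℝ a continuous squashing function. Then finite linear combinations of functions x ↦ Ψ(f(x) + b), with f ∈ X* and b ∈ ℝ, are dense in L^p(K, μ). -/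
open MeasureTheory Filter Topology
open scoped ENNReal NNReal

set_option maxHeartbeats 1000000 in
lemma onedim_main (Ψ : ℝ → ℝ) (hΨ0 : ∀ t, Ψ t ∈ Set.Icc (0:ℝ) 1)
    (hΨtop : Tendsto Ψ atTop (nhds 1)) (hΨbot : Tendsto Ψ atBot (nhds 0))
    (φ : ℝ → ℝ) (hφ : Continuous φ) (a b : ℝ) (hab : a < b) (ε : ℝ) (hε : 0 < ε)
    (hconst : ∀ cst : ℝ, (fun _ : ℝ => cst) ∈
      Submodule.span ℝ {g : ℝ → ℝ | ∃ s c : ℝ, g = fun t => Ψ (s * t + c)}) :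
    ∃ u ∈ Submodule.span ℝ {g : ℝ → ℝ | ∃ s c : ℝ, g = fun t => Ψ (s * t + c)},
      ∀ t ∈ Set.Icc a b, |φ t - u t| ≤ ε := by
  obtain ⟨δ, hδ, hδ'⟩ : ∃ δ > 0, ∀ x ∈ Set.Icc a b, ∀ y ∈ Set.Icc a b,
      dist x y < δ → dist (φ x) (φ y) < ε/4 := by
    have := (isCompact_Icc (a := a) (b := b)).uniformContinuousOn_of_continuous
      hφ.continuousOn
    rw [Metric.uniformContinuousOn_iff] at this
    exact this (ε/4) (by linarith)
  obtain ⟨m, hm⟩ := exists_nat_gt (max 1 ((b - a)/δ))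
  have hm1 : 1 ≤ m := by
    have := (le_max_left 1 ((b-a)/δ)).trans hm.le
    exact_mod_cast Nat.one_le_cast.mp (by exact_mod_cast this)
  have hm0 : (0:ℝ) < m := by positivity
  set h₀ : ℝ := (b - a)/m with hh₀
  have hh₀pos : 0 < h₀ := div_pos (by linarith) hm0
  have hh₀δ : h₀ < δ := by
    rw [hh₀, div_lt_iff₀ hm0]
    have h2 : (b-a)/δ < m := (le_max_right 1 _).trans_lt hm
    rw [div_lt_iff₀ hδ] at h2
    linarith
  set x : ℕ → ℝ := fun i => a + i * h₀ with hxdef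
  have hxm : x m = b := by
    simp only [hxdef, hh₀]; field_simp; ring
  have hxIcc : ∀ i ≤ m, x i ∈ Set.Icc a b := by
    intro i hi
    constructor
    · simp only [hxdef]; nlinarith [Nat.cast_nonneg (α := ℝ) i]
    · rw [← hxm]
      simp only [hxdef, add_le_add_iff_left]
      have : (i:ℝ) ≤ m := by exact_mod_cast hi
      nlinarith
  set d : ℕ → ℝ := fun i => φ (x (i+1)) - φ (x i) with hddef
  have hdsmall : ∀ i < m, |d i| ≤ ε/4 := by
    intro i hi
    have h1 := hδ' (x (i+1)) (hxIcc _ hi) (x i) (hxIcc _ (le_of_lt hi))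
    rw [Real.dist_eq, Real.dist_eq] at h1
    have hx1 : x (i+1) - x i = h₀ := by simp only [hxdef]; push_cast; ring
    have := h1 (by rw [hx1, abs_of_pos hh₀pos]; exact hh₀δ)
    exact this.le
  set Dsum : ℝ := ∑ i ∈ Finset.range m, |d i| with hDdef
  have hDnn : 0 ≤ Dsum := Finset.sum_nonneg fun i _ => abs_nonneg _
  set η : ℝ := ε/(4*(Dsum+1)) with hηdef
  have hη : 0 < η := by positivity
  obtain ⟨T₁, hT₁⟩ : ∃ T₁, ∀ u ≥ T₁, 1 - η ≤ Ψ u := by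
    have := hΨtop.eventually (eventually_ge_nhds (show 1 - η < 1 by linarith))
    exact eventually_atTop.mp this
  obtain ⟨T₂, hT₂⟩ : ∃ T₂, ∀ u ≤ T₂, Ψ u ≤ η := by
    have := hΨbot.eventually (eventually_le_nhds hη)
    exact eventually_atBot.mp this
  set T : ℝ := max T₁ (max (-T₂) 1) with hTdef
  have hT0 : 0 < T := lt_of_lt_of_le one_pos ((le_max_right _ _).trans (le_max_right _ _))
  set r : ℝ := h₀/2 with hrdef
  have hr : 0 < r := by positivity
  set s : ℝ := T / r with hsdef
  have hs : 0 < s := by positivity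
  have hsr : s * r = T := by rw [hsdef]; field_simp
  have hΨhi : ∀ v : ℝ, r ≤ v → 1 - η ≤ Ψ (s * v) := by
    intro v hv
    refine hT₁ _ ?_
    have : T ≤ s * v := by rw [← hsr]; nlinarith
    exact le_trans (le_max_left _ _) this
  have hΨlo : ∀ v : ℝ, v ≤ -r → Ψ (s * v) ≤ η := by
    intro v hv
    refine hT₂ _ ?_
    have h1 : s * v ≤ -T := by rw [← hsr]; nlinarith
    have h2 : -T ≤ T₂ := by
      have : -T₂ ≤ T := (le_max_left _ _).trans (le_max_right _ _)
      linarith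
    linarith
  set c : ℕ → ℝ := fun i => -(s * x (i+1)) with hcdef
  set u : ℝ → ℝ := fun t => φ a + ∑ i ∈ Finset.range m, d i * Ψ (s * t + c i) with hudef
  refine ⟨u, ?_, ?_⟩
  · have : u = (fun _ : ℝ => φ a) + ∑ i ∈ Finset.range m, d i • (fun t => Ψ (s * t + c i)) := by
      funext t
      simp [hudef, Finset.sum_apply]
    rw [this]
    exact Submodule.add_mem _ (hconst _)
      (Submodule.sum_mem _ fun i _ => Submodule.smul_mem _ _
        (Submodule.subset_span ⟨s, c i, rfl⟩))
  · intro t ht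
    set j : ℕ := min m ⌊(t - a)/h₀⌋₊ with hjdef
    have hta : 0 ≤ (t - a)/h₀ := div_nonneg (by linarith [ht.1]) hh₀pos.le
    have hjm : j ≤ m := min_le_left _ _
    have hxjt : x j ≤ t := by
      have h1 : (j:ℝ) ≤ (t - a)/h₀ := by
        have : (j:ℕ) ≤ ⌊(t - a)/h₀⌋₊ := min_le_right _ _
        calc (j:ℝ) ≤ (⌊(t - a)/h₀⌋₊ : ℝ) := by exact_mod_cast this
          _ ≤ (t - a)/h₀ := Nat.floor_le hta
      have h2 := (le_div_iff₀ hh₀pos).mp h1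
      simp only [hxdef]
      linarith
    have htxj : t - x j < δ := by
      rcases le_or_gt m ⌊(t - a)/h₀⌋₊ with hc1 | hc1
      · have hjeq : j = m := by omega
        rw [hjeq, hxm]
        linarith [ht.2]
      · have hjeq : j = ⌊(t - a)/h₀⌋₊ := by omega
        have h2 : (t - a)/h₀ < (j:ℝ) + 1 := by
          rw [hjeq]
          have := Nat.lt_floor_add_one ((t - a)/h₀)
          push_cast
          push_cast at this
          exact this
        rw [div_lt_iff₀ hh₀pos] at h2
        simp only [hxdef]
        nlinarith
    have hφj : |φ t - φ (x j)| ≤ ε/4 := by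
      have := hδ' t ht (x j) (hxIcc _ hjm)
      rw [Real.dist_eq, Real.dist_eq] at this
      have h3 : |t - x j| < δ := by
        rw [abs_of_nonneg (by linarith)]
        exact htxj
      exact (this h3).le
    set H : ℕ → ℝ := fun i => if x (i+1) ≤ t then 1 else 0 with hHdef
    have hkey : ∀ i < m, (x (i+1) ≤ t ↔ i + 1 ≤ j) := by
      intro i hi
      have e1 : x (i+1) ≤ t ↔ ((i:ℝ) + 1) ≤ (t - a)/h₀ := by
        rw [le_div_iff₀ hh₀pos]
        simp only [hxdef]
        push_cast
        constructor <;> intro hh <;> linarith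
      rw [e1]
      have e2 : ((i:ℝ) + 1) ≤ (t - a)/h₀ ↔ i + 1 ≤ ⌊(t - a)/h₀⌋₊ := by
        rw [Nat.le_floor_iff hta]
        push_cast
        rfl
      rw [e2, hjdef]
      omega
    have hHsum : ∑ i ∈ Finset.range m, d i * H i = φ (x j) - φ a := by
      have e3 : ∀ i ∈ Finset.range m, d i * H i = if x (i+1) ≤ t then d i else 0 := by
        intro i _
        simp only [hHdef]
        split <;> simp
      rw [Finset.sum_congr rfl e3, Finset.sum_ite, Finset.sum_const_zero, add_zero]
      have e4 : (Finset.range m).filter (fun i => x (i+1) ≤ t) = Finset.range j := by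
        ext i
        simp only [Finset.mem_filter, Finset.mem_range]
        constructor
        · rintro ⟨hi, hxi⟩
          have := (hkey i hi).mp hxi
          omega
        · intro hi
          have him : i < m := lt_of_lt_of_le hi hjm
          exact ⟨him, (hkey i him).mpr (by omega)⟩
      rw [e4]
      have := Finset.sum_range_sub (fun i => φ (x i)) j
      simp only [hddef]
      rw [this]
      simp [hxdef]
    -- error sum
    have herr : |∑ i ∈ Finset.range m, d i * (Ψ (s * t + c i) - H i)| ≤ ε/2 := by
      have habs : ∀ i ∈ Finset.range m, |d i * (Ψ (s * t + c i) - H i)|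
          = |d i| * |Ψ (s * t + c i) - H i| := fun i _ => abs_mul _ _
      calc |∑ i ∈ Finset.range m, d i * (Ψ (s * t + c i) - H i)|
          ≤ ∑ i ∈ Finset.range m, |d i * (Ψ (s * t + c i) - H i)| :=
            Finset.abs_sum_le_sum_abs _ _
        _ = ∑ i ∈ Finset.range m, |d i| * |Ψ (s * t + c i) - H i| :=
            Finset.sum_congr rfl habs
        _ ≤ ε/2 := ?_
      have hsplit := Finset.sum_filter_add_sum_filter_not (Finset.range m)
        (fun i => |t - x (i+1)| < r) (fun i => |d i| * |Ψ (s * t + c i) - H i|)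
      rw [← hsplit]
      have hΨarg : ∀ i, s * t + c i = s * (t - x (i+1)) := by
        intro i; simp only [hcdef]; ring
      -- near part
      have hnear_card : ((Finset.range m).filter (fun i => |t - x (i+1)| < r)).card ≤ 1 := by
        rw [Finset.card_le_one]
        intro i₁ h₁ i₂ h₂
        simp only [Finset.mem_filter, Finset.mem_range] at h₁ h₂
        by_contra hne
        have hge : (1:ℝ) ≤ |(i₁:ℝ) - (i₂:ℝ)| := by
          have h1 : i₁ + 1 ≤ i₂ ∨ i₂ + 1 ≤ i₁ := by omega
          rcases h1 with h1 | h1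
          · have h2 : (i₁:ℝ) + 1 ≤ i₂ := by exact_mod_cast h1
            rw [abs_sub_comm, abs_of_nonneg (by linarith)]; linarith
          · have h2 : (i₂:ℝ) + 1 ≤ i₁ := by exact_mod_cast h1
            rw [abs_of_nonneg (by linarith)]; linarith
        have hxx : |x (i₁+1) - x (i₂+1)| = |(i₁:ℝ) - (i₂:ℝ)| * h₀ := by
          have e : x (i₁+1) - x (i₂+1) = ((i₁:ℝ) - (i₂:ℝ)) * h₀ := by
            simp only [hxdef]; push_cast; ring
          rw [e, abs_mul, abs_of_pos hh₀pos]
        have h5 : |x (i₁+1) - x (i₂+1)| < 2 * r := by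
          have e2 : x (i₁+1) - x (i₂+1) = (t - x (i₂+1)) - (t - x (i₁+1)) := by ring
          calc |x (i₁+1) - x (i₂+1)| = |(t - x (i₂+1)) - (t - x (i₁+1))| := by rw [e2]
            _ ≤ |t - x (i₂+1)| + |t - x (i₁+1)| := abs_sub _ _
            _ < 2 * r := by linarith [h₁.2, h₂.2]
        rw [hxx] at h5
        have h2r : 2 * r = h₀ := by rw [hrdef]; ring
        have h6 := mul_le_mul_of_nonneg_right hge hh₀pos.le
        rw [one_mul] at h6
        linarith
      have hnear : ∑ i ∈ (Finset.range m).filter (fun i => |t - x (i+1)| < r),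
          |d i| * |Ψ (s * t + c i) - H i| ≤ ε/4 := by
        have hterm : ∀ i ∈ (Finset.range m).filter (fun i => |t - x (i+1)| < r),
            |d i| * |Ψ (s * t + c i) - H i| ≤ ε/4 := by
          intro i hi
          simp only [Finset.mem_filter, Finset.mem_range] at hi
          have h6 : |Ψ (s * t + c i) - H i| ≤ 1 := by
            have hΨi := hΨ0 (s * t + c i)
            simp only [hHdef]
            split <;> rw [abs_le] <;> constructor <;> linarith [hΨi.1, hΨi.2]
          calc |d i| * |Ψ (s * t + c i) - H i| ≤ (ε/4) * 1 :=
            mul_le_mul (hdsmall i hi.1) h6 (abs_nonneg _) (by linarith)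
          _ = ε/4 := by ring
        calc ∑ i ∈ (Finset.range m).filter (fun i => |t - x (i+1)| < r),
              |d i| * |Ψ (s * t + c i) - H i|
            ≤ ∑ _i ∈ (Finset.range m).filter (fun i => |t - x (i+1)| < r), (ε/4) :=
              Finset.sum_le_sum hterm
          _ = ((Finset.range m).filter (fun i => |t - x (i+1)| < r)).card * (ε/4) := by
              rw [Finset.sum_const]; ring
          _ ≤ 1 * (ε/4) := by
              apply mul_le_mul_of_nonneg_right _ (by linarith)
              exact_mod_cast hnear_card
          _ = ε/4 := by ring
      have hfar : ∑ i ∈ (Finset.range m).filter (fun i => ¬ |t - x (i+1)| < r),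
          |d i| * |Ψ (s * t + c i) - H i| ≤ ε/4 := by
        have hterm : ∀ i ∈ (Finset.range m).filter (fun i => ¬ |t - x (i+1)| < r),
            |d i| * |Ψ (s * t + c i) - H i| ≤ |d i| * η := by
          intro i hi
          simp only [Finset.mem_filter, Finset.mem_range, not_lt] at hi
          apply mul_le_mul_of_nonneg_left _ (abs_nonneg _)
          rw [hΨarg i]
          rcases le_or_gt (x (i+1)) t with hle | hlt
          · have h7 : r ≤ t - x (i+1) := by
              rcases abs_cases (t - x (i+1)) with h8 | h8
              · linarith [hi.2, h8.1]
              · linarith [hi.2, h8.1]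
            have h9 := hΨhi _ h7
            have h10 := (hΨ0 (s * (t - x (i+1)))).2
            simp only [hHdef, if_pos hle]
            rw [abs_le]
            constructor <;> linarith
          · have h7 : t - x (i+1) ≤ -r := by
              rcases abs_cases (t - x (i+1)) with h8 | h8
              · linarith [hi.2, h8.1]
              · linarith [hi.2, h8.1]
            have h9 := hΨlo _ h7
            have h10 := (hΨ0 (s * (t - x (i+1)))).1
            simp only [hHdef, if_neg (not_le.mpr hlt)]
            rw [sub_zero, abs_le]
            constructor <;> linarith
        calc ∑ i ∈ (Finset.range m).filter (fun i => ¬ |t - x (i+1)| < r),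
              |d i| * |Ψ (s * t + c i) - H i|
            ≤ ∑ i ∈ (Finset.range m).filter (fun i => ¬ |t - x (i+1)| < r), |d i| * η :=
              Finset.sum_le_sum hterm
          _ ≤ ∑ i ∈ Finset.range m, |d i| * η := by
              apply Finset.sum_le_sum_of_subset_of_nonneg (Finset.filter_subset _ _)
              intro i _ _
              positivity
          _ = Dsum * η := by rw [hDdef, ← Finset.sum_mul]
          _ ≤ ε/4 := by
              have he : (Dsum + 1) * η = ε/4 := by
                rw [hηdef]; field_simp
              have h12 := mul_le_mul_of_nonneg_right (show Dsum ≤ Dsum + 1 by linarith) hη.le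
              linarith
      linarith
    -- put everything together
    have hdecomp : u t - φ t = (φ (x j) - φ t)
        + ∑ i ∈ Finset.range m, d i * (Ψ (s * t + c i) - H i) := by
      simp only [hudef]
      have : ∑ i ∈ Finset.range m, d i * (Ψ (s * t + c i) - H i)
          = (∑ i ∈ Finset.range m, d i * Ψ (s * t + c i))
            - ∑ i ∈ Finset.range m, d i * H i := by
        rw [← Finset.sum_sub_distrib]
        congr 1; funext i; ring
      rw [this, hHsum]
      ring
    rw [abs_sub_comm]
    calc |u t - φ t| = |(φ (x j) - φ t)
        + ∑ i ∈ Finset.range m, d i * (Ψ (s * t + c i) - H i)| := by rw [hdecomp]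
      _ ≤ |φ (x j) - φ t| + |∑ i ∈ Finset.range m, d i * (Ψ (s * t + c i) - H i)| :=
          abs_add_le _ _
      _ ≤ ε/4 + ε/2 := by
          have := hφj
          rw [abs_sub_comm] at this
          exact add_le_add this herr
      _ ≤ ε := by linarith


lemma onedim_approx (Ψ : ℝ → ℝ) (hΨ0 : ∀ t, Ψ t ∈ Set.Icc (0:ℝ) 1)
    (hΨtop : Tendsto Ψ atTop (nhds 1)) (hΨbot : Tendsto Ψ atBot (nhds 0))
    (φ : ℝ → ℝ) (hφ : Continuous φ) (a b : ℝ) (ε : ℝ) (hε : 0 < ε) :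
    ∃ u ∈ Submodule.span ℝ {g : ℝ → ℝ | ∃ s c : ℝ, g = fun t => Ψ (s * t + c)},
      ∀ t ∈ Set.Icc a b, |φ t - u t| ≤ ε := by
  -- a positive point of Ψ
  obtain ⟨b₀, hb₀⟩ : ∃ b₀, 0 < Ψ b₀ := by
    have := hΨtop.eventually (eventually_gt_nhds (show (1:ℝ)/2 < 1 by norm_num))
    rcases (this.and (eventually_ge_atTop 0)).exists with ⟨b₀, h1, _⟩
    exact ⟨b₀, lt_trans (by norm_num) h1⟩
  have hconst : ∀ cst : ℝ, (fun _ : ℝ => cst) ∈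
      Submodule.span ℝ {g : ℝ → ℝ | ∃ s c : ℝ, g = fun t => Ψ (s * t + c)} := by
    intro cst
    have hmem : (fun t : ℝ => Ψ (0 * t + b₀)) ∈
        {g : ℝ → ℝ | ∃ s c : ℝ, g = fun t => Ψ (s * t + c)} := ⟨0, b₀, rfl⟩
    have := Submodule.smul_mem _ (cst / Ψ b₀) (Submodule.subset_span hmem)
    convert this using 1
    funext t
    simp only [Pi.smul_apply, smul_eq_mul, zero_mul, zero_add]
    field_simp
  rcases lt_or_ge b a with hab | hab
  · exact ⟨0, Submodule.zero_mem _, fun t ht => absurd (ht.1.trans ht.2) (not_le.mpr hab)⟩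
  rcases eq_or_lt_of_le hab with rfl | hab
  · refine ⟨(fun _ => φ a), hconst _, fun t ht => ?_⟩
    have : t = a := le_antisymm ht.2 ht.1
    simp [this, hε.le]
  exact onedim_main Ψ hΨ0 hΨtop hΨbot φ hφ a b hab ε hε hconst

/-- Banach-space case of L^p-density of the neural-network class
for a Radon probability measure with compact support. -/
theorem network_class_dense_in_Lp_banach
    {X : Type*} [NormedAddCommGroup X] [NormedSpace ℝ X] [CompleteSpace X]
    [MeasurableSpace X] [BorelSpace X]
    (μ : Measure X) [IsProbabilityMeasure μ] (hreg : μ.InnerRegular)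
    (K : Set X) (hK : IsCompact K) (hsupp : μ Kᶜ = 0)
    (p : ℝ≥0∞) (hp : 1 ≤ p) (hp' : p ≠ ∞)
    (Ψ : ℝ → ℝ) (hΨc : Continuous Ψ) (hΨ0 : ∀ t, Ψ t ∈ Set.Icc (0 : ℝ) 1)
    (hΨmono : Monotone Ψ) (hΨtop : Tendsto Ψ atTop (nhds 1))
    (hΨbot : Tendsto Ψ atBot (nhds 0))
    (h : X → ℝ) (hh : MemLp h p μ) :
    ∀ ε : ℝ, 0 < ε → ∃ (N : ℕ) (ω b : Fin N → ℝ) (f : Fin N → (X →L[ℝ] ℝ)),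
      eLpNorm (fun x => h x - ∑ j, ω j * Ψ (f j x + b j)) p μ
        < ENNReal.ofReal ε := by
  intro ε hε
  set VX : Set (X → ℝ) :=
    {g : X → ℝ | ∃ (fc : X →L[ℝ] ℝ) (bb : ℝ), g = fun x => Ψ (fc x + bb)} with hVXdef
  -- Step A: every element of the span of VX approximates exp ∘ f etc; first key claim:
  -- for each continuous linear functional f and η > 0, exp ∘ f is approximable on K
  have expapprox : ∀ (f : X →L[ℝ] ℝ) (η : ℝ), 0 < η →
      ∃ v ∈ Submodule.span ℝ VX, ∀ x ∈ K, |Real.exp (f x) - v x| ≤ η := by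
    intro f η hη
    obtain ⟨M, hM⟩ : ∃ M, ∀ x ∈ K, ‖f x‖ ≤ M := hK.exists_bound_of_continuousOn
      (f.continuous.continuousOn)
    obtain ⟨u₁, hu₁span, hu₁⟩ := onedim_approx Ψ hΨ0 hΨtop hΨbot Real.exp
      Real.continuous_exp (-M) M η hη
    -- transport along precomposition with f
    let L : (ℝ → ℝ) →ₗ[ℝ] (X → ℝ) :=
      { toFun := fun u => u ∘ f, map_add' := fun _ _ => rfl, map_smul' := fun _ _ => rfl }
    refine ⟨L u₁, ?_, ?_⟩
    · have h1 : L u₁ ∈ Submodule.map L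
          (Submodule.span ℝ {g : ℝ → ℝ | ∃ s c : ℝ, g = fun t => Ψ (s * t + c)}) :=
        Submodule.mem_map_of_mem hu₁span
      rw [Submodule.map_span] at h1
      refine Submodule.span_mono ?_ h1
      rintro _ ⟨g, ⟨s, cc, rfl⟩, rfl⟩
      refine ⟨s • f, cc, ?_⟩
      funext x
      simp [L, Function.comp]
    · intro x hx
      have hfx : f x ∈ Set.Icc (-M) M := by
        have := hM x hx
        rw [Real.norm_eq_abs, abs_le] at this
        exact this
      exact hu₁ (f x) hfx
  -- Step B: Stone-Weierstrass setup on K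
  haveI : CompactSpace K := isCompact_iff_compactSpace.mp hK
  let E : (X →L[ℝ] ℝ) → C(K, ℝ) := fun f =>
    ⟨fun x => Real.exp (f x), Real.continuous_exp.comp (f.continuous.comp continuous_subtype_val)⟩
  let Mo : Submonoid C(K, ℝ) :=
    { carrier := Set.range E
      one_mem' := ⟨0, by ext x; simp [E]⟩
      mul_mem' := by
        rintro _ _ ⟨f, rfl⟩ ⟨g, rfl⟩
        exact ⟨f + g, by ext x; simp [E, Real.exp_add]⟩ }
  have hsep : (Algebra.adjoin ℝ (Set.range E)).SeparatesPoints := by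
    intro x y hxy
    obtain ⟨f, hf⟩ := SeparatingDual.exists_separating_of_ne (R := ℝ)
      (show (x : X) ≠ (y : X) from fun hc => hxy (Subtype.ext hc))
    refine ⟨(E f : K → ℝ), ⟨E f, Algebra.subset_adjoin ⟨f, rfl⟩, rfl⟩, ?_⟩
    simp only [E, ContinuousMap.coe_mk]
    exact fun hc => hf (Real.exp_injective hc)
  -- Step C: given the continuous bounded g from Lp approximation, approximate on K
  obtain ⟨g, hg, hgmem⟩ := hh.exists_boundedContinuous_eLpNorm_sub_le hp'
    (show ENNReal.ofReal (ε/4) ≠ 0 by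
      simp only [ne_eq, ENNReal.ofReal_eq_zero, not_le]; linarith)
  set gK : C(K, ℝ) := ⟨fun x => g x, g.continuous.comp continuous_subtype_val⟩ with hgKdef
  obtain ⟨⟨P, hPA⟩, hP⟩ := ContinuousMap.exists_mem_subalgebra_near_continuousMap_of_separatesPoints
    (Algebra.adjoin ℝ (Set.range E)) hsep gK (ε/8) (by linarith)
  -- P is in the span of range E
  have hPspan : P ∈ Submodule.span ℝ (Set.range E) := by
    have h1 : P ∈ Subalgebra.toSubmodule (Algebra.adjoin ℝ (Set.range E)) := hPA
    rw [Algebra.adjoin_eq_span] at h1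
    have h2 : (Submonoid.closure (Set.range E) : Set C(K, ℝ)) = Set.range E := by
      have : Submonoid.closure (Set.range E) = Mo :=
        Submonoid.closure_eq (S := Mo)
      rw [this]
      rfl
    rwa [← h2]
  obtain ⟨n, cf, q, hq⟩ := Submodule.mem_span_set'.mp hPspan
  -- approximate each exp functional appearing in P
  have hqE : ∀ i : Fin n, ∃ fi : X →L[ℝ] ℝ, E fi = (q i : C(K, ℝ)) :=
    fun i => Set.mem_range.mp (q i).2
  choose fi hfi using hqE
  set Csum : ℝ := ∑ i, |cf i| with hCdef
  have hCnn : 0 ≤ Csum := Finset.sum_nonneg fun i _ => abs_nonneg _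
  set η : ℝ := (ε/8)/(Csum + 1) with hηdef
  have hη : 0 < η := by positivity
  have happ : ∀ i : Fin n, ∃ v ∈ Submodule.span ℝ VX,
      ∀ x ∈ K, |Real.exp (fi i x) - v x| ≤ η := fun i => expapprox (fi i) η hη
  choose v hvspan hv using happ
  set u : X → ℝ := fun x => ∑ i, cf i * v i x with hudef
  have huspan : u ∈ Submodule.span ℝ VX := by
    have : u = ∑ i, cf i • v i := by
      funext x
      simp [hudef, Finset.sum_apply]
    rw [this]
    exact Submodule.sum_mem _ fun i _ => Submodule.smul_mem _ _ (hvspan i)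
  -- bound |P - u| on K
  have hPu : ∀ (x : X) (hx : x ∈ K), |P ⟨x, hx⟩ - u x| ≤ ε/8 := by
    intro x hx
    have hPx : P ⟨x, hx⟩ = ∑ i, cf i * Real.exp (fi i x) := by
      rw [← hq, ContinuousMap.sum_apply]
      apply Finset.sum_congr rfl
      intro i _
      rw [ContinuousMap.smul_apply, smul_eq_mul, ← hfi i]
      simp [E]
    rw [hPx]
    have : ∑ i, cf i * Real.exp (fi i x) - u x
        = ∑ i, cf i * (Real.exp (fi i x) - v i x) := by
      simp only [hudef, ← Finset.sum_sub_distrib]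
      congr 1; funext i; ring
    rw [this]
    calc |∑ i, cf i * (Real.exp (fi i x) - v i x)|
        ≤ ∑ i, |cf i * (Real.exp (fi i x) - v i x)| := Finset.abs_sum_le_sum_abs _ _
      _ ≤ ∑ i, |cf i| * η := by
          apply Finset.sum_le_sum
          intro i _
          rw [abs_mul]
          exact mul_le_mul_of_nonneg_left (hv i x hx) (abs_nonneg _)
      _ = Csum * η := by rw [hCdef, Finset.sum_mul]
      _ ≤ ε/8 := by
          have he : (Csum + 1) * η = ε/8 := by rw [hηdef]; field_simp
          have h12 := mul_le_mul_of_nonneg_right (show Csum ≤ Csum + 1 by linarith) hη.le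
          linarith
  -- bound |g - u| on K
  have hgu : ∀ x ∈ K, |g x - u x| ≤ ε/4 := by
    intro x hx
    have h1 : |g x - P ⟨x, hx⟩| ≤ ε/8 := by
      have h2 := hP
      rw [ContinuousMap.norm_lt_iff _ (by linarith : (0:ℝ) < ε/8)] at h2
      have h3 := h2 ⟨x, hx⟩
      rw [ContinuousMap.sub_apply] at h3
      simp only [hgKdef, ContinuousMap.coe_mk] at h3
      rw [Real.norm_eq_abs, abs_sub_comm] at h3
      exact h3.le
    calc |g x - u x| ≤ |g x - P ⟨x, hx⟩| + |P ⟨x, hx⟩ - u x| := abs_sub_le _ _ _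
      _ ≤ ε/8 + ε/8 := add_le_add h1 (hPu x hx)
      _ = ε/4 := by ring
  -- extract the final network from u ∈ span VX
  obtain ⟨N, ω, gq, hgq⟩ := Submodule.mem_span_set'.mp huspan
  have hgqVX : ∀ j : Fin N, ∃ (fc : X →L[ℝ] ℝ) (bb : ℝ),
      (gq j : X → ℝ) = fun x => Ψ (fc x + bb) := fun j => (gq j).2
  choose fc bb hfc using hgqVX
  refine ⟨N, ω, bb, fc, ?_⟩
  have hF0 : (fun x => ∑ j, ω j * Ψ (fc j x + bb j)) = u := by
    funext x
    rw [← hgq]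
    rw [Finset.sum_apply]
    congr 1
    funext j
    rw [Pi.smul_apply, smul_eq_mul, hfc j]
  -- now the Lp estimate
  set F0 : X → ℝ := fun x => ∑ j, ω j * Ψ (fc j x + bb j) with hF0def
  have hF0cont : Continuous F0 := by
    apply continuous_finset_sum
    intro j _
    exact continuous_const.mul (hΨc.comp ((fc j).continuous.add continuous_const))
  have haeK : ∀ᵐ x ∂μ, x ∈ K := by
    rw [ae_iff]
    exact hsupp
  have hbound : eLpNorm (fun x => g x - F0 x) p μ ≤ ENNReal.ofReal (ε/4) := by
    have h1 : ∀ᵐ x ∂μ, ‖g x - F0 x‖ ≤ ε/4 := by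
      filter_upwards [haeK] with x hx
      rw [Real.norm_eq_abs, hF0]
      exact hgu x hx
    calc eLpNorm (fun x => g x - F0 x) p μ
        ≤ μ Set.univ ^ p.toReal⁻¹ * ENNReal.ofReal (ε/4) := eLpNorm_le_of_ae_bound h1
      _ = ENNReal.ofReal (ε/4) := by
          rw [measure_univ, ENNReal.one_rpow, one_mul]
  have hsplit : (fun x => h x - F0 x) = (fun x => (h x - g x) + (g x - F0 x)) := by
    funext x; ring
  have hmeas1 : AEStronglyMeasurable (fun x => h x - g x) μ :=
    hh.aestronglyMeasurable.sub hgmem.aestronglyMeasurable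
  have hmeas2 : AEStronglyMeasurable (fun x => g x - F0 x) μ :=
    (g.continuous.sub hF0cont).aestronglyMeasurable
  calc eLpNorm (fun x => h x - F0 x) p μ
      ≤ eLpNorm (fun x => h x - g x) p μ + eLpNorm (fun x => g x - F0 x) p μ := by
        rw [hsplit]
        exact eLpNorm_add_le hmeas1 hmeas2 hp
    _ ≤ ENNReal.ofReal (ε/4) + ENNReal.ofReal (ε/4) := by
        apply add_le_add _ hbound
        have : (fun x => h x - g x) = h - (g : X → ℝ) := rfl
        rw [this]
        exact hg
    _ = ENNReal.ofReal (ε/2) := by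
        rw [← ENNReal.ofReal_add (by linarith) (by linarith)]
        congr 1
        ring
    _ < ENNReal.ofReal ε := by
        rw [ENNReal.ofReal_lt_ofReal_iff hε]
        linarith
end

section
/- Let K ⊆ ℝ^n be compact and Ψ : ℝ → ℝ a continuous squashing function. Then the class of ridge-function combinations x ↦ Σ_{j=1}^N ω_j Ψ(a_j · x + b_j), with ω_j, b_j ∈ ℝ and a_j ∈ ℝ^n, is dense in C(K) with the uniform norm. -/
open Filter Topology Finset

/-!
For large `M`, `u ↦ Ψ (M * u)` is uniformly close to the Heaviside step `H` away from `0`.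
A continuous `f` on an interval is uniformly close to a staircase `f a + ∑ᵢ dᵢ H (s - pᵢ)` with
small jumps `dᵢ` at the midpoints `pᵢ` of a fine grid; replacing `H (s - pᵢ)` by `Ψ (M * (s - pᵢ))`
costs at most `|dᵢ| / m` at each midpoint far from `s`, and at most one midpoint is near `s`.
Hence every `x ↦ φ (a ⬝ᵥ x)`, in particular `x ↦ exp (a ⬝ᵥ x)`, lies in the closure of the ridge
combinations, and the exponentials span a point-separating subalgebra of `C(K, ℝ)`, which is dense
by Stone–Weierstrass.
-/

lemma sum_range_sub_mul_ite_lt {R : Type*} [Ring R] (g : ℕ → R) {j m : ℕ} (hjm : j ≤ m) :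
    ∑ i ∈ range m, (g (i + 1) - g i) * (if i < j then 1 else 0) = g j - g 0 := by
  rw [← sum_range_add_sum_Ico _ hjm, ← sum_range_sub g j,
    sum_eq_zero (s := Ico j m) fun i hi => by simp [(mem_Ico.1 hi).1.not_gt], add_zero]
  exact sum_congr rfl fun i hi => by simp [mem_range.1 hi]

lemma abs_sum_mul_le_of_separated {ι : Type*} {E : ℝ → ℝ} {η ε D : ℝ} (hE : ∀ u, |E u| ≤ 1)
    (hfar : ∀ u, η ≤ |u| → |E u| ≤ ε) (I : Finset ι) {p d : ι → ℝ}
    (hp : ∀ i ∈ I, ∀ j ∈ I, i ≠ j → 2 * η ≤ |p i - p j|) (hD : 0 ≤ D) (hd : ∀ i ∈ I, |d i| ≤ D)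
    (s : ℝ) :
    |∑ i ∈ I, d i * E (s - p i)| ≤ D * (#I * ε + 1) := by
  have hε : 0 ≤ ε := (abs_nonneg _).trans (hfar η (le_abs_self η))
  have hnear : #{i ∈ I | |s - p i| < η} ≤ 1 := by
    refine card_le_one.2 fun i hi j hj => by_contra fun hij => ?_
    rw [mem_filter, abs_sub_comm] at hi
    rw [mem_filter] at hj
    linarith [hp i hi.1 j hj.1 hij, abs_sub_le (p i) s (p j)]
  have h1 : ∑ i ∈ I with |s - p i| < η, |E (s - p i)| ≤ 1 :=
    calc _ ≤ #{i ∈ I | |s - p i| < η} • (1 : ℝ) := sum_le_card_nsmul _ _ _ fun i _ => hE _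
      _ ≤ 1 := by simpa using hnear
  have h2 : ∑ i ∈ I with ¬|s - p i| < η, |E (s - p i)| ≤ #I * ε :=
    calc _ ≤ #{i ∈ I | ¬|s - p i| < η} • ε :=
          sum_le_card_nsmul _ _ _ fun i hi => hfar _ (not_lt.1 (mem_filter.1 hi).2)
      _ ≤ #I * ε := by
          rw [nsmul_eq_mul]
          exact mul_le_mul_of_nonneg_right (by exact_mod_cast card_filter_le _ _) hε
  calc _ ≤ ∑ i ∈ I, |d i| * |E (s - p i)| :=
        (abs_sum_le_sum_abs _ _).trans_eq (by simp only [abs_mul])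
    _ ≤ ∑ i ∈ I, D * |E (s - p i)| :=
        sum_le_sum fun i hi => mul_le_mul_of_nonneg_right (hd i hi) (abs_nonneg _)
    _ ≤ D * (#I * ε + 1) := by
        rw [← mul_sum, ← sum_filter_add_sum_filter_not I (fun i => |s - p i| < η)]
        exact mul_le_mul_of_nonneg_left (by linarith) hD

lemma le_abs_add_mul_sub_add_mul_of_ne {h : ℝ} (hh : 0 ≤ h) (c : ℝ) {i k : ℕ} (hik : i ≠ k) :
    h ≤ |(c + i * h) - (c + k * h)| := by
  have : (1 : ℝ) ≤ |(i : ℝ) - k| := by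
    exact_mod_cast Int.one_le_abs (sub_ne_zero.2 (by exact_mod_cast hik : (i : ℤ) ≠ k))
  rw [show c + i * h - (c + k * h) = (i - k) * h by ring, abs_mul, abs_of_nonneg hh]
  nlinarith

lemma exists_nearest_grid_index {a h s : ℝ} {m : ℕ} (hh : 0 < h) (hs : s ∈ Set.Icc a (a + m * h)) :
    ∃ j ≤ m, |s - (a + j * h)| ≤ h / 2 ∧ ∀ i : ℕ, a + h / 2 + i * h ≤ s ↔ i < j := by
  set x := (s - a) / h + 1 / 2 with hx_def
  have hx : 0 ≤ x := by have := hs.1; positivity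
  have hxh : x * h = s - a + h / 2 := by rw [hx_def]; field_simp
  have hj : ⌊x⌋₊ * h ≤ x * h := mul_le_mul_of_nonneg_right (Nat.floor_le hx) hh.le
  have hj' : x * h < (⌊x⌋₊ + 1) * h := mul_lt_mul_of_pos_right (Nat.lt_floor_add_one x) hh
  refine ⟨⌊x⌋₊, ?_, abs_le.2 ⟨by linarith, by linarith⟩, fun i => ?_⟩
  · have : (⌊x⌋₊ : ℝ) < m + 1 := lt_of_mul_lt_mul_right (by linarith [hs.2]) hh.le
    exact_mod_cast Nat.lt_succ_iff.1 (by exact_mod_cast this)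
  · rw [← Nat.succ_le_iff, Nat.le_floor_iff hx, Nat.cast_succ,
      ← mul_le_mul_iff_of_pos_right hh (c := x), hxh]
    constructor <;> intro <;> linarith

lemma exists_abs_comp_mul_sub_ite_le {Ψ : ℝ → ℝ} (hΨtop : Tendsto Ψ atTop (𝓝 1))
    (hΨbot : Tendsto Ψ atBot (𝓝 0)) {η ε : ℝ} (hη : 0 < η) (hε : 0 < ε) :
    ∃ M : ℝ, ∀ u, η ≤ |u| → |Ψ (M * u) - if 0 ≤ u then 1 else 0| ≤ ε := by
  obtain ⟨T₁, hT₁⟩ := eventually_atTop.1 (hΨtop.eventually (Metric.closedBall_mem_nhds 1 hε))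
  obtain ⟨T₀, hT₀⟩ := eventually_atBot.1 (hΨbot.eventually (Metric.closedBall_mem_nhds 0 hε))
  refine ⟨(|T₁| + |T₀|) / η, fun u hu => ?_⟩
  have hMu : |T₁| + |T₀| ≤ (|T₁| + |T₀|) / η * |u| := by
    rw [div_mul_eq_mul_div, le_div_iff₀ hη]
    exact mul_le_mul_of_nonneg_left hu (by positivity)
  split_ifs with hu0
  · rw [abs_of_nonneg hu0] at hMu
    simpa [Real.dist_eq] using hT₁ _ (by linarith [le_abs_self T₁, abs_nonneg T₀])
  · rw [abs_of_neg (not_le.1 hu0), mul_neg] at hMu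
    simpa [Real.dist_eq] using hT₀ _ (by linarith [neg_abs_le T₀, abs_nonneg T₁])

lemma abs_sub_staircase_le {Ψ f : ℝ → ℝ} (hΨ : ∀ t, Ψ t ∈ Set.Icc (0 : ℝ) 1) {a h M ε ε' : ℝ}
    {m : ℕ} (hh : 0 < h)
    (hf : ∀ s ∈ Set.Icc a (a + m * h), ∀ s' ∈ Set.Icc a (a + m * h), |s - s'| ≤ h →
      |f s - f s'| ≤ ε)
    (hM : ∀ u, h / 2 ≤ |u| → |Ψ (M * u) - if 0 ≤ u then 1 else 0| ≤ ε')
    {s : ℝ} (hs : s ∈ Set.Icc a (a + m * h)) :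
    |f s - (f a + ∑ i ∈ range m,
      (f (a + (i + 1 : ℕ) * h) - f (a + i * h)) * Ψ (M * (s - (a + h / 2 + i * h))))|
      ≤ ε * (2 + m * ε') := by
  set t : ℕ → ℝ := fun i => a + i * h
  set p : ℕ → ℝ := fun i => a + h / 2 + i * h
  set d : ℕ → ℝ := fun i => f (t (i + 1)) - f (t i)
  set E : ℝ → ℝ := fun u => Ψ (M * u) - if 0 ≤ u then 1 else 0
  obtain ⟨j, hjm, hsj, hlt⟩ := exists_nearest_grid_index hh hs
  have ht : ∀ i ≤ m, t i ∈ Set.Icc a (a + m * h) := fun i hi =>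
    ⟨by simp only [t]; linarith [mul_nonneg i.cast_nonneg hh.le], by simp only [t]; gcongr⟩
  have hnear : |f s - f (t j)| ≤ ε := hf s hs _ (ht j hjm) (by linarith)
  have hε : 0 ≤ ε := (abs_nonneg _).trans hnear
  have hd : ∀ i ∈ range m, |d i| ≤ ε := fun i hi =>
    hf _ (ht _ (mem_range.1 hi)) _ (ht _ (mem_range.1 hi).le)
      (by simp only [t]; push_cast
          rw [show a + (i + 1) * h - (a + i * h) = h by ring, abs_of_pos hh])
  have hstair : f (t j) = f a + ∑ i ∈ range m, d i * (if 0 ≤ s - p i then 1 else 0) := by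
    simp only [sub_nonneg, p, hlt]
    rw [sum_range_sub_mul_ite_lt (fun i => f (t i)) hjm]
    simp [t]
  have hE : ∀ u, |E u| ≤ 1 := fun u => by
    have := hΨ (M * u)
    simp only [E]
    split_ifs <;> rw [abs_le] <;> constructor <;> linarith [this.1, this.2]
  have herr : |∑ i ∈ range m, d i * E (s - p i)| ≤ ε * (m * ε' + 1) := by
    simpa using abs_sum_mul_le_of_separated hE hM (range m)
      (fun i _ k _ hik => by
        show 2 * (h / 2) ≤ |a + h / 2 + i * h - (a + h / 2 + k * h)|
        linarith [le_abs_add_mul_sub_add_mul_of_ne hh.le (a + h / 2) hik])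
      hε hd s
  calc |f s - (f a + ∑ i ∈ range m, d i * Ψ (M * (s - p i)))|
      = |(f s - f (t j)) - ∑ i ∈ range m, d i * E (s - p i)| := by
        have hsum : ∑ i ∈ range m, d i * E (s - p i) = ∑ i ∈ range m, d i * Ψ (M * (s - p i))
            - ∑ i ∈ range m, d i * (if 0 ≤ s - p i then 1 else 0) := by
          rw [← sum_sub_distrib]
          exact sum_congr rfl fun i _ => mul_sub _ _ _
        rw [hsum, hstair]
        congr 1
        ring
    _ ≤ |f s - f (t j)| + |∑ i ∈ range m, d i * E (s - p i)| := abs_sub _ _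
    _ ≤ ε + ε * (m * ε' + 1) := add_le_add hnear herr
    _ = ε * (2 + m * ε') := by ring

theorem exists_sum_comp_affine_approx {Ψ : ℝ → ℝ} (hΨ : ∀ t, Ψ t ∈ Set.Icc (0 : ℝ) 1)
    (hΨtop : Tendsto Ψ atTop (𝓝 1)) (hΨbot : Tendsto Ψ atBot (𝓝 0)) {f : ℝ → ℝ}
    (hf : Continuous f) (a b : ℝ) {ε : ℝ} (hε : 0 < ε) :
    ∃ (N : ℕ) (ω k c : Fin N → ℝ), ∀ s ∈ Set.Icc a b,
      |f s - ∑ j, ω j * Ψ (k j * s + c j)| ≤ ε := by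
  set L := max (b - a) 1
  have hL : 0 < L := lt_max_of_lt_right one_pos
  obtain ⟨δ, hδ, hfδ⟩ := Metric.uniformContinuousOn_iff_le.1
    (isCompact_Icc.uniformContinuousOn_of_continuous hf.continuousOn) (ε / 3) (by positivity)
  set m := ⌈L / δ⌉₊
  have hm : (0 : ℝ) < m := by simpa [m] using div_pos hL hδ
  set h := L / m
  have hh : 0 < h := div_pos hL hm
  have hmh : a + m * h = a + L := by simp only [h]; field_simp
  have hhδ : h ≤ δ := by
    rw [div_le_iff₀ hm, mul_comm, ← div_le_iff₀ hδ]; exact Nat.le_ceil _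
  obtain ⟨M, hM⟩ := exists_abs_comp_mul_sub_ite_le hΨtop hΨbot (half_pos hh) (inv_pos.2 hm)
  obtain ⟨B, hB⟩ : ∃ B, Ψ B ≠ 0 :=
    (hΨtop.eventually (eventually_ne_nhds one_ne_zero)).exists
  refine ⟨m + 1, Fin.cons (f a / Ψ B) fun i => f (a + (i + 1 : ℕ) * h) - f (a + i * h),
    Fin.cons 0 fun _ => M, Fin.cons B fun i => -(M * (a + h / 2 + i * h)), fun s hs => ?_⟩
  have hs' : s ∈ Set.Icc a (a + m * h) :=
    ⟨hs.1, hmh ▸ hs.2.trans (by linarith [le_max_left (b - a) 1])⟩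
  have key := abs_sub_staircase_le hΨ (f := f) hh
    (fun s hs s' hs' hss' => by rw [hmh] at hs hs'; exact hfδ s hs s' hs' (hss'.trans hhδ)) hM hs'
  rw [mul_inv_cancel₀ hm.ne', show ε / 3 * (2 + 1) = ε by ring] at key
  convert key using 3
  rw [Fin.sum_univ_succ, ← Fin.sum_univ_eq_sum_range]
  simp only [Fin.cons_zero, Fin.cons_succ, zero_mul, zero_add, div_mul_cancel₀ _ hB,
    sub_eq_add_neg, mul_add, mul_neg]

section Ridge

variable {n : ℕ}

def ridgeSubmodule (Ψ : ℝ → ℝ) (K : Set (Fin n → ℝ)) : Submodule ℝ C(K, ℝ) where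
  carrier := {g | ∃ (N : ℕ) (ω b : Fin N → ℝ) (a : Fin N → Fin n → ℝ),
    ∀ x : K, g x = ∑ j, ω j * Ψ (a j ⬝ᵥ x + b j)}
  zero_mem' := ⟨0, Fin.elim0, Fin.elim0, Fin.elim0, fun x => by simp⟩
  add_mem' := by
    rintro g₁ g₂ ⟨N₁, ω₁, b₁, a₁, h₁⟩ ⟨N₂, ω₂, b₂, a₂, h₂⟩
    exact ⟨N₁ + N₂, Fin.append ω₁ ω₂, Fin.append b₁ b₂, Fin.append a₁ a₂, fun x => by
      simp [h₁ x, h₂ x, Fin.sum_univ_add]⟩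
  smul_mem' := by
    rintro r g ⟨N, ω, b, a, hg⟩
    exact ⟨N, r • ω, b, a, fun x => by simp [hg x, mul_sum, mul_assoc]⟩

lemma mem_topologicalClosure_ridgeSubmodule {K : Set (Fin n → ℝ)} [CompactSpace K]
    {Ψ : ℝ → ℝ} (hΨc : Continuous Ψ) (hΨ : ∀ t, Ψ t ∈ Set.Icc (0 : ℝ) 1)
    (hΨtop : Tendsto Ψ atTop (𝓝 1)) (hΨbot : Tendsto Ψ atBot (𝓝 0)) {φ : ℝ → ℝ}
    (hφ : Continuous φ) (a : Fin n → ℝ) {g : C(K, ℝ)} (hg : ∀ x : K, g x = φ (a ⬝ᵥ x)) :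
    g ∈ (ridgeSubmodule Ψ K).topologicalClosure := by
  set ℓ : C(K, ℝ) := ⟨fun x => a ⬝ᵥ x, by fun_prop⟩
  rw [← SetLike.mem_coe, Submodule.topologicalClosure_coe, Metric.mem_closure_iff]
  intro ε hε
  obtain ⟨N, ω, k, c, happrox⟩ :=
    exists_sum_comp_affine_approx hΨ hΨtop hΨbot hφ (-‖ℓ‖) ‖ℓ‖ (half_pos hε)
  refine ⟨⟨fun x => ∑ j, ω j * Ψ (k j * ℓ x + c j), by fun_prop⟩,
    ⟨N, ω, c, fun j => k j • a, fun x => by simp [ℓ, smul_dotProduct]⟩, ?_⟩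
  refine ((ContinuousMap.dist_le (half_pos hε).le).2 fun x => ?_).trans_lt (half_lt_self hε)
  rw [Real.dist_eq, hg x]
  exact happrox _ (abs_le.1 ((Real.norm_eq_abs _).symm ▸ ℓ.norm_coe_le_norm x))

def expDotSubmonoid (K : Set (Fin n → ℝ)) : Submonoid C(K, ℝ) where
  carrier := {g | ∃ a : Fin n → ℝ, ∀ x : K, g x = Real.exp (a ⬝ᵥ x)}
  one_mem' := ⟨0, by simp⟩
  mul_mem' := by
    rintro g₁ g₂ ⟨a₁, h₁⟩ ⟨a₂, h₂⟩
    exact ⟨a₁ + a₂, fun x => by simp [h₁ x, h₂ x, add_dotProduct, Real.exp_add]⟩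

lemma separatesPoints_adjoin_expDotSubmonoid (K : Set (Fin n → ℝ)) :
    (Algebra.adjoin ℝ (expDotSubmonoid K : Set C(K, ℝ))).SeparatesPoints := by
  intro x y hxy
  refine ⟨_, ⟨⟨fun z => Real.exp (((x : Fin n → ℝ) - (y : Fin n → ℝ)) ⬝ᵥ z), by fun_prop⟩,
    Algebra.subset_adjoin ⟨(x : Fin n → ℝ) - (y : Fin n → ℝ), fun _ => rfl⟩, rfl⟩, ?_⟩
  simp only [ContinuousMap.coe_mk, ne_eq, Real.exp_eq_exp]
  rw [← sub_eq_zero, ← dotProduct_sub, dotProduct_self_eq_zero, sub_eq_zero]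
  exact fun h => hxy (Subtype.ext h)

lemma topologicalClosure_span_expDotSubmonoid (K : Set (Fin n → ℝ)) [CompactSpace K] :
    (Submodule.span ℝ (expDotSubmonoid K : Set C(K, ℝ))).topologicalClosure = ⊤ := by
  have hA := ContinuousMap.subalgebra_topologicalClosure_eq_top_of_separatesPoints _
    (separatesPoints_adjoin_expDotSubmonoid K)
  rw [← Submonoid.closure_eq (expDotSubmonoid K), ← Algebra.adjoin_eq_span]
  apply SetLike.coe_injective
  rw [Submodule.topologicalClosure_coe, Subalgebra.coe_toSubmodule,
    ← Subalgebra.topologicalClosure_coe, hA]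
  rfl

end Ridge

theorem ridge_functions_dense_in_CK_general
    {n : ℕ} (K : Set (Fin n → ℝ)) (hK : IsCompact K)
    (Ψ : ℝ → ℝ) (hΨc : Continuous Ψ) (hΨ0 : ∀ t, Ψ t ∈ Set.Icc (0 : ℝ) 1)
    (hΨtop : Tendsto Ψ atTop (nhds 1))
    (hΨbot : Tendsto Ψ atBot (nhds 0)) :
    closure {g : C(K, ℝ) | ∃ (N : ℕ) (ω b : Fin N → ℝ) (a : Fin N → (Fin n → ℝ)),
        ∀ x : K, g x = ∑ j, ω j * Ψ (∑ i, a j i * (x : Fin n → ℝ) i + b j)}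
      = Set.univ := by
  have : CompactSpace K := isCompact_iff_compactSpace.mp hK
  have hspan : Submodule.span ℝ (expDotSubmonoid K : Set C(K, ℝ))
      ≤ (ridgeSubmodule Ψ K).topologicalClosure :=
    Submodule.span_le.2 fun g ⟨a, hg⟩ =>
      mem_topologicalClosure_ridgeSubmodule hΨc hΨ0 hΨtop hΨbot Real.continuous_exp a hg
  have htop : (ridgeSubmodule Ψ K).topologicalClosure = ⊤ :=
    top_le_iff.1 <| (topologicalClosure_span_expDotSubmonoid K).ge.trans <|
      Submodule.topologicalClosure_minimal _ hspan (Submodule.isClosed_topologicalClosure _)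
  rw [← Submodule.top_coe (R := ℝ), ← htop, Submodule.topologicalClosure_coe]
  rfl

/-- the Euclidean universal approximation theorem: ridge-function
combinations of a continuous squashing function are uniformly dense in C(K) for
compact K ⊆ ℝ^n. -/
theorem ridge_functions_dense_in_CK
    {n : ℕ} (K : Set (Fin n → ℝ)) (hK : IsCompact K)
    (Ψ : ℝ → ℝ) (hΨc : Continuous Ψ) (hΨ0 : ∀ t, Ψ t ∈ Set.Icc (0 : ℝ) 1)
    (hΨmono : Monotone Ψ) (hΨtop : Tendsto Ψ atTop (nhds 1))
    (hΨbot : Tendsto Ψ atBot (nhds 0)) :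
    closure {g : C(K, ℝ) | ∃ (N : ℕ) (ω b : Fin N → ℝ) (a : Fin N → (Fin n → ℝ)),
        ∀ x : K, g x = ∑ j, ω j * Ψ (∑ i, a j i * (x : Fin n → ℝ) i + b j)}
      = Set.univ :=
  ridge_functions_dense_in_CK_general K hK Ψ hΨc hΨ0 hΨtop hΨbot
end

section
/- Let K ⊆ ℝ^n be compact, μ a Radon probability measure supported on K, 1 ≤ p < ∞, and Ψ : ℝ → ℝ a continuous squashing function. Then finite linear combinations of x ↦ Ψ(a · x + b), a ∈ ℝ^n, b ∈ ℝ, are dense in L^p(K, μ). -/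
open MeasureTheory Filter Topology
open scoped ENNReal NNReal Pointwise

section Ridge

variable {n : ℕ} (Ψ : ℝ → ℝ)

/-- A finite linear combination of ridge functions built from `Ψ`. -/
def IsRidge (f : (Fin n → ℝ) → ℝ) : Prop :=
  ∃ (N : ℕ) (ω b : Fin N → ℝ) (a : Fin N → (Fin n → ℝ)),
    f = fun x => ∑ j, ω j * Ψ (∑ i, a j i * x i + b j)

variable {Ψ}

lemma isRidge_zero : IsRidge (n := n) Ψ 0 :=
  ⟨0, ![], ![], ![], by ext x; simp⟩

lemma IsRidge.add {f g : (Fin n → ℝ) → ℝ} (hf : IsRidge Ψ f) (hg : IsRidge Ψ g) :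
    IsRidge Ψ (f + g) := by
  obtain ⟨N, ω, b, a, rfl⟩ := hf
  obtain ⟨M, ω', b', a', rfl⟩ := hg
  refine ⟨N + M, Fin.append ω ω', Fin.append b b', Fin.append a a', ?_⟩
  ext x
  simp [Fin.sum_univ_add, Fin.append_left, Fin.append_right]

lemma IsRidge.smul {f : (Fin n → ℝ) → ℝ} (c : ℝ) (hf : IsRidge Ψ f) :
    IsRidge Ψ (c • f) := by
  obtain ⟨N, ω, b, a, rfl⟩ := hf
  refine ⟨N, fun j => c * ω j, b, a, ?_⟩
  ext x
  simp [Finset.mul_sum, mul_assoc]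

end Ridge


set_option maxHeartbeats 2000000 in
/-- One-dimensional uniform approximation of a continuous function on `[-R, R]`
by linear combinations of translates/dilates of a squashing function `Ψ`. -/
lemma ridge1d (Ψ : ℝ → ℝ) (hΨ0 : ∀ t, Ψ t ∈ Set.Icc (0:ℝ) 1)
    (hΨtop : Tendsto Ψ atTop (nhds 1)) (hΨbot : Tendsto Ψ atBot (nhds 0))
    (g : ℝ → ℝ) (hg : Continuous g) (R : ℝ) (hR : 0 < R) {ε : ℝ} (hε : 0 < ε) :
    ∃ (N : ℕ) (c κ β : Fin N → ℝ), ∀ t ∈ Set.Icc (-R) R,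
      |g t - ∑ j, c j * Ψ (κ j * t + β j)| ≤ ε := by
  have hε₀ : (0:ℝ) < ε / 4 := by linarith
  set ε₀ : ℝ := ε / 4 with hε₀def
  -- uniform continuity on the compact interval
  obtain ⟨δ, hδ, Hδ⟩ := Metric.uniformContinuousOn_iff.mp
    ((isCompact_Icc (a := -R) (b := R)).uniformContinuousOn_of_continuous hg.continuousOn)
    ε₀ hε₀
  -- bound for g on the interval
  obtain ⟨C, hC⟩ := (isCompact_Icc (a := -R) (b := R)).exists_bound_of_continuousOn
    hg.continuousOn
  set C' : ℝ := max C 1 with hC'def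
  have hC'1 : (1:ℝ) ≤ C' := le_max_right _ _
  have hC'bound : ∀ x ∈ Set.Icc (-R) R, |g x| ≤ C' := fun x hx =>
    le_trans (hC x hx) (le_max_left _ _)
  -- mesh
  set N : ℕ := ⌈2 * R / δ⌉₊ + 1 with hNdef
  have hN0 : (0:ℝ) < N := by positivity
  set h0 : ℝ := 2 * R / N with hh0def
  have hh0 : 0 < h0 := by positivity
  have hh0δ : h0 < δ := by
    have h1 : 2 * R / δ < N := by
      calc 2 * R / δ ≤ ⌈2 * R / δ⌉₊ := Nat.le_ceil _
      _ < N := by exact_mod_cast Nat.lt_succ_self _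
    rw [hh0def, div_lt_iff₀ hN0]
    rw [div_lt_iff₀ hδ] at h1
    linarith
  -- thresholds for Ψ
  set ε₂ : ℝ := ε₀ / (N * (2 * C' + 1)) with hε₂def
  have hε₂ : 0 < ε₂ := by positivity
  set ε₃ : ℝ := ε₀ / (|g (-R)| + 1) with hε₃def
  have hε₃ : 0 < ε₃ := by positivity
  set εs : ℝ := min ε₂ ε₃ with hεsdef
  have hεs : 0 < εs := lt_min hε₂ hε₃
  obtain ⟨M₁, hM₁⟩ := eventually_atTop.mp
    ((Metric.tendsto_nhds.mp hΨtop) εs hεs)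
  obtain ⟨M₂, hM₂⟩ := eventually_atBot.mp
    ((Metric.tendsto_nhds.mp hΨbot) εs hεs)
  simp only [Real.dist_eq] at hM₁ hM₂
  set M : ℝ := max M₁ (max (-M₂) 1) with hMdef
  have hM1 : (1:ℝ) ≤ M := le_trans (le_max_right _ _) (le_max_right _ _)
  have hM0 : (0:ℝ) < M := lt_of_lt_of_le one_pos hM1
  have hMM₁ : M₁ ≤ M := le_max_left _ _
  have hMM₂ : -M ≤ M₂ := by
    have : -M₂ ≤ M := le_trans (le_max_left _ _) (le_max_right _ _)
    linarith
  set k : ℝ := 2 * M / h0 with hkdef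
  have hk : 0 < k := by positivity
  have hkh : k * (h0 / 2) = M := by
    rw [hkdef]; field_simp
  -- the grid
  set tt : ℕ → ℝ := fun j => -R + j * h0 with httdef
  set ss : ℕ → ℝ := fun j => -R + (j + 1/2) * h0 with hssdef
  set Δ : ℕ → ℝ := fun j => g (tt (j+1)) - g (tt j) with hΔdef
  have httIcc : ∀ j : ℕ, j ≤ N → tt j ∈ Set.Icc (-R) R := by
    intro j hj
    have hj' : (j:ℝ) ≤ N := by exact_mod_cast hj
    constructor
    · have : 0 ≤ (j:ℝ) * h0 := by positivity
      simp only [httdef]; linarith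
    · have h2 : (j:ℝ) * h0 ≤ N * h0 := by nlinarith
      have h3 : (N:ℝ) * h0 = 2 * R := by
        rw [hh0def]; field_simp
      simp only [httdef]; linarith
  have hΔbound : ∀ j : ℕ, j < N → |Δ j| ≤ 2 * C' := by
    intro j hj
    have h1 := hC'bound _ (httIcc (j+1) (by omega))
    have h2 := hC'bound _ (httIcc j (by omega))
    have ha := abs_le.mp h1
    have hb := abs_le.mp h2
    simp only [hΔdef]
    rw [abs_sub_le_iff]
    constructor <;> linarith
  have hΔsmall : ∀ j : ℕ, j < N → |Δ j| ≤ ε₀ := by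
    intro j hj
    have h1 : tt (j+1) ∈ Set.Icc (-R) R := httIcc (j+1) (by omega)
    have h2 : tt j ∈ Set.Icc (-R) R := httIcc j (by omega)
    have h3 : dist (tt (j+1)) (tt j) < δ := by
      rw [Real.dist_eq]
      have : tt (j+1) - tt j = h0 := by simp only [httdef]; push_cast; ring
      rw [this, abs_of_pos hh0]; exact hh0δ
    have := Hδ _ h1 _ h2 h3
    rw [Real.dist_eq] at this
    exact le_of_lt this
  -- the witnesses
  refine ⟨N + 1, Fin.cons (g (-R)) (fun j : Fin N => Δ j),
    Fin.cons 0 (fun _ : Fin N => k),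
    Fin.cons M₁ (fun j : Fin N => -(k * ss j)), ?_⟩
  intro t ht
  have hsum : ∑ j : Fin (N+1),
      (Fin.cons (g (-R)) (fun j : Fin N => Δ j) : Fin (N+1) → ℝ) j *
        Ψ ((Fin.cons 0 (fun _ : Fin N => k) : Fin (N+1) → ℝ) j * t +
          (Fin.cons M₁ (fun j : Fin N => -(k * ss j)) : Fin (N+1) → ℝ) j)
      = g (-R) * Ψ M₁ + ∑ j ∈ Finset.range N, Δ j * Ψ (k * t - k * ss j) := by
    rw [Fin.sum_univ_succ]
    congr 1
    · simp
    · rw [← Fin.sum_univ_eq_sum_range (fun j => Δ j * Ψ (k * t - k * ss j)) N]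
      apply Finset.sum_congr rfl
      intro j _
      simp [sub_eq_add_neg]
  rw [hsum]
  -- step function
  set θ : ℕ → ℝ := fun j => if ss j ≤ t then 1 else 0 with hθdef
  set M0 : ℤ := ⌊(t + R) / h0 - 1/2⌋ with hM0def
  set m : ℕ := min N (M0 + 1).toNat with hmdef
  have hmN : m ≤ N := min_le_left _ _
  have hiff : ∀ j : ℕ, j < N → (ss j ≤ t ↔ j < m) := by
    intro j hj
    have e1 : ss j ≤ t ↔ ((j:ℝ) + 1/2) * h0 ≤ t + R := by
      simp only [hssdef]
      constructor <;> intro h' <;> linarith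
    have e2 : ((j:ℝ) + 1/2) * h0 ≤ t + R ↔ ((j:ℝ) + 1/2) ≤ (t + R) / h0 :=
      (le_div_iff₀ hh0).symm
    have e3 : ((j:ℝ) + 1/2) ≤ (t + R) / h0 ↔ (j:ℝ) ≤ (t + R) / h0 - 1/2 := by
      constructor <;> intro h' <;> linarith
    have e4 : (j:ℝ) ≤ (t + R) / h0 - 1/2 ↔ (j:ℤ) ≤ M0 := by
      rw [hM0def, Int.le_floor]
      push_cast
      rfl
    rw [e1, e2, e3, e4]
    omega
  -- telescoping sum identity
  have hstep : g (-R) + ∑ j ∈ Finset.range N, Δ j * θ j = g (tt m) := by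
    have h1 : ∀ j ∈ Finset.range N, Δ j * θ j = if j < m then Δ j else 0 := by
      intro j hj
      have := hiff j (Finset.mem_range.mp hj)
      simp only [hθdef]
      by_cases hc : j < m
      · rw [if_pos ((this).mpr hc), if_pos hc, mul_one]
      · rw [if_neg (fun hh => hc ((this).mp hh)), if_neg hc, mul_zero]
    rw [Finset.sum_congr rfl h1, ← Finset.sum_filter]
    have h2 : (Finset.range N).filter (· < m) = Finset.range m := by
      ext j
      simp only [Finset.mem_filter, Finset.mem_range]
      omega
    rw [h2]
    have h3 : ∑ j ∈ Finset.range m, Δ j = g (tt m) - g (tt 0) :=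
      Finset.sum_range_sub (fun j => g (tt j)) m
    have h4 : tt 0 = -R := by simp [httdef]
    rw [h3, h4]; ring
  -- closeness of (tt m) to t
  have htmIcc : tt m ∈ Set.Icc (-R) R := httIcc m hmN
  have htm : |t - tt m| ≤ h0 := by
    rw [abs_le]
    constructor
    · -- t ≥ tt m - h0
      rcases Nat.eq_zero_or_pos m with hm0 | hm1
      · have : tt m = -R := by simp [httdef, hm0]
        rw [this]; linarith [ht.1, hh0.le]
      · have hjm : m - 1 < m := by omega
        have hjN : m - 1 < N := by omega
        have := (hiff (m-1) hjN).mpr hjm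
        have hcast : ((m - 1 : ℕ) : ℝ) = (m:ℝ) - 1 := by
          have : (1:ℕ) ≤ m := hm1
          push_cast [Nat.cast_sub this]
          ring
        simp only [hssdef, hcast] at this
        simp only [httdef]
        have hh0' := hh0
        ring_nf at this hh0' ⊢
        linarith
    · -- t ≤ tt m + h0
      rcases eq_or_lt_of_le hmN with hmN' | hmN'
      · have h3 : (N:ℝ) * h0 = 2 * R := by rw [hh0def]; field_simp
        have : tt m = R := by simp only [httdef, hmN']; linarith
        rw [this]; linarith [ht.2, hh0.le]
      · have := (hiff m hmN').not.mpr (by omega)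
        push_neg at this
        simp only [hssdef] at this
        simp only [httdef]
        have hh0' := hh0
        ring_nf at this hh0' ⊢
        linarith
  have hgtm : |g t - g (tt m)| ≤ ε₀ := by
    have hd : dist t (tt m) < δ := by
      rw [Real.dist_eq]; exact lt_of_le_of_lt htm hh0δ
    have := Hδ t ht (tt m) htmIcc hd
    rw [Real.dist_eq] at this
    exact this.le
  -- termwise bound for the error sum
  have hterm : ∀ j ∈ Finset.range N,
      |Δ j * (θ j - Ψ (k * t - k * ss j))| ≤
        if |t - ss j| < h0 / 2 then ε₀ else 2 * C' * ε₂ := by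
    intro j hj
    have hjN := Finset.mem_range.mp hj
    rw [abs_mul]
    split_ifs with hclose
    · have h1 : |Δ j| ≤ ε₀ := hΔsmall j hjN
      have h2 : |θ j - Ψ (k * t - k * ss j)| ≤ 1 := by
        obtain ⟨hl, hr⟩ := hΨ0 (k * t - k * ss j)
        simp only [hθdef]
        split_ifs <;> rw [abs_le] <;> constructor <;> linarith
      calc |Δ j| * |θ j - Ψ (k * t - k * ss j)| ≤ ε₀ * 1 :=
            mul_le_mul h1 h2 (abs_nonneg _) hε₀.le
        _ = ε₀ := mul_one _
    · push_neg at hclose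
      have h1 : |Δ j| ≤ 2 * C' := hΔbound j hjN
      have h2 : |θ j - Ψ (k * t - k * ss j)| ≤ ε₂ := by
        rcases le_or_gt (ss j) t with hle | hlt
        · have h3 : h0 / 2 ≤ t - ss j := by
            rwa [abs_of_nonneg (by linarith)] at hclose
          have h4 : M₁ ≤ k * t - k * ss j := by
            have : k * (h0 / 2) ≤ k * (t - ss j) :=
              mul_le_mul_of_nonneg_left h3 hk.le
            rw [hkh] at this
            have hexp : k * (t - ss j) = k * t - k * ss j := by ring
            rw [hexp] at this
            linarith
          have h5 := hM₁ _ h4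
          have hθ1 : θ j = 1 := by simp [hθdef, hle]
          rw [hθ1, abs_sub_comm]
          have : εs ≤ ε₂ := min_le_left _ _
          linarith
        · have h3 : h0 / 2 ≤ ss j - t := by
            rw [abs_of_nonpos (by linarith)] at hclose
            linarith
          have h4 : k * t - k * ss j ≤ M₂ := by
            have : k * (h0 / 2) ≤ k * (ss j - t) :=
              mul_le_mul_of_nonneg_left h3 hk.le
            rw [hkh] at this
            have hexp : k * (ss j - t) = k * ss j - k * t := by ring
            rw [hexp] at this
            linarith
          have h5 := hM₂ _ h4
          have hθ0 : θ j = 0 := by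
            simp only [hθdef]
            rw [if_neg (by linarith)]
          rw [hθ0]
          have h6 : |(0:ℝ) - Ψ (k * t - k * ss j)| = |Ψ (k * t - k * ss j) - 0| :=
            abs_sub_comm _ _
          rw [h6]
          exact le_trans h5.le (min_le_left _ _)
      calc |Δ j| * |θ j - Ψ (k * t - k * ss j)| ≤ (2 * C') * ε₂ :=
            mul_le_mul h1 h2 (abs_nonneg _) (by linarith)
        _ = 2 * C' * ε₂ := by ring
  -- at most one close index
  have hcard : ((Finset.range N).filter (fun j => |t - ss j| < h0 / 2)).card ≤ 1 := by
    rw [Finset.card_le_one]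
    intro a ha b hb
    rw [Finset.mem_filter] at ha hb
    have h1 : |ss a - ss b| < h0 := by
      calc |ss a - ss b| ≤ |ss a - t| + |t - ss b| := abs_sub_le _ _ _
        _ = |t - ss a| + |t - ss b| := by rw [abs_sub_comm]
        _ < h0 / 2 + h0 / 2 := add_lt_add ha.2 hb.2
        _ = h0 := by ring
    have h2 : ss a - ss b = ((a:ℝ) - b) * h0 := by
      simp only [hssdef]; ring
    rw [h2, abs_mul, abs_of_pos hh0] at h1
    have h3 : |(a:ℝ) - b| < 1 := by nlinarith
    have h4 : |(a:ℤ) - (b:ℤ)| < 1 := by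
      have : ((|(a:ℤ) - (b:ℤ)| : ℤ) : ℝ) = |(a:ℝ) - (b:ℝ)| := by
        push_cast [Int.cast_abs]
        norm_num
      exact_mod_cast this ▸ h3
    rw [abs_lt] at h4
    omega
  -- bound for the error sum
  have hsum2 : |∑ j ∈ Finset.range N, Δ j * (θ j - Ψ (k * t - k * ss j))| ≤ ε₀ + ε₀ := by
    calc |∑ j ∈ Finset.range N, Δ j * (θ j - Ψ (k * t - k * ss j))|
        ≤ ∑ j ∈ Finset.range N, |Δ j * (θ j - Ψ (k * t - k * ss j))| :=
          Finset.abs_sum_le_sum_abs _ _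
      _ ≤ ∑ j ∈ Finset.range N, (if |t - ss j| < h0 / 2 then ε₀ else 2 * C' * ε₂) :=
          Finset.sum_le_sum hterm
      _ = ((Finset.range N).filter (fun j => |t - ss j| < h0 / 2)).card • ε₀ +
          ((Finset.range N).filter (fun j => ¬ |t - ss j| < h0 / 2)).card • (2 * C' * ε₂) := by
          rw [Finset.sum_ite, Finset.sum_const, Finset.sum_const]
      _ ≤ 1 * ε₀ + N * (2 * C' * ε₂) := by
          rw [nsmul_eq_mul, nsmul_eq_mul]
          have hc2 : (((Finset.range N).filter (fun j => ¬ |t - ss j| < h0 / 2)).card : ℝ) ≤ N := by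
            exact_mod_cast le_trans (Finset.card_filter_le _ _) (le_of_eq (Finset.card_range N))
          have hc1 : (((Finset.range N).filter (fun j => |t - ss j| < h0 / 2)).card : ℝ) ≤ 1 := by
            exact_mod_cast hcard
          have hp1 : (0:ℝ) ≤ 2 * C' * ε₂ := by positivity
          nlinarith
      _ ≤ ε₀ + ε₀ := by
          have : (N:ℝ) * (2 * C' * ε₂) ≤ ε₀ := by
            have hpos : (0:ℝ) < ↑N * (2 * C' + 1) := by positivity
            have e : (N:ℝ) * (2 * C' * ε₂)
                = ε₀ * ((↑N * (2 * C')) / (↑N * (2 * C' + 1))) := by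
              rw [hε₂def]; ring
            rw [e]
            calc ε₀ * (↑N * (2 * C') / (↑N * (2 * C' + 1))) ≤ ε₀ * 1 := by
                  apply mul_le_mul_of_nonneg_left _ hε₀.le
                  rw [div_le_one hpos]
                  nlinarith
              _ = ε₀ := mul_one _
          linarith
  -- constant-term bound
  have hconst : |g (-R) * (1 - Ψ M₁)| ≤ ε₀ := by
    have h5 := hM₁ M₁ le_rfl
    rw [abs_mul]
    have h6 : |1 - Ψ M₁| ≤ ε₃ := by
      rw [abs_sub_comm]
      exact le_trans h5.le (min_le_right _ _)
    calc |g (-R)| * |1 - Ψ M₁| ≤ |g (-R)| * ε₃ :=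
          mul_le_mul_of_nonneg_left h6 (abs_nonneg _)
      _ ≤ ε₀ := by
          rw [hε₃def]
          have hga : (0:ℝ) ≤ |g (-R)| := abs_nonneg _
          have hpos : (0:ℝ) < |g (-R)| + 1 := by linarith
          calc |g (-R)| * (ε₀ / (|g (-R)| + 1))
              = ε₀ * (|g (-R)| / (|g (-R)| + 1)) := by ring
            _ ≤ ε₀ * 1 := by
                apply mul_le_mul_of_nonneg_left _ hε₀.le
                rw [div_le_one hpos]; linarith
            _ = ε₀ := mul_one _
  -- final decomposition
  have hs : ∑ j ∈ Finset.range N, Δ j * (θ j - Ψ (k * t - k * ss j))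
      = (∑ j ∈ Finset.range N, Δ j * θ j)
        - ∑ j ∈ Finset.range N, Δ j * Ψ (k * t - k * ss j) := by
    rw [← Finset.sum_sub_distrib]
    exact Finset.sum_congr rfl fun j _ => by ring
  have hdecomp : g t - (g (-R) * Ψ M₁ + ∑ j ∈ Finset.range N, Δ j * Ψ (k * t - k * ss j))
      = (g t - g (tt m)) + g (-R) * (1 - Ψ M₁)
        + ∑ j ∈ Finset.range N, Δ j * (θ j - Ψ (k * t - k * ss j)) := by
    linear_combination (-1 : ℝ) * hstep - hs
  rw [hdecomp]
  calc |g t - g (tt m) + g (-R) * (1 - Ψ M₁)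
        + ∑ j ∈ Finset.range N, Δ j * (θ j - Ψ (k * t - k * ss j))|
      ≤ |g t - g (tt m) + g (-R) * (1 - Ψ M₁)|
        + |∑ j ∈ Finset.range N, Δ j * (θ j - Ψ (k * t - k * ss j))| := abs_add_le _ _
    _ ≤ (|g t - g (tt m)| + |g (-R) * (1 - Ψ M₁)|)
        + |∑ j ∈ Finset.range N, Δ j * (θ j - Ψ (k * t - k * ss j))| := by
        have := abs_add_le (g t - g (tt m)) (g (-R) * (1 - Ψ M₁))
        linarith
    _ ≤ ε₀ + ε₀ + (ε₀ + ε₀) := by linarith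
    _ = ε := by rw [hε₀def]; ring


section Rest

/-- The basic trigonometric ridge continuous map on `K`. -/
noncomputable def cosRidgeMap {n : ℕ} (K : Set (Fin n → ℝ)) (a : Fin n → ℝ) (θ : ℝ) : C(K, ℝ) :=
  ⟨fun x => Real.cos (∑ i, a i * (x : Fin n → ℝ) i + θ),
   Real.continuous_cos.comp (((continuous_finset_sum Finset.univ fun i _ =>
     (continuous_const.mul ((continuous_apply i).comp continuous_subtype_val)))).add
     continuous_const)⟩

lemma cosRidgeMap_apply {n : ℕ} (K : Set (Fin n → ℝ)) (a : Fin n → ℝ) (θ : ℝ) (x : K) :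
    cosRidgeMap K a θ x = Real.cos (∑ i, a i * (x : Fin n → ℝ) i + θ) := rfl

end Rest


lemma cosRidge_approx {n : ℕ} {K : Set (Fin n → ℝ)} (hK : IsCompact K)
    (Ψ : ℝ → ℝ) (hΨ0 : ∀ t, Ψ t ∈ Set.Icc (0:ℝ) 1)
    (hΨtop : Tendsto Ψ atTop (nhds 1)) (hΨbot : Tendsto Ψ atBot (nhds 0))
    (a : Fin n → ℝ) (θ : ℝ) {ε : ℝ} (hε : 0 < ε) :
    ∃ r, IsRidge Ψ r ∧ ∀ x ∈ K, |Real.cos (∑ i, a i * x i + θ) - r x| ≤ ε := by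
  obtain ⟨C, hC⟩ := hK.isBounded.subset_closedBall 0
  set R : ℝ := (∑ i, |a i|) * max C 0 + 1 with hRdef
  have hS0 : (0:ℝ) ≤ ∑ i, |a i| := Finset.sum_nonneg fun i _ => abs_nonneg _
  have hR0 : 0 < R := by positivity
  obtain ⟨N, c, κ, β, H⟩ := ridge1d Ψ hΨ0 hΨtop hΨbot (fun t => Real.cos (t + θ))
    (Real.continuous_cos.comp (continuous_id.add continuous_const)) R hR0 hε
  refine ⟨fun x => ∑ j, c j * Ψ (∑ i, (κ j * a i) * x i + β j),
    ⟨N, c, β, fun j i => κ j * a i, rfl⟩, ?_⟩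
  intro x hx
  have hxC : ‖x‖ ≤ C := by simpa using hC hx
  have h1 : |∑ i, a i * x i| ≤ (∑ i, |a i|) * max C 0 := by
    calc |∑ i, a i * x i| ≤ ∑ i, |a i * x i| := Finset.abs_sum_le_sum_abs _ _
      _ ≤ ∑ i, |a i| * max C 0 := by
          apply Finset.sum_le_sum
          intro i _
          rw [abs_mul]
          apply mul_le_mul_of_nonneg_left _ (abs_nonneg _)
          calc |x i| = ‖x i‖ := (Real.norm_eq_abs _).symm
            _ ≤ ‖x‖ := norm_le_pi_norm x i
            _ ≤ C := hxC
            _ ≤ max C 0 := le_max_left _ _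
      _ = (∑ i, |a i|) * max C 0 := by rw [Finset.sum_mul]
  have hxR : (∑ i, a i * x i) ∈ Set.Icc (-R) R := by
    have := abs_le.mp h1
    constructor <;> simp only [hRdef] <;> linarith [this.1, this.2]
  have he : ∀ j : Fin N, (∑ i, (κ j * a i) * x i) = κ j * (∑ i, a i * x i) := by
    intro j
    rw [Finset.mul_sum]
    exact Finset.sum_congr rfl fun i _ => by ring
  have := H _ hxR
  simp only [he]
  exact this

set_option maxHeartbeats 1000000 in
/-- Euclidean L^p universal approximation: ridge-function
combinations of a continuous squashing function are dense in L^p(K, μ) for a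
Radon probability measure μ supported on a compact set K ⊆ ℝ^n. -/
theorem ridge_functions_dense_in_Lp
    {n : ℕ} (K : Set (Fin n → ℝ)) (hK : IsCompact K)
    (μ : Measure (Fin n → ℝ)) [IsProbabilityMeasure μ] (hreg : μ.InnerRegular)
    (hsupp : μ Kᶜ = 0)
    (p : ℝ≥0∞) (hp : 1 ≤ p) (hp' : p ≠ ∞)
    (Ψ : ℝ → ℝ) (hΨc : Continuous Ψ) (hΨ0 : ∀ t, Ψ t ∈ Set.Icc (0 : ℝ) 1)
    (hΨmono : Monotone Ψ) (hΨtop : Tendsto Ψ atTop (nhds 1))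
    (hΨbot : Tendsto Ψ atBot (nhds 0))
    (h : (Fin n → ℝ) → ℝ) (hh : MemLp h p μ) :
    ∀ ε : ℝ, 0 < ε → ∃ (N : ℕ) (ω b : Fin N → ℝ) (a : Fin N → (Fin n → ℝ)),
      eLpNorm (fun x => h x - ∑ j, ω j * Ψ (∑ i, a j i * x i + b j)) p μ
        < ENNReal.ofReal ε := by
  intro ε hε
  haveI : CompactSpace K := isCompact_iff_compactSpace.mp hK
  have hε4 : (0:ℝ) < ε / 4 := by linarith
  obtain ⟨g, hg1, hg2⟩ := hh.exists_boundedContinuous_eLpNorm_sub_le hp'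
    (ε := ENNReal.ofReal (ε / 4)) (ENNReal.ofReal_pos.mpr hε4).ne'
  -- the span of trigonometric ridge functions on K
  set G : Set C(K, ℝ) :=
    Set.range (fun q : (Fin n → ℝ) × ℝ => cosRidgeMap K q.1 q.2) with hGdef
  set V : Submodule ℝ C(K, ℝ) := Submodule.span ℝ G with hVdef
  have h_one : (1 : C(K, ℝ)) ∈ V := by
    have : (1 : C(K, ℝ)) = cosRidgeMap K 0 0 := by
      ext x
      simp [cosRidgeMap_apply]
    rw [this]
    exact Submodule.subset_span ⟨(0, 0), rfl⟩
  have h_mul : ∀ f g : C(K, ℝ), f ∈ V → g ∈ V → f * g ∈ V := by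
    intro f g hf hg
    have h1 : G * G ⊆ (V : Set C(K, ℝ)) := by
      rintro z hz
      rw [Set.mem_mul] at hz
      obtain ⟨f₁, hf₁, f₂, hf₂, rfl⟩ := hz
      obtain ⟨⟨a₁, θ₁⟩, rfl⟩ := hf₁
      obtain ⟨⟨a₂, θ₂⟩, rfl⟩ := hf₂
      have key : cosRidgeMap K a₁ θ₁ * cosRidgeMap K a₂ θ₂
          = (1/2 : ℝ) • cosRidgeMap K (a₁ + a₂) (θ₁ + θ₂)
            + (1/2 : ℝ) • cosRidgeMap K (a₁ - a₂) (θ₁ - θ₂) := by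
        ext x
        simp only [ContinuousMap.mul_apply, ContinuousMap.add_apply,
          ContinuousMap.smul_apply, smul_eq_mul, cosRidgeMap_apply]
        have e1 : ∑ i, (a₁ + a₂) i * (x : Fin n → ℝ) i + (θ₁ + θ₂)
            = (∑ i, a₁ i * (x : Fin n → ℝ) i + θ₁)
              + (∑ i, a₂ i * (x : Fin n → ℝ) i + θ₂) := by
          simp only [Pi.add_apply, add_mul, Finset.sum_add_distrib]
          ring
        have e2 : ∑ i, (a₁ - a₂) i * (x : Fin n → ℝ) i + (θ₁ - θ₂)
            = (∑ i, a₁ i * (x : Fin n → ℝ) i + θ₁)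
              - (∑ i, a₂ i * (x : Fin n → ℝ) i + θ₂) := by
          simp only [Pi.sub_apply, sub_mul, Finset.sum_sub_distrib]
          ring
        have pts : ∀ A B : ℝ, Real.cos (A + B) + Real.cos (A - B)
            = 2 * (Real.cos A * Real.cos B) := by
          intro A B
          rw [Real.cos_add, Real.cos_sub]
          ring
        rw [e1, e2]
        linarith [pts (∑ i, a₁ i * (x : Fin n → ℝ) i + θ₁)
          (∑ i, a₂ i * (x : Fin n → ℝ) i + θ₂)]
      rw [key]
      exact V.add_mem
        (V.smul_mem _ (Submodule.subset_span ⟨(a₁ + a₂, θ₁ + θ₂), rfl⟩))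
        (V.smul_mem _ (Submodule.subset_span ⟨(a₁ - a₂, θ₁ - θ₂), rfl⟩))
    have h2 := Submodule.mul_mem_mul hf hg
    rw [hVdef, Submodule.span_mul_span] at h2
    exact Submodule.span_le.mpr h1 h2
  set A : Subalgebra ℝ C(K, ℝ) := V.toSubalgebra h_one h_mul with hAdef
  have hsep : A.SeparatesPoints := by
    intro x y hxy
    have hv : (x : Fin n → ℝ) ≠ (y : Fin n → ℝ) := fun hc => hxy (Subtype.ext hc)
    obtain ⟨i, hi⟩ := Function.ne_iff.mp hv
    set d : ℝ := (x : Fin n → ℝ) i - (y : Fin n → ℝ) i with hd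
    have hd0 : d ≠ 0 := sub_ne_zero.mpr hi
    set a : Fin n → ℝ := Pi.single i (Real.pi / d) with ha
    have hsum : ∀ z : K, ∑ l, a l * (z : Fin n → ℝ) l
        = Real.pi / d * (z : Fin n → ℝ) i := by
      intro z
      rw [ha]
      rw [Finset.sum_eq_single i]
      · rw [Pi.single_eq_same]
      · intro l _ hl
        rw [Pi.single_eq_of_ne hl, zero_mul]
      · intro hmem
        exact absurd (Finset.mem_univ i) hmem
    set u : ℝ := Real.pi / d * (x : Fin n → ℝ) i with hu
    set v : ℝ := Real.pi / d * (y : Fin n → ℝ) i with hv2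
    have huv0 : u - v = Real.pi := by
      rw [hu, hv2]
      have e : Real.pi / d * (x : Fin n → ℝ) i - Real.pi / d * (y : Fin n → ℝ) i
          = Real.pi / d * d := by rw [hd]; ring
      rw [e, div_mul_cancel₀ _ hd0]
    have huv : u = v + Real.pi := by linarith
    have hmemA : ∀ θ : ℝ, (cosRidgeMap K a θ : C(K, ℝ)) ∈ A :=
      fun θ => Submodule.subset_span ⟨(a, θ), rfl⟩
    by_cases hcc : Real.cos u = Real.cos v
    · -- use the sine version
      refine ⟨(cosRidgeMap K a (-(Real.pi/2)) : C(K, ℝ)),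
        ⟨cosRidgeMap K a (-(Real.pi/2)), hmemA _, rfl⟩, ?_⟩
      simp only [cosRidgeMap_apply, hsum]
      intro hc
      rw [← hu, ← hv2] at hc
      have e1 : u + -(Real.pi/2) = u - Real.pi/2 := by ring
      have e2 : v + -(Real.pi/2) = v - Real.pi/2 := by ring
      rw [e1, e2, Real.cos_sub_pi_div_two, Real.cos_sub_pi_div_two] at hc
      -- hc : sin u = sin v ; hcc : cos u = cos v ; u = v + π
      rw [huv, Real.sin_add_pi] at hc
      rw [huv, Real.cos_add_pi] at hcc
      have hsv : Real.sin v = 0 := by linarith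
      have hcv : Real.cos v = 0 := by linarith
      have := Real.sin_sq_add_cos_sq v
      nlinarith
    · refine ⟨(cosRidgeMap K a 0 : C(K, ℝ)),
        ⟨cosRidgeMap K a 0, hmemA _, rfl⟩, ?_⟩
      simp only [cosRidgeMap_apply, hsum]
      intro hc
      rw [← hu, ← hv2] at hc
      rw [add_zero, add_zero] at hc
      exact hcc hc
  -- every element of the span is uniformly approximable by ridge functions
  have main : ∀ w ∈ Submodule.span ℝ G, ∀ γ : ℝ, 0 < γ →
      ∃ r, IsRidge Ψ r ∧ ∀ x : K, |w x - r (x : Fin n → ℝ)| ≤ γ := by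
    intro w hw
    induction hw using Submodule.span_induction with
    | mem f hf =>
        obtain ⟨⟨a, θ⟩, rfl⟩ := hf
        intro γ hγ
        obtain ⟨r, hr1, hr2⟩ := cosRidge_approx hK Ψ hΨ0 hΨtop hΨbot a θ hγ
        exact ⟨r, hr1, fun x => by
          simpa only [cosRidgeMap_apply] using hr2 x x.2⟩
    | zero =>
        intro γ hγ
        refine ⟨0, isRidge_zero, fun x => ?_⟩
        simp only [ContinuousMap.zero_apply, Pi.zero_apply, sub_zero, abs_zero]
        exact hγ.le
    | add w₁ w₂ hw₁ hw₂ ih₁ ih₂ =>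
        intro γ hγ
        have hγ2 : (0:ℝ) < γ / 2 := by linarith
        obtain ⟨r₁, hr₁1, hr₁2⟩ := ih₁ _ hγ2
        obtain ⟨r₂, hr₂1, hr₂2⟩ := ih₂ _ hγ2
        refine ⟨r₁ + r₂, hr₁1.add hr₂1, fun x => ?_⟩
        have e : (w₁ + w₂) x - (r₁ + r₂) x = (w₁ x - r₁ x) + (w₂ x - r₂ x) := by
          simp only [ContinuousMap.add_apply, Pi.add_apply]
          ring
        rw [e]
        calc |(w₁ x - r₁ x) + (w₂ x - r₂ x)| ≤ |w₁ x - r₁ x| + |w₂ x - r₂ x| :=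
              abs_add_le _ _
          _ ≤ γ / 2 + γ / 2 := add_le_add (hr₁2 x) (hr₂2 x)
          _ = γ := by ring
    | smul c w₁ hw₁ ih =>
        intro γ hγ
        have hγ' : (0:ℝ) < γ / (|c| + 1) := by positivity
        obtain ⟨r, hr1, hr2⟩ := ih _ hγ'
        refine ⟨c • r, hr1.smul c, fun x => ?_⟩
        have e : (c • w₁) x - (c • r) x = c * (w₁ x - r x) := by
          simp only [ContinuousMap.smul_apply, Pi.smul_apply, smul_eq_mul]
          ring
        rw [e, abs_mul]
        calc |c| * |w₁ x - r x| ≤ |c| * (γ / (|c| + 1)) :=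
              mul_le_mul_of_nonneg_left (hr2 x) (abs_nonneg _)
          _ = γ * (|c| / (|c| + 1)) := by ring
          _ ≤ γ * 1 := by
              apply mul_le_mul_of_nonneg_left _ hγ.le
              rw [div_le_one (by positivity)]
              linarith [abs_nonneg c]
          _ = γ := mul_one _
  -- Stone–Weierstrass on K applied to g
  set gK : C(K, ℝ) := ⟨fun x => g x, g.continuous.comp continuous_subtype_val⟩ with hgK
  have hε8 : (0:ℝ) < ε / 4 := hε4
  obtain ⟨⟨w, hwA⟩, hwg⟩ :=
    ContinuousMap.exists_mem_subalgebra_near_continuousMap_of_separatesPoints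
      A hsep gK (ε / 4) hε4
  obtain ⟨r, hr1, hr2⟩ := main w hwA (ε / 4) hε4
  have hKr : ∀ x ∈ K, |g x - r x| ≤ ε / 2 := by
    intro x hx
    have h1 : |w ⟨x, hx⟩ - gK ⟨x, hx⟩| ≤ ε / 4 := by
      have := ContinuousMap.norm_coe_le_norm ((w : C(K, ℝ)) - gK) ⟨x, hx⟩
      simp only [ContinuousMap.sub_apply, Real.norm_eq_abs] at this
      exact le_trans this hwg.le
    have h2 := hr2 ⟨x, hx⟩
    have h3 : gK ⟨x, hx⟩ = g x := rfl
    rw [h3] at h1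
    calc |g x - r x| = |(g x - w ⟨x, hx⟩) + (w ⟨x, hx⟩ - r x)| := by ring_nf
      _ ≤ |g x - w ⟨x, hx⟩| + |w ⟨x, hx⟩ - r x| := abs_add_le _ _
      _ ≤ ε / 4 + ε / 4 := add_le_add (by rw [abs_sub_comm]; exact h1) h2
      _ = ε / 2 := by ring
  obtain ⟨N, ω, b, a, hr⟩ := hr1
  refine ⟨N, ω, b, a, ?_⟩
  have hKae : ∀ᵐ x ∂μ, x ∈ K := by
    rw [ae_iff]
    exact hsupp
  have hrcont : Continuous r := by
    rw [hr]
    exact continuous_finset_sum _ fun j _ => continuous_const.mul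
      (hΨc.comp ((continuous_finset_sum _ fun i _ =>
        continuous_const.mul (continuous_apply i)).add continuous_const))
  have hgr : eLpNorm (fun x => g x - r x) p μ ≤ ENNReal.ofReal (ε / 2) := by
    have hbd : ∀ᵐ x ∂μ, ‖g x - r x‖ ≤ ε / 2 := by
      filter_upwards [hKae] with x hx
      rw [Real.norm_eq_abs]
      exact hKr x hx
    calc eLpNorm (fun x => g x - r x) p μ
        ≤ μ Set.univ ^ p.toReal⁻¹ * ENNReal.ofReal (ε / 2) :=
          eLpNorm_le_of_ae_bound hbd
      _ = ENNReal.ofReal (ε / 2) := by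
          rw [measure_univ, ENNReal.one_rpow, one_mul]
  have heq : (fun x => h x - ∑ j, ω j * Ψ (∑ i, a j i * x i + b j))
      = (h - (g : (Fin n → ℝ) → ℝ)) + fun x => g x - r x := by
    funext x
    have hrx : r x = ∑ j, ω j * Ψ (∑ i, a j i * x i + b j) := by rw [hr]
    simp only [Pi.add_apply, Pi.sub_apply]
    rw [← hrx]
    ring
  rw [heq]
  have hm1 : AEStronglyMeasurable (h - (g : (Fin n → ℝ) → ℝ)) μ :=
    (hh.sub hg2).aestronglyMeasurable
  have hm2 : AEStronglyMeasurable (fun x => g x - r x) μ :=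
    (g.continuous.sub hrcont).aestronglyMeasurable
  calc eLpNorm ((h - (g : (Fin n → ℝ) → ℝ)) + fun x => g x - r x) p μ
      ≤ eLpNorm (h - (g : (Fin n → ℝ) → ℝ)) p μ + eLpNorm (fun x => g x - r x) p μ :=
        eLpNorm_add_le hm1 hm2 hp
    _ ≤ ENNReal.ofReal (ε / 4) + ENNReal.ofReal (ε / 2) := add_le_add hg1 hgr
    _ = ENNReal.ofReal (ε / 4 + ε / 2) := (ENNReal.ofReal_add (by linarith) (by linarith)).symm
    _ < ENNReal.ofReal ε := by
        rw [ENNReal.ofReal_lt_ofReal_iff hε]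
        linarith
end
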